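/- arXiv:2506.23645 — 5 statements merged into one kernel-verified Lean document; each statement's English description precedes it below -/
import Mathlib

section
/- Let α, β ∈ [0,1], b ≥ 0, and let z ∈ ℂ satisfy |Im z| ≤ b and Re z ≥ K·e^b + 1, where K = ‖V‖_{L∞(0,1)} + ‖Q‖_{L∞(0,1)}. Let φ : [0,1] → ℂ be continuous and satisfy the Volterra integral equation φ(x) = cos(zx) + z⁻¹·∫₀ˣ (B(α,β)φ)(t)·sin(z(x−t)) dt for all x ∈ [0,1]. Then the following are equivalent: (i) there exists a continuously differentiable y : [0,1] → ℂ, not identically zero, with y′(0) = y′(1) = 0 and y′(x) = −∫₀ˣ ( z²·y(t) − (B(α,β)y)(t) ) dt for all x ∈ [0,1]; (ii) −z·sin z + ∫₀¹ (B(α,β)φ)(t)·cos(z(1−t)) dt = 0. -/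
open MeasureTheory Set

/-- Extension by zero outside `(0,1)`. -/
noncomputable def ext01 (u : ℝ → ℂ) : ℝ → ℂ := Set.indicator (Set.Ioo 0 1) u

/-- The nonlocal term `(B(α,β)u)(x) = V(x)·ũ(x+α) + Q(x)·ũ(x−β)`. -/
noncomputable def Bop (V Q : ℝ → ℂ) (α β : ℝ) (u : ℝ → ℂ) : ℝ → ℂ :=
  fun x => V x * ext01 u (x + α) + Q x * ext01 u (x - β)

/-- `K = ‖V‖_{L∞(0,1)} + ‖Q‖_{L∞(0,1)}`. -/
noncomputable def Knorm (V Q : ℝ → ℂ) : ℝ :=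
  (eLpNorm V ⊤ (volume.restrict (Set.Ioo (0:ℝ) 1))).toReal +
  (eLpNorm Q ⊤ (volume.restrict (Set.Ioo (0:ℝ) 1))).toReal

namespace Stmt10

lemma norm_sin_le (w : ℂ) : ‖Complex.sin w‖ ≤ Real.exp |w.im| := by
  rw [Complex.sin]
  have h1 : ‖Complex.exp (-w * Complex.I)‖ = Real.exp w.im := by
    rw [Complex.norm_exp]; congr 1; simp
  have h2 : ‖Complex.exp (w * Complex.I)‖ = Real.exp (-w.im) := by
    rw [Complex.norm_exp]; congr 1; simp
  calc ‖(Complex.exp (-w * Complex.I) - Complex.exp (w * Complex.I)) * Complex.I / 2‖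
      ≤ (Real.exp w.im + Real.exp (-w.im)) / 2 := by
        rw [norm_div, norm_mul, Complex.norm_I, mul_one, Complex.norm_two]
        gcongr
        exact (norm_sub_le _ _).trans (by rw [h1, h2])
    _ ≤ Real.exp |w.im| := by
        have e1 : Real.exp w.im ≤ Real.exp |w.im| := Real.exp_le_exp.2 (le_abs_self _)
        have e2 : Real.exp (-w.im) ≤ Real.exp |w.im| := Real.exp_le_exp.2 (neg_le.2 (neg_abs_le w.im))
        linarith

/-- transfer an a.e. property on `(0,1)` to a.e. on a measurable subset of `(0,1) ∪ e`,
`e` null. -/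
lemma ae_transfer {p : ℝ → Prop} (h : ∀ᵐ t ∂(volume.restrict (Ioo (0:ℝ) 1)), p t)
    {s : Set ℝ} (hs : MeasurableSet s) {e : Set ℝ} (he : volume e = 0)
    (hsub : s ⊆ Ioo 0 1 ∪ e) : ∀ᵐ t ∂(volume.restrict s), p t := by
  rw [ae_iff] at h ⊢
  rw [Measure.restrict_apply' measurableSet_Ioo] at h
  rw [Measure.restrict_apply' hs]
  have hss : {a | ¬ p a} ∩ s ⊆ ({a | ¬ p a} ∩ Ioo 0 1) ∪ e := by
    rintro t ⟨h1, h2⟩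
    rcases hsub h2 with h3 | h3
    · exact Or.inl ⟨h1, h3⟩
    · exact Or.inr h3
  refine le_antisymm ((measure_mono hss).trans ?_) zero_le
  calc volume (({a | ¬ p a} ∩ Ioo 0 1) ∪ e) ≤ volume ({a | ¬ p a} ∩ Ioo 0 1) + volume e :=
        measure_union_le _ _
    _ = 0 := by rw [h, he, add_zero]

lemma ae_transfer_Ioc {p : ℝ → Prop} (h : ∀ᵐ t ∂(volume.restrict (Ioo (0:ℝ) 1)), p t)
    {x : ℝ} (hx1 : x ≤ 1) : ∀ᵐ t ∂(volume.restrict (Ioc (0:ℝ) x)), p t := by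
  refine ae_transfer h measurableSet_Ioc (e := {x}) ((finite_singleton x).measure_zero _) ?_
  intro t ht
  rcases eq_or_lt_of_le ht.2 with h' | h'
  · exact Or.inr (by simp [h'])
  · exact Or.inl ⟨ht.1, lt_of_lt_of_le h' hx1⟩

lemma measurable_ext01 {u : ℝ → ℂ} (hu : ContinuousOn u (Icc 0 1)) : Measurable (ext01 u) := by
  classical
  have : ext01 u = Set.piecewise (Ioo 0 1) u (fun _ => 0) := by
    funext t; by_cases h : t ∈ Ioo (0:ℝ) 1 <;> simp [ext01, Set.indicator_apply, Set.piecewise, h]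
  rw [this]
  exact ContinuousOn.measurable_piecewise (hu.mono Ioo_subset_Icc_self) continuousOn_const
    measurableSet_Ioo

lemma measurable_Bop {V Q : ℝ → ℂ} (hV : Measurable V) (hQ : Measurable Q) (α β : ℝ)
    {u : ℝ → ℂ} (hu : ContinuousOn u (Icc 0 1)) : Measurable (Bop V Q α β u) := by
  have h := measurable_ext01 hu
  exact (hV.mul (h.comp (measurable_id.add_const α))).add
    (hQ.mul (h.comp (measurable_id.sub_const β)))

lemma norm_ext01_le {u : ℝ → ℂ} {M : ℝ} (hM0 : 0 ≤ M) (hM : ∀ x ∈ Icc (0:ℝ) 1, ‖u x‖ ≤ M) :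
    ∀ x, ‖ext01 u x‖ ≤ M := by
  intro x
  by_cases h : x ∈ Ioo (0:ℝ) 1
  · rw [ext01, Set.indicator_of_mem h]; exact hM x (Ioo_subset_Icc_self h)
  · rw [ext01, Set.indicator_of_notMem h]; simpa using hM0

lemma norm_Bop_le {V Q : ℝ → ℂ} (α β : ℝ) {u : ℝ → ℂ} {M : ℝ} (hM0 : 0 ≤ M)
    (hM : ∀ x ∈ Icc (0:ℝ) 1, ‖u x‖ ≤ M) :
    ∀ t, ‖Bop V Q α β u t‖ ≤ (‖V t‖ + ‖Q t‖) * M := by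
  intro t
  have h1 := norm_ext01_le hM0 hM (t + α)
  have h2 := norm_ext01_le hM0 hM (t - β)
  calc ‖Bop V Q α β u t‖ ≤ ‖V t * ext01 u (t + α)‖ + ‖Q t * ext01 u (t - β)‖ := norm_add_le _ _
    _ ≤ ‖V t‖ * M + ‖Q t‖ * M := by
        rw [norm_mul, norm_mul]
        have := norm_nonneg (V t); have := norm_nonneg (Q t)
        have := norm_nonneg (ext01 u (t + α)); have := norm_nonneg (ext01 u (t - β))
        nlinarith
    _ = (‖V t‖ + ‖Q t‖) * M := by ring

/-- a.e. bound for `V` from its `L∞` norm. -/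
lemma ae_norm_le_eLpNormTop {V : ℝ → ℂ}
    (hVb : eLpNorm V ⊤ (volume.restrict (Set.Ioo (0:ℝ) 1)) ≠ ⊤) :
    ∀ᵐ t ∂(volume.restrict (Ioo (0:ℝ) 1)),
      ‖V t‖ ≤ (eLpNorm V ⊤ (volume.restrict (Set.Ioo (0:ℝ) 1))).toReal := by
  have h := ae_le_eLpNormEssSup (f := V) (μ := volume.restrict (Ioo (0:ℝ) 1))
  rw [eLpNorm_exponent_top] at hVb
  filter_upwards [h] with t ht
  have := ENNReal.toReal_mono hVb ht
  simpa [eLpNorm_exponent_top] using this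

/-- interval integrability of a measurable a.e.-bounded function times a continuous one. -/
lemma II_of_bound {f : ℝ → ℂ} (hfm : AEStronglyMeasurable f (volume.restrict (Ioc (0:ℝ) 1)))
    {Cf : ℝ} (hfb : ∀ᵐ t ∂(volume.restrict (Ioo (0:ℝ) 1)), ‖f t‖ ≤ Cf)
    (g : ℝ → ℂ) (hg : Continuous g) {x y : ℝ} (hx : x ∈ Icc (0:ℝ) 1) (hy : y ∈ Icc (0:ℝ) 1) :
    IntervalIntegrable (fun t => f t * g t) volume x y := by
  obtain ⟨Cg, hCg0, hCg⟩ : ∃ C, 0 ≤ C ∧ ∀ t ∈ Icc (0:ℝ) 1, ‖g t‖ ≤ C := by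
    obtain ⟨C, hC⟩ := isCompact_Icc.exists_bound_of_continuousOn (hg.continuousOn (s := Icc (0:ℝ) 1))
    exact ⟨max C 0, le_max_right _ _, fun t ht => (hC t ht).trans (le_max_left _ _)⟩
  rw [intervalIntegrable_iff]
  have hsub : uIoc x y ⊆ Ioc 0 1 := by
    rw [uIoc]
    exact Ioc_subset_Ioc (le_min hx.1 hy.1) (max_le hx.2 hy.2)
  have hmeas : AEStronglyMeasurable (fun t => f t * g t) (volume.restrict (uIoc x y)) := by
    exact ((hfm.mono_measure (Measure.restrict_mono hsub le_rfl)).mul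
      (hg.aestronglyMeasurable))
  have : IsFiniteMeasure (volume.restrict (uIoc x y)) := by
    constructor
    rw [Measure.restrict_apply_univ]
    exact lt_of_le_of_lt (measure_mono hsub) (by simp [Real.volume_Ioc])
  refine Integrable.mono' (integrable_const (Cf * Cg)) hmeas ?_
  have h1 : ∀ᵐ t ∂(volume.restrict (uIoc x y)), ‖f t‖ ≤ Cf := by
    refine ae_transfer hfb measurableSet_uIoc (e := {max x y}) ((finite_singleton _).measure_zero _) ?_
    intro t ht
    rw [uIoc] at ht
    rcases eq_or_lt_of_le ht.2 with h' | h'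
    · exact Or.inr (by simp [h'])
    · exact Or.inl ⟨lt_of_le_of_lt (le_min hx.1 hy.1) ht.1, lt_of_lt_of_le h' (max_le hx.2 hy.2)⟩
  have h2 : ∀ᵐ t ∂(volume.restrict (uIoc x y)), t ∈ uIoc x y := ae_restrict_mem measurableSet_uIoc
  filter_upwards [h1, h2] with t h1t h2t
  rw [norm_mul]
  have hf0 : 0 ≤ ‖f t‖ := norm_nonneg _
  exact mul_le_mul h1t (hCg t (Ioc_subset_Icc_self (hsub h2t))) (norm_nonneg _) (le_trans hf0 h1t)


/-- Fubini swap on a triangle. -/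
lemma swap_triangle {x : ℝ} (hx0 : (0:ℝ) ≤ x) (hx1 : x ≤ 1)
    {f : ℝ → ℂ} (hfm : Measurable f) {Cf : ℝ}
    (hfb : ∀ᵐ t ∂(volume.restrict (Ioc (0:ℝ) x)), ‖f t‖ ≤ Cf)
    (k : ℝ → ℝ → ℂ) (hk : Continuous (Function.uncurry k)) :
    ∫ t in (0:ℝ)..x, (∫ s in (0:ℝ)..t, f s * k t s)
      = ∫ s in (0:ℝ)..x, f s * ∫ t in s..x, k t s := by
  obtain ⟨Ck, hCk⟩ := (isCompact_Icc.prod isCompact_Icc).exists_bound_of_continuousOn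
      (s := Icc (0:ℝ) 1 ×ˢ Icc (0:ℝ) 1) hk.continuousOn
  set μ := volume.restrict (Ioc (0:ℝ) x) with hμ
  have hfin : IsFiniteMeasure μ := by
    constructor
    rw [hμ, Measure.restrict_apply_univ]
    simp [Real.volume_Ioc]
  set G : ℝ × ℝ → ℂ :=
    fun p => {q : ℝ × ℝ | q.2 ≤ q.1}.indicator (fun q => f q.2 * k q.1 q.2) p with hGdef
  have hregion : MeasurableSet {q : ℝ × ℝ | q.2 ≤ q.1} :=
    measurableSet_le measurable_snd measurable_fst
  have hGm : Measurable G :=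
    ((hfm.comp measurable_snd).mul hk.measurable).indicator hregion
  have hmem : ∀ᵐ p ∂(μ.prod μ), p.1 ∈ Ioc 0 x ∧ p.2 ∈ Ioc 0 x := by
    rw [Measure.ae_prod_iff_ae_ae]
    · refine (ae_restrict_mem measurableSet_Ioc).mono fun t ht => ?_
      exact (ae_restrict_mem measurableSet_Ioc).mono fun s hs => ⟨ht, hs⟩
    · exact ((measurableSet_Ioc.preimage measurable_fst).inter
        (measurableSet_Ioc.preimage measurable_snd))
  have hbnd : ∀ᵐ p ∂(μ.prod μ), ‖f p.2‖ ≤ Cf := by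
    rw [Measure.ae_prod_iff_ae_ae]
    · exact Filter.Eventually.of_forall fun t => hfb
    · exact measurableSet_le (hfm.norm.comp measurable_snd) measurable_const
  have hint : Integrable G (μ.prod μ) := by
    refine Integrable.mono' (integrable_const (Cf * |Ck|)) hGm.aestronglyMeasurable ?_
    filter_upwards [hmem, hbnd] with p hp hbp
    by_cases hreg : p ∈ {q : ℝ × ℝ | q.2 ≤ q.1}
    · rw [hGdef]
      simp only [Set.indicator_of_mem hreg]
      rw [norm_mul]
      have hk1 : ‖k p.1 p.2‖ ≤ |Ck| := by
        refine le_trans ?_ (le_abs_self Ck)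
        exact hCk ⟨p.1, p.2⟩ ⟨⟨hp.1.1.le, hp.1.2.trans hx1⟩, ⟨hp.2.1.le, hp.2.2.trans hx1⟩⟩
      exact mul_le_mul hbp hk1 (norm_nonneg _) ((norm_nonneg _).trans hbp)
    · rw [hGdef]
      simp only [Set.indicator_of_notMem hreg, norm_zero]
      exact mul_nonneg ((norm_nonneg (f p.2)).trans hbp) (abs_nonneg _)
  have e1 : ∫ t in (0:ℝ)..x, (∫ s in (0:ℝ)..t, f s * k t s)
      = ∫ t, (∫ s, G (t, s) ∂μ) ∂μ := by
    rw [intervalIntegral.integral_of_le hx0]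
    refine setIntegral_congr_fun measurableSet_Ioc fun t ht => ?_
    rw [intervalIntegral.integral_of_le ht.1.le]
    have hGt : ∀ s, G (t, s) = (Iic t).indicator (fun s => f s * k t s) s := by
      intro s
      by_cases h : s ≤ t <;>
        simp [hGdef, Set.indicator_apply, h, Set.mem_Iic, Set.mem_setOf_eq]
    simp only [hGt]
    rw [hμ, setIntegral_indicator measurableSet_Iic]
    congr 1
    rw [Ioc_inter_Iic, min_eq_right ht.2]
  have e2 : ∫ t, (∫ s, G (t, s) ∂μ) ∂μ = ∫ s, (∫ t, G (t, s) ∂μ) ∂μ :=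
    integral_integral_swap (f := fun t s => G (t, s)) (by exact hint)
  have e3 : ∫ s, (∫ t, G (t, s) ∂μ) ∂μ = ∫ s in (0:ℝ)..x, f s * ∫ t in s..x, k t s := by
    rw [intervalIntegral.integral_of_le hx0]
    refine setIntegral_congr_fun measurableSet_Ioc fun s hs => ?_
    have hGs : ∀ t, G (t, s) = (Ici s).indicator (fun t => f s * k t s) t := by
      intro t
      by_cases h : s ≤ t <;>
        simp [hGdef, Set.indicator_apply, h, Set.mem_Ici, Set.mem_setOf_eq]
    simp only [hGs]
    rw [hμ, setIntegral_indicator measurableSet_Ici]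
    have hset : Ioc (0:ℝ) x ∩ Ici s = Icc s x := by
      ext t
      simp only [mem_inter_iff, mem_Ioc, mem_Ici, mem_Icc]
      constructor
      · rintro ⟨⟨_, h2⟩, h3⟩; exact ⟨h3, h2⟩
      · rintro ⟨h1, h2⟩; exact ⟨⟨lt_of_lt_of_le hs.1 h1, h2⟩, h1⟩
    rw [hset, integral_Icc_eq_integral_Ioc, ← intervalIntegral.integral_of_le hs.2,
      ← intervalIntegral.integral_const_mul]
  rw [e1, e2, e3]

variable {z : ℂ}

lemma hd1 (z s : ℂ) (t : ℝ) :
    HasDerivAt (fun t : ℝ => -Complex.cos (z * (↑t - s))) (z * Complex.sin (z * (↑t - s))) t := by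
  have h1 : HasDerivAt (fun w : ℂ => z * (w - s)) z ↑t := by
    simpa using ((hasDerivAt_id (↑t : ℂ)).sub_const s).const_mul z
  have h2 := (Complex.hasDerivAt_cos (z * (↑t - s))).comp (↑t : ℂ) h1
  have h3 := h2.neg
  have h4 : HasDerivAt (fun w : ℂ => -Complex.cos (z * (w - s))) (z * Complex.sin (z * (↑t - s))) ↑t := by
    exact h3.congr_deriv (by ring)
  exact h4.comp_ofReal

lemma hd2 (z s : ℂ) (t : ℝ) (hz : z ≠ 0) (x : ℂ) :
    HasDerivAt (fun t : ℝ => -((x - ↑t) * Complex.cos (z * (↑t - s))) - z⁻¹ * Complex.sin (z * (↑t - s)))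
      ((x - ↑t) * (z * Complex.sin (z * (↑t - s)))) t := by
  have h1 : HasDerivAt (fun w : ℂ => z * (w - s)) z ↑t := by
    simpa using ((hasDerivAt_id (↑t : ℂ)).sub_const s).const_mul z
  have hcos := (Complex.hasDerivAt_cos (z * (↑t - s))).comp (↑t : ℂ) h1
  have hsin := (Complex.hasDerivAt_sin (z * (↑t - s))).comp (↑t : ℂ) h1
  have hx : HasDerivAt (fun w : ℂ => x - w) (-1) ↑t := by
    simpa using (hasDerivAt_id (↑t : ℂ)).const_sub x
  have hprod := hx.mul hcos
  have h : HasDerivAt (fun w : ℂ => -((x - w) * Complex.cos (z * (w - s))) - z⁻¹ * Complex.sin (z * (w - s)))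
      ((x - ↑t) * (z * Complex.sin (z * (↑t - s)))) ↑t := by
    have := (hprod.neg).sub (hsin.const_mul z⁻¹)
    refine this.congr_deriv ?_
    simp only [Function.comp_apply]
    rw [show z⁻¹ * (Complex.cos (z * (↑t - s)) * z) = Complex.cos (z * (↑t - s)) from by
      field_simp]
    ring
  exact h.comp_ofReal

lemma hd3 (z : ℂ) (t : ℝ) (x : ℂ) :
    HasDerivAt (fun t : ℝ => (x - ↑t) * (z * Complex.sin (z * ↑t)) - Complex.cos (z * ↑t))
      ((x - ↑t) * (z ^ 2 * Complex.cos (z * ↑t))) t := by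
  have h1 : HasDerivAt (fun w : ℂ => z * w) z ↑t := by
    simpa using (hasDerivAt_id (↑t : ℂ)).const_mul z
  have hcos := (Complex.hasDerivAt_cos (z * (↑t : ℂ))).comp (↑t : ℂ) h1
  have hsin := (Complex.hasDerivAt_sin (z * (↑t : ℂ))).comp (↑t : ℂ) h1
  have hx : HasDerivAt (fun w : ℂ => x - w) (-1) ↑t := by
    simpa using (hasDerivAt_id (↑t : ℂ)).const_sub x
  have h : HasDerivAt (fun w : ℂ => (x - w) * (z * Complex.sin (z * w)) - Complex.cos (z * w))
      ((x - ↑t) * (z ^ 2 * Complex.cos (z * ↑t))) ↑t := by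
    have := (hx.mul (hsin.const_mul z)).sub hcos
    refine this.congr_deriv ?_
    simp only [Function.comp_apply]
    ring
  exact h.comp_ofReal

lemma hd4 (z : ℂ) (t : ℝ) :
    HasDerivAt (fun t : ℝ => z * Complex.sin (z * ↑t)) (z ^ 2 * Complex.cos (z * ↑t)) t := by
  have h1 : HasDerivAt (fun w : ℂ => z * w) z ↑t := by
    simpa using (hasDerivAt_id (↑t : ℂ)).const_mul z
  have hsin := (Complex.hasDerivAt_sin (z * (↑t : ℂ))).comp (↑t : ℂ) h1
  have h : HasDerivAt (fun w : ℂ => z * Complex.sin (z * w)) (z ^ 2 * Complex.cos (z * ↑t)) ↑t := by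
    have := hsin.const_mul z
    refine this.congr_deriv ?_
    · ring
  exact h.comp_ofReal

lemma A1 (z : ℂ) (s x : ℝ) :
    ∫ t in s..x, z * Complex.sin (z * (↑t - ↑s)) = 1 - Complex.cos (z * (↑x - ↑s)) := by
  rw [intervalIntegral.integral_eq_sub_of_hasDerivAt
      (fun t _ => hd1 z (↑s) t)
      (Continuous.intervalIntegrable (by fun_prop) _ _)]
  simp
  try ring

lemma A2 (hz : z ≠ 0) (s x : ℝ) :
    ∫ t in s..x, ((↑x : ℂ) - ↑t) * (z * Complex.sin (z * (↑t - ↑s)))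
      = ((↑x : ℂ) - ↑s) - z⁻¹ * Complex.sin (z * (↑x - ↑s)) := by
  rw [intervalIntegral.integral_eq_sub_of_hasDerivAt
      (fun t _ => hd2 z (↑s) t hz (↑x))
      (Continuous.intervalIntegrable (by fun_prop) _ _)]
  simp
  try ring

lemma A3 (z : ℂ) (x : ℝ) :
    ∫ t in (0:ℝ)..x, ((↑x : ℂ) - ↑t) * (z ^ 2 * Complex.cos (z * ↑t))
      = 1 - Complex.cos (z * ↑x) := by
  rw [intervalIntegral.integral_eq_sub_of_hasDerivAt
      (fun t _ => hd3 z t (↑x))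
      (Continuous.intervalIntegrable (by fun_prop) _ _)]
  simp
  try ring

lemma A4 (z : ℂ) (x : ℝ) :
    ∫ t in (0:ℝ)..x, z ^ 2 * Complex.cos (z * ↑t) = z * Complex.sin (z * ↑x) := by
  rw [intervalIntegral.integral_eq_sub_of_hasDerivAt
      (fun t _ => hd4 z t)
      (Continuous.intervalIntegrable (by fun_prop) _ _)]
  simp
  try ring


lemma Scont {f : ℝ → ℂ} (hfm : Measurable f) {Cf : ℝ}
    (hfb : ∀ᵐ t ∂(volume.restrict (Ioo (0:ℝ) 1)), ‖f t‖ ≤ Cf) (z : ℂ) :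
    ContinuousOn (fun t : ℝ => ∫ s in (0:ℝ)..t, f s * Complex.sin (z * (↑t - ↑s)))
      (Icc 0 1) := by
  have hfm' : AEStronglyMeasurable f (volume.restrict (Ioc (0:ℝ) 1)) := hfm.aestronglyMeasurable
  have h01 : (0:ℝ) ∈ Icc (0:ℝ) 1 := left_mem_Icc.2 zero_le_one
  have h11 : (1:ℝ) ∈ Icc (0:ℝ) 1 := right_mem_Icc.2 zero_le_one
  have huIcc : uIcc (0:ℝ) 1 = Icc 0 1 := uIcc_of_le zero_le_one
  have II1 : IntervalIntegrable (fun s => f s * Complex.cos (z * ↑s)) volume 0 1 :=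
    II_of_bound hfm' hfb _ (by fun_prop) h01 h11
  have II2 : IntervalIntegrable (fun s => f s * Complex.sin (z * ↑s)) volume 0 1 :=
    II_of_bound hfm' hfb _ (by fun_prop) h01 h11
  have hP1 : ContinuousOn (fun t : ℝ => ∫ s in (0:ℝ)..t, f s * Complex.cos (z * ↑s)) (Icc 0 1) := by
    rw [← huIcc]
    exact intervalIntegral.continuousOn_primitive_interval
      (huIcc ▸ (intervalIntegrable_iff_integrableOn_Icc_of_le zero_le_one).1 II1)
  have hP2 : ContinuousOn (fun t : ℝ => ∫ s in (0:ℝ)..t, f s * Complex.sin (z * ↑s)) (Icc 0 1) := by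
    rw [← huIcc]
    exact intervalIntegral.continuousOn_primitive_interval
      (huIcc ▸ (intervalIntegrable_iff_integrableOn_Icc_of_le zero_le_one).1 II2)
  have hg : ContinuousOn (fun t : ℝ =>
      Complex.sin (z * ↑t) * (∫ s in (0:ℝ)..t, f s * Complex.cos (z * ↑s))
        - Complex.cos (z * ↑t) * (∫ s in (0:ℝ)..t, f s * Complex.sin (z * ↑s))) (Icc 0 1) := by
    refine ContinuousOn.sub (ContinuousOn.mul ?_ hP1) (ContinuousOn.mul ?_ hP2)
    · exact (Complex.continuous_sin.comp (continuous_const.mul Complex.continuous_ofReal)).continuousOn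
    · exact (Complex.continuous_cos.comp (continuous_const.mul Complex.continuous_ofReal)).continuousOn
  refine hg.congr fun t ht => ?_
  have II1t : IntervalIntegrable (fun s => f s * Complex.cos (z * ↑s)) volume 0 t :=
    II_of_bound hfm' hfb _ (by fun_prop) h01 ht
  have II2t : IntervalIntegrable (fun s => f s * Complex.sin (z * ↑s)) volume 0 t :=
    II_of_bound hfm' hfb _ (by fun_prop) h01 ht
  calc (∫ s in (0:ℝ)..t, f s * Complex.sin (z * (↑t - ↑s)))
      = ∫ s in (0:ℝ)..t, (Complex.sin (z * ↑t) * (f s * Complex.cos (z * ↑s))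
          - Complex.cos (z * ↑t) * (f s * Complex.sin (z * ↑s))) := by
        refine intervalIntegral.integral_congr fun s _ => ?_
        rw [show z * (↑t - ↑s) = z * ↑t - z * ↑s by ring, Complex.sin_sub]
        ring
    _ = Complex.sin (z * ↑t) * (∫ s in (0:ℝ)..t, f s * Complex.cos (z * ↑s))
          - Complex.cos (z * ↑t) * (∫ s in (0:ℝ)..t, f s * Complex.sin (z * ↑s)) := by
        rw [intervalIntegral.integral_sub (II1t.const_mul _) (II2t.const_mul _),
          intervalIntegral.integral_const_mul, intervalIntegral.integral_const_mul]

lemma key {z : ℂ} (hz : z ≠ 0) {x : ℝ} (hx : x ∈ Icc (0:ℝ) 1)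
    {f : ℝ → ℂ} (hfm : Measurable f) {Cf : ℝ}
    (hfb : ∀ᵐ t ∂(volume.restrict (Ioo (0:ℝ) 1)), ‖f t‖ ≤ Cf) (c : ℂ) :
    c * Complex.cos (z * ↑x) + z⁻¹ * ∫ t in (0:ℝ)..x, f t * Complex.sin (z * (↑x - ↑t))
      = c - ∫ t in (0:ℝ)..x, ((↑x : ℂ) - ↑t) *
          (z ^ 2 * (c * Complex.cos (z * ↑t)
              + z⁻¹ * ∫ s in (0:ℝ)..t, f s * Complex.sin (z * (↑t - ↑s))) - f t) := by
  have hfm' : AEStronglyMeasurable f (volume.restrict (Ioc (0:ℝ) 1)) := hfm.aestronglyMeasurable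
  have h01 : (0:ℝ) ∈ Icc (0:ℝ) 1 := left_mem_Icc.2 zero_le_one
  set S : ℝ → ℂ := fun t => ∫ s in (0:ℝ)..t, f s * Complex.sin (z * (↑t - ↑s)) with hSdef
  have hS : ContinuousOn S (Icc 0 1) := Scont hfm hfb z
  set k : ℝ → ℝ → ℂ := fun t s => ((↑x : ℂ) - ↑t) * (z * Complex.sin (z * (↑t - ↑s))) with hkdef
  have hk : Continuous (Function.uncurry k) := by
    apply Continuous.mul
    · exact (continuous_const.sub (Complex.continuous_ofReal.comp continuous_fst))
    · exact continuous_const.mul (Complex.continuous_sin.comp (continuous_const.mul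
        ((Complex.continuous_ofReal.comp continuous_fst).sub
          (Complex.continuous_ofReal.comp continuous_snd))))
  -- decomposition of the integrand
  have hpt : ∀ t : ℝ, ((↑x : ℂ) - ↑t) * (z ^ 2 * (c * Complex.cos (z * ↑t) + z⁻¹ * S t) - f t)
      = c * (((↑x : ℂ) - ↑t) * (z ^ 2 * Complex.cos (z * ↑t)))
        + ((↑x : ℂ) - ↑t) * (z * S t) - f t * ((↑x : ℂ) - ↑t) := by
    intro t
    field_simp
  have Ig1 : IntervalIntegrable
      (fun t : ℝ => c * (((↑x : ℂ) - ↑t) * (z ^ 2 * Complex.cos (z * ↑t)))) volume 0 x :=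
    Continuous.intervalIntegrable (by fun_prop) _ _
  have Ig2 : IntervalIntegrable (fun t : ℝ => ((↑x : ℂ) - ↑t) * (z * S t)) volume 0 x := by
    apply ContinuousOn.intervalIntegrable
    rw [uIcc_of_le hx.1]
    exact ((continuous_const.sub Complex.continuous_ofReal).continuousOn.mul
      ((continuous_const.continuousOn.mul (hS.mono (Icc_subset_Icc le_rfl hx.2)))))
  have Ig3 : IntervalIntegrable (fun t : ℝ => f t * ((↑x : ℂ) - ↑t)) volume 0 x :=
    II_of_bound hfm' hfb _ (by fun_prop) h01 hx
  have hsplit : ∫ t in (0:ℝ)..x, ((↑x : ℂ) - ↑t)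
        * (z ^ 2 * (c * Complex.cos (z * ↑t) + z⁻¹ * S t) - f t)
      = (∫ t in (0:ℝ)..x, c * (((↑x : ℂ) - ↑t) * (z ^ 2 * Complex.cos (z * ↑t))))
        + (∫ t in (0:ℝ)..x, ((↑x : ℂ) - ↑t) * (z * S t))
        - ∫ t in (0:ℝ)..x, f t * ((↑x : ℂ) - ↑t) := by
    rw [intervalIntegral.integral_congr (g := fun t =>
        c * (((↑x : ℂ) - ↑t) * (z ^ 2 * Complex.cos (z * ↑t)))
        + ((↑x : ℂ) - ↑t) * (z * S t) - f t * ((↑x : ℂ) - ↑t)) (fun t _ => hpt t)]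
    rw [intervalIntegral.integral_sub (Ig1.add Ig2) Ig3, intervalIntegral.integral_add Ig1 Ig2]
  have E1 : ∫ t in (0:ℝ)..x, c * (((↑x : ℂ) - ↑t) * (z ^ 2 * Complex.cos (z * ↑t)))
      = c * (1 - Complex.cos (z * ↑x)) := by
    rw [intervalIntegral.integral_const_mul, A3]
  have E2 : ∫ t in (0:ℝ)..x, ((↑x : ℂ) - ↑t) * (z * S t)
      = (∫ s in (0:ℝ)..x, f s * ((↑x : ℂ) - ↑s))
        - z⁻¹ * ∫ s in (0:ℝ)..x, f s * Complex.sin (z * (↑x - ↑s)) := by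
    have h1 : ∀ t : ℝ, ((↑x : ℂ) - ↑t) * (z * S t) = ∫ s in (0:ℝ)..t, f s * k t s := by
      intro t
      calc ((↑x : ℂ) - ↑t) * (z * S t) = (((↑x : ℂ) - ↑t) * z) * S t := by ring
        _ = ∫ s in (0:ℝ)..t, (((↑x : ℂ) - ↑t) * z) * (f s * Complex.sin (z * (↑t - ↑s))) :=
            (intervalIntegral.integral_const_mul _ _).symm
        _ = ∫ s in (0:ℝ)..t, f s * k t s :=
            intervalIntegral.integral_congr fun s _ => by rw [hkdef]; ring
    rw [intervalIntegral.integral_congr (g := fun t => ∫ s in (0:ℝ)..t, f s * k t s)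
      (fun t _ => h1 t)]
    rw [swap_triangle hx.1 hx.2 hfm (ae_transfer_Ioc hfb hx.2) k hk]
    have h2 : ∀ s ∈ uIcc (0:ℝ) x, f s * (∫ t in s..x, k t s)
        = f s * ((↑x : ℂ) - ↑s) - z⁻¹ * (f s * Complex.sin (z * (↑x - ↑s))) := by
      intro s _
      rw [hkdef, A2 hz s x]
      ring
    rw [intervalIntegral.integral_congr h2,
      intervalIntegral.integral_sub
        (II_of_bound hfm' hfb _ (by fun_prop) h01 hx)
        ((II_of_bound hfm' hfb _ (by fun_prop) h01 hx).const_mul z⁻¹)]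
    rw [intervalIntegral.integral_const_mul]
  rw [hsplit, E1, E2]
  ring

lemma key2 {z : ℂ} (hz : z ≠ 0) {x : ℝ} (hx : x ∈ Icc (0:ℝ) 1)
    {f : ℝ → ℂ} (hfm : Measurable f) {Cf : ℝ}
    (hfb : ∀ᵐ t ∂(volume.restrict (Ioo (0:ℝ) 1)), ‖f t‖ ≤ Cf) (c : ℂ) :
    ∫ t in (0:ℝ)..x, (z ^ 2 * (c * Complex.cos (z * ↑t)
        + z⁻¹ * ∫ s in (0:ℝ)..t, f s * Complex.sin (z * (↑t - ↑s))) - f t)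
      = c * (z * Complex.sin (z * ↑x)) - ∫ s in (0:ℝ)..x, f s * Complex.cos (z * (↑x - ↑s)) := by
  have hfm' : AEStronglyMeasurable f (volume.restrict (Ioc (0:ℝ) 1)) := hfm.aestronglyMeasurable
  have h01 : (0:ℝ) ∈ Icc (0:ℝ) 1 := left_mem_Icc.2 zero_le_one
  set S : ℝ → ℂ := fun t => ∫ s in (0:ℝ)..t, f s * Complex.sin (z * (↑t - ↑s)) with hSdef
  have hS : ContinuousOn S (Icc 0 1) := Scont hfm hfb z
  set k : ℝ → ℝ → ℂ := fun t s => z * Complex.sin (z * (↑t - ↑s)) with hkdef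
  have hk : Continuous (Function.uncurry k) := by
    exact continuous_const.mul (Complex.continuous_sin.comp (continuous_const.mul
      ((Complex.continuous_ofReal.comp continuous_fst).sub
        (Complex.continuous_ofReal.comp continuous_snd))))
  have hpt : ∀ t : ℝ, (z ^ 2 * (c * Complex.cos (z * ↑t) + z⁻¹ * S t) - f t)
      = c * (z ^ 2 * Complex.cos (z * ↑t)) + z * S t - f t * 1 := by
    intro t; field_simp
  have Ig1 : IntervalIntegrable (fun t : ℝ => c * (z ^ 2 * Complex.cos (z * ↑t))) volume 0 x :=
    Continuous.intervalIntegrable (by fun_prop) _ _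
  have Ig2 : IntervalIntegrable (fun t : ℝ => z * S t) volume 0 x := by
    apply ContinuousOn.intervalIntegrable
    rw [uIcc_of_le hx.1]
    exact continuous_const.continuousOn.mul (hS.mono (Icc_subset_Icc le_rfl hx.2))
  have Ig3 : IntervalIntegrable (fun t : ℝ => f t * 1) volume 0 x :=
    II_of_bound hfm' hfb _ (by fun_prop) h01 hx
  have hsplit : ∫ t in (0:ℝ)..x, (z ^ 2 * (c * Complex.cos (z * ↑t) + z⁻¹ * S t) - f t)
      = (∫ t in (0:ℝ)..x, c * (z ^ 2 * Complex.cos (z * ↑t)))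
        + (∫ t in (0:ℝ)..x, z * S t) - ∫ t in (0:ℝ)..x, f t * 1 := by
    rw [intervalIntegral.integral_congr (g := fun t =>
        c * (z ^ 2 * Complex.cos (z * ↑t)) + z * S t - f t * 1) (fun t _ => hpt t)]
    rw [intervalIntegral.integral_sub (Ig1.add Ig2) Ig3, intervalIntegral.integral_add Ig1 Ig2]
  have E1 : ∫ t in (0:ℝ)..x, c * (z ^ 2 * Complex.cos (z * ↑t))
      = c * (z * Complex.sin (z * ↑x)) := by
    rw [intervalIntegral.integral_const_mul, A4]
  have E2 : ∫ t in (0:ℝ)..x, z * S t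
      = (∫ s in (0:ℝ)..x, f s * 1)
        - ∫ s in (0:ℝ)..x, f s * Complex.cos (z * (↑x - ↑s)) := by
    have h1 : ∀ t : ℝ, z * S t = ∫ s in (0:ℝ)..t, f s * k t s := by
      intro t
      calc z * S t = ∫ s in (0:ℝ)..t, z * (f s * Complex.sin (z * (↑t - ↑s))) :=
            (intervalIntegral.integral_const_mul _ _).symm
        _ = ∫ s in (0:ℝ)..t, f s * k t s :=
            intervalIntegral.integral_congr fun s _ => by rw [hkdef]; ring
    rw [intervalIntegral.integral_congr (g := fun t => ∫ s in (0:ℝ)..t, f s * k t s)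
      (fun t _ => h1 t)]
    rw [swap_triangle hx.1 hx.2 hfm (ae_transfer_Ioc hfb hx.2) k hk]
    have h2 : ∀ s ∈ uIcc (0:ℝ) x, f s * (∫ t in s..x, k t s)
        = f s * 1 - f s * Complex.cos (z * (↑x - ↑s)) := by
      intro s _
      rw [hkdef, A1 z s x]
      ring
    rw [intervalIntegral.integral_congr h2,
      intervalIntegral.integral_sub
        (II_of_bound hfm' hfb _ (by fun_prop) h01 hx)
        (II_of_bound hfm' hfb _ (by fun_prop) h01 hx)]
  rw [hsplit, E1, E2]
  ring

/-- real version of `II_of_bound`. -/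
lemma II_of_bound_real {f : ℝ → ℝ} (hfm : AEStronglyMeasurable f (volume.restrict (Ioc (0:ℝ) 1)))
    {Cf : ℝ} (hfb : ∀ᵐ t ∂(volume.restrict (Ioo (0:ℝ) 1)), |f t| ≤ Cf)
    {x y : ℝ} (hx : x ∈ Icc (0:ℝ) 1) (hy : y ∈ Icc (0:ℝ) 1) :
    IntervalIntegrable f volume x y := by
  rw [intervalIntegrable_iff]
  have hsub : uIoc x y ⊆ Ioc 0 1 := by
    rw [uIoc]
    exact Ioc_subset_Ioc (le_min hx.1 hy.1) (max_le hx.2 hy.2)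
  have hmeas : AEStronglyMeasurable f (volume.restrict (uIoc x y)) :=
    hfm.mono_measure (Measure.restrict_mono hsub le_rfl)
  have : IsFiniteMeasure (volume.restrict (uIoc x y)) := by
    constructor
    rw [Measure.restrict_apply_univ]
    exact lt_of_le_of_lt (measure_mono hsub) (by simp [Real.volume_Ioc])
  refine Integrable.mono' (integrable_const Cf) hmeas ?_
  refine ae_transfer hfb measurableSet_uIoc (e := {max x y})
    ((finite_singleton _).measure_zero _) ?_
  intro t ht
  rw [uIoc] at ht
  rcases eq_or_lt_of_le ht.2 with h' | h'
  · exact Or.inr (by simp [h'])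
  · exact Or.inl ⟨lt_of_le_of_lt (le_min hx.1 hy.1) ht.1, lt_of_lt_of_le h' (max_le hx.2 hy.2)⟩

lemma gronwall_zero {w : ℝ → ℂ} (hw : ContinuousOn w (Icc 0 1)) {C : ℝ} (hC : 0 ≤ C)
    (heq : ∀ x ∈ Icc (0:ℝ) 1, ‖w x‖ ≤ C * ∫ t in (0:ℝ)..x, ‖w t‖) :
    ∀ x ∈ Icc (0:ℝ) 1, w x = 0 := by
  obtain ⟨t0, ht0, hmax'⟩ :=
    isCompact_Icc.exists_isMaxOn (nonempty_Icc.2 zero_le_one) hw.norm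
  have hmax : ∀ t ∈ Icc (0:ℝ) 1, ‖w t‖ ≤ ‖w t0‖ := fun t ht => hmax' ht
  set M := ‖w t0‖ with hMdef
  have hM0 : 0 ≤ M := norm_nonneg _
  have hwint : ∀ x ∈ Icc (0:ℝ) 1, IntervalIntegrable (fun t => ‖w t‖) volume 0 x := by
    intro x hx
    apply ContinuousOn.intervalIntegrable
    rw [uIcc_of_le hx.1]
    exact hw.norm.mono (Icc_subset_Icc le_rfl hx.2)
  have hn : ∀ n : ℕ, ∀ x ∈ Icc (0:ℝ) 1, ‖w x‖ ≤ M * C ^ n * x ^ n / n.factorial := by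
    intro n
    induction n with
    | zero => intro x hx; simpa using hmax x hx
    | succ n ih =>
      intro x hx
      have h1 : ∫ t in (0:ℝ)..x, ‖w t‖
          ≤ ∫ t in (0:ℝ)..x, M * C ^ n * t ^ n / n.factorial := by
        refine intervalIntegral.integral_mono_on hx.1 (hwint x hx)
          (Continuous.intervalIntegrable (by fun_prop) _ _) fun t ht => ?_
        exact ih t ⟨ht.1, ht.2.trans hx.2⟩
      have h2 : ∫ t in (0:ℝ)..x, M * C ^ n * t ^ n / n.factorial
          = M * C ^ n / n.factorial * (x ^ (n+1) / (n+1)) := by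
        rw [show (fun t : ℝ => M * C ^ n * t ^ n / n.factorial)
            = fun t : ℝ => (M * C ^ n / n.factorial) * t ^ n from funext fun t => by ring]
        rw [intervalIntegral.integral_const_mul, integral_pow]
        ring
      calc ‖w x‖ ≤ C * ∫ t in (0:ℝ)..x, ‖w t‖ := heq x hx
        _ ≤ C * (M * C ^ n / n.factorial * (x ^ (n+1) / (n+1))) := by
            rw [← h2]; exact mul_le_mul_of_nonneg_left h1 hC
        _ = M * C ^ (n+1) * x ^ (n+1) / (n+1).factorial := by
            rw [Nat.factorial_succ]
            have hfac : (n.factorial : ℝ) ≠ 0 := Nat.cast_ne_zero.2 n.factorial_ne_zero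
            have hnn : ((n:ℝ) + 1) ≠ 0 := by positivity
            push_cast
            field_simp
            ring
  intro x hx
  have hb : ∀ n : ℕ, ‖w x‖ ≤ M * (C ^ n / n.factorial) := by
    intro n
    refine (hn n x hx).trans ?_
    have hx1 : x ^ n ≤ 1 := pow_le_one₀ hx.1 hx.2
    have : M * C ^ n * x ^ n ≤ M * C ^ n * 1 :=
      mul_le_mul_of_nonneg_left hx1 (by positivity)
    calc M * C ^ n * x ^ n / n.factorial ≤ M * C ^ n * 1 / n.factorial := by
          apply div_le_div_of_nonneg_right this ?_ |>.trans_eq rfl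
          · positivity
      _ = M * (C ^ n / n.factorial) := by ring
  have hlim : Filter.Tendsto (fun n : ℕ => M * (C ^ n / n.factorial)) Filter.atTop (nhds 0) := by
    have := (FloorSemiring.tendsto_pow_div_factorial_atTop C).const_mul M
    simpa using this
  have : ‖w x‖ ≤ 0 := ge_of_tendsto hlim (Filter.Eventually.of_forall hb)
  simpa using le_antisymm this (norm_nonneg _)

lemma VQ_int_le {V Q : ℝ → ℂ} (hVmeas : Measurable V) (hQmeas : Measurable Q)
    (hVb : eLpNorm V ⊤ (volume.restrict (Set.Ioo (0:ℝ) 1)) ≠ ⊤)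
    (hQb : eLpNorm Q ⊤ (volume.restrict (Set.Ioo (0:ℝ) 1)) ≠ ⊤)
    {x : ℝ} (hx : x ∈ Icc (0:ℝ) 1) :
    ∫ t in (0:ℝ)..x, (‖V t‖ + ‖Q t‖) ≤ Knorm V Q := by
  have hae : ∀ᵐ t ∂(volume.restrict (Ioo (0:ℝ) 1)), ‖V t‖ + ‖Q t‖ ≤ Knorm V Q := by
    filter_upwards [ae_norm_le_eLpNormTop hVb, ae_norm_le_eLpNormTop hQb] with t h1 h2
    exact add_le_add h1 h2
  have hmeas : Measurable fun t => ‖V t‖ + ‖Q t‖ := hVmeas.norm.add hQmeas.norm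
  have haeabs : ∀ᵐ t ∂(volume.restrict (Ioo (0:ℝ) 1)), |‖V t‖ + ‖Q t‖| ≤ Knorm V Q := by
    filter_upwards [hae] with t h
    rwa [abs_of_nonneg (by positivity)]
  have hint : IntervalIntegrable (fun t => ‖V t‖ + ‖Q t‖) volume 0 1 :=
    II_of_bound_real hmeas.aestronglyMeasurable haeabs
      (left_mem_Icc.2 zero_le_one) (right_mem_Icc.2 zero_le_one)
  have step1 : ∫ t in (0:ℝ)..x, (‖V t‖ + ‖Q t‖) ≤ ∫ t in (0:ℝ)..1, (‖V t‖ + ‖Q t‖) :=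
    intervalIntegral.integral_mono_interval le_rfl hx.1 hx.2
      (Filter.Eventually.of_forall fun t => by positivity) hint
  refine step1.trans ?_
  rw [intervalIntegral.integral_of_le zero_le_one, integral_Ioc_eq_integral_Ioo]
  have hinteg : IntegrableOn (fun t => ‖V t‖ + ‖Q t‖) (Ioo (0:ℝ) 1) := by
    have := (intervalIntegrable_iff_integrableOn_Icc_of_le zero_le_one).1 hint
    exact this.mono_set Ioo_subset_Icc_self
  calc ∫ t in Ioo (0:ℝ) 1, (‖V t‖ + ‖Q t‖)
      ≤ ∫ _t in Ioo (0:ℝ) 1, Knorm V Q := by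
        refine integral_mono_ae hinteg ?_ hae
        exact integrableOn_const (by simp [Real.volume_Ioo])
    _ = Knorm V Q := by simp [Real.volume_Ioo]

lemma contraction {V Q : ℝ → ℂ} (hVmeas : Measurable V) (hQmeas : Measurable Q)
    (hVb : eLpNorm V ⊤ (volume.restrict (Set.Ioo (0:ℝ) 1)) ≠ ⊤)
    (hQb : eLpNorm Q ⊤ (volume.restrict (Set.Ioo (0:ℝ) 1)) ≠ ⊤)
    (α β : ℝ) {b : ℝ} (hb : 0 ≤ b) {z : ℂ} (hzim : |z.im| ≤ b)
    (hzre : Knorm V Q * Real.exp b + 1 ≤ z.re)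
    {u : ℝ → ℂ} (hu : ContinuousOn u (Icc 0 1))
    (heq : ∀ x ∈ Icc (0:ℝ) 1,
      u x = z⁻¹ * ∫ t in (0:ℝ)..x, Bop V Q α β u t * Complex.sin (z * (↑x - ↑t))) :
    ∀ x ∈ Icc (0:ℝ) 1, u x = 0 := by
  set K := Knorm V Q with hK
  have hK0 : 0 ≤ K := add_nonneg ENNReal.toReal_nonneg ENNReal.toReal_nonneg
  have hexp : (0:ℝ) < Real.exp b := Real.exp_pos b
  have habs : K * Real.exp b + 1 ≤ ‖z‖ :=
    hzre.trans (le_trans (le_abs_self _) (Complex.abs_re_le_norm z))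
  have hzpos : 0 < ‖z‖ := lt_of_lt_of_le (by positivity) habs
  obtain ⟨t0, ht0, hmax'⟩ :=
    isCompact_Icc.exists_isMaxOn (nonempty_Icc.2 zero_le_one) hu.norm
  have hmax : ∀ t ∈ Icc (0:ℝ) 1, ‖u t‖ ≤ ‖u t0‖ := fun t ht => hmax' ht
  set M := ‖u t0‖ with hM
  have hM0 : 0 ≤ M := norm_nonneg _
  have hBu : ∀ t, ‖Bop V Q α β u t‖ ≤ (‖V t‖ + ‖Q t‖) * M := norm_Bop_le α β hM0 hmax
  have haeBu : ∀ᵐ t ∂(volume.restrict (Ioo (0:ℝ) 1)), ‖Bop V Q α β u t‖ ≤ K * M := by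
    filter_upwards [ae_norm_le_eLpNormTop hVb, ae_norm_le_eLpNormTop hQb] with t h1 h2
    exact (hBu t).trans (mul_le_mul_of_nonneg_right (add_le_add h1 h2) hM0)
  have hBum : Measurable (Bop V Q α β u) := measurable_Bop hVmeas hQmeas α β hu
  have h01 : (0:ℝ) ∈ Icc (0:ℝ) 1 := left_mem_Icc.2 zero_le_one
  -- the estimate at the maximum point
  have hIIBu : IntervalIntegrable
      (fun t => Bop V Q α β u t * Complex.sin (z * (↑t0 - ↑t))) volume 0 t0 :=
    II_of_bound hBum.aestronglyMeasurable haeBu _ (by fun_prop) h01 ht0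
  have hsinb : ∀ t ∈ Icc (0:ℝ) t0, ‖Complex.sin (z * (↑t0 - ↑t))‖ ≤ Real.exp b := by
    intro t ht
    refine (norm_sin_le _).trans (Real.exp_le_exp.2 ?_)
    have him : (z * (↑t0 - ↑t)).im = z.im * (t0 - t) := by
      rw [show ((t0:ℂ) - ↑t) = ((t0 - t : ℝ) : ℂ) by push_cast; ring]
      simp [Complex.mul_im]
    rw [him, abs_mul]
    have h1 : |t0 - t| ≤ 1 := by
      rw [abs_of_nonneg (by linarith [ht.2])]
      linarith [ht.1, ht0.2]
    calc |z.im| * |t0 - t| ≤ b * 1 := mul_le_mul hzim h1 (abs_nonneg _) hb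
      _ = b := mul_one b
  have hIIVQ : IntervalIntegrable (fun t => (‖V t‖ + ‖Q t‖) * (M * Real.exp b)) volume 0 t0 := by
    refine II_of_bound_real ((hVmeas.norm.add hQmeas.norm).mul_const _).aestronglyMeasurable
      (Cf := K * (M * Real.exp b)) ?_ h01 ht0
    filter_upwards [ae_norm_le_eLpNormTop hVb, ae_norm_le_eLpNormTop hQb] with t h1 h2
    rw [Pi.add_apply, abs_of_nonneg (mul_nonneg (add_nonneg (norm_nonneg (V t)) (norm_nonneg (Q t))) (mul_nonneg hM0 hexp.le))]
    exact mul_le_mul_of_nonneg_right (add_le_add h1 h2) (mul_nonneg hM0 hexp.le)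
  have hM1 : M ≤ (‖z‖)⁻¹ * (K * (M * Real.exp b)) := by
    have e0 : M = (‖z‖)⁻¹
        * ‖∫ t in (0:ℝ)..t0, Bop V Q α β u t * Complex.sin (z * (↑t0 - ↑t))‖ := by
      rw [hM, heq t0 ht0, norm_mul, norm_inv]
    refine le_trans (le_of_eq e0) (mul_le_mul_of_nonneg_left ?_ (by positivity))
    calc ‖∫ t in (0:ℝ)..t0, Bop V Q α β u t * Complex.sin (z * (↑t0 - ↑t))‖
        ≤ ∫ t in (0:ℝ)..t0, ‖Bop V Q α β u t * Complex.sin (z * (↑t0 - ↑t))‖ :=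
          intervalIntegral.norm_integral_le_integral_norm ht0.1
      _ ≤ ∫ t in (0:ℝ)..t0, (‖V t‖ + ‖Q t‖) * (M * Real.exp b) := by
          refine intervalIntegral.integral_mono_on ht0.1 hIIBu.norm hIIVQ fun t ht => ?_
          rw [norm_mul]
          calc ‖Bop V Q α β u t‖ * ‖Complex.sin (z * (↑t0 - ↑t))‖
              ≤ ((‖V t‖ + ‖Q t‖) * M) * Real.exp b :=
                mul_le_mul (hBu t) (hsinb t ht) (norm_nonneg _)
                  (by positivity)
            _ = (‖V t‖ + ‖Q t‖) * (M * Real.exp b) := by ring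
      _ = (∫ t in (0:ℝ)..t0, (‖V t‖ + ‖Q t‖)) * (M * Real.exp b) := by
          rw [← intervalIntegral.integral_mul_const]
      _ ≤ K * (M * Real.exp b) :=
          mul_le_mul_of_nonneg_right (VQ_int_le hVmeas hQmeas hVb hQb ht0) (by positivity)
  have hMz : M * ‖z‖ ≤ K * (M * Real.exp b) := by
    rwa [inv_mul_eq_div, le_div_iff₀ hzpos] at hM1
  have hMz2 : M * (K * Real.exp b + 1) ≤ M * ‖z‖ :=
    mul_le_mul_of_nonneg_left habs hM0
  have hMzero : M = 0 := by nlinarith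
  intro x hx
  have h2 := (hmax x hx).trans_eq hMzero
  simpa using le_antisymm h2 (norm_nonneg _)

lemma exists_bound {u : ℝ → ℂ} (hu : ContinuousOn u (Icc 0 1)) :
    ∃ M : ℝ, 0 ≤ M ∧ ∀ t ∈ Icc (0:ℝ) 1, ‖u t‖ ≤ M := by
  obtain ⟨tm, htm, hmax'⟩ :=
    isCompact_Icc.exists_isMaxOn (nonempty_Icc.2 zero_le_one) hu.norm
  exact ⟨‖u tm‖, norm_nonneg _, fun t ht => hmax' ht⟩

lemma ae_Bop_bound {V Q : ℝ → ℂ}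
    (hVb : eLpNorm V ⊤ (volume.restrict (Set.Ioo (0:ℝ) 1)) ≠ ⊤)
    (hQb : eLpNorm Q ⊤ (volume.restrict (Set.Ioo (0:ℝ) 1)) ≠ ⊤)
    (α β : ℝ) {u : ℝ → ℂ} {Mu : ℝ}
    (hMu0 : 0 ≤ Mu) (hm : ∀ t ∈ Icc (0:ℝ) 1, ‖u t‖ ≤ Mu) :
    ∀ᵐ t ∂(volume.restrict (Ioo (0:ℝ) 1)), ‖Bop V Q α β u t‖ ≤ Knorm V Q * Mu := by
  filter_upwards [ae_norm_le_eLpNormTop hVb, ae_norm_le_eLpNormTop hQb] with t h1 h2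
  exact (norm_Bop_le α β hMu0 hm t).trans
    (mul_le_mul_of_nonneg_right (add_le_add h1 h2) hMu0)

lemma ae_ne (t : ℝ) : ∀ᵐ s ∂(volume : Measure ℝ), s ≠ t := by
  have h : {a : ℝ | ¬a ≠ t} = {t} := by ext a; simp
  rw [ae_iff, h]
  exact measure_singleton t

lemma ext01_eqon {u : ℝ → ℂ} {t : ℝ} (ht : t ∈ Icc (0:ℝ) 1) :
    ∀ᵐ s ∂(volume : Measure ℝ), s ∈ uIoc (0:ℝ) t → ext01 u s = u s := by
  filter_upwards [ae_ne t] with s hs hmem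
  rw [uIoc_of_le ht.1] at hmem
  have hmem' : s ∈ Ioo (0:ℝ) 1 :=
    ⟨hmem.1, lt_of_lt_of_le (lt_of_le_of_ne hmem.2 hs) ht.2⟩
  rw [ext01]
  exact indicator_of_mem hmem' u

lemma prim_eq {V Q : ℝ → ℂ} (hVmeas : Measurable V) (hQmeas : Measurable Q)
    (hVb : eLpNorm V ⊤ (volume.restrict (Set.Ioo (0:ℝ) 1)) ≠ ⊤)
    (hQb : eLpNorm Q ⊤ (volume.restrict (Set.Ioo (0:ℝ) 1)) ≠ ⊤)
    (α β : ℝ) (z : ℂ) {u : ℝ → ℂ} (hu : ContinuousOn u (Icc 0 1))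
    {x : ℝ} (hx : x ∈ Icc (0:ℝ) 1) :
    ∫ t in (0:ℝ)..x, (∫ s in (0:ℝ)..t, (z ^ 2 * u s - Bop V Q α β u s))
      = ∫ s in (0:ℝ)..x, ((↑x : ℂ) - ↑s) * (z ^ 2 * u s - Bop V Q α β u s) := by
  obtain ⟨Mu, hMu0, hMu⟩ := exists_bound hu
  set g : ℝ → ℂ := fun s => z ^ 2 * ext01 u s - Bop V Q α β u s with hgdef
  have hgm : Measurable g :=
    ((measurable_ext01 hu).const_mul (z ^ 2)).sub (measurable_Bop hVmeas hQmeas α β hu)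
  have hgb : ∀ᵐ t ∂(volume.restrict (Ioo (0:ℝ) 1)),
      ‖g t‖ ≤ ‖z‖ ^ 2 * Mu + Knorm V Q * Mu := by
    filter_upwards [ae_Bop_bound hVb hQb α β hMu0 hMu] with t h1
    calc ‖g t‖ ≤ ‖z ^ 2 * ext01 u t‖ + ‖Bop V Q α β u t‖ := norm_sub_le _ _
      _ ≤ ‖z‖ ^ 2 * Mu + Knorm V Q * Mu := by
          refine add_le_add ?_ h1
          rw [norm_mul, norm_pow]
          exact mul_le_mul_of_nonneg_left (norm_ext01_le hMu0 hMu t) (by positivity)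
  have hswap := swap_triangle hx.1 hx.2 hgm (ae_transfer_Ioc hgb hx.2)
    (fun _ _ => (1:ℂ)) continuous_const
  simp only [mul_one] at hswap
  calc ∫ t in (0:ℝ)..x, (∫ s in (0:ℝ)..t, (z ^ 2 * u s - Bop V Q α β u s))
      = ∫ t in (0:ℝ)..x, (∫ s in (0:ℝ)..t, g s) := by
        refine intervalIntegral.integral_congr fun t ht => ?_
        rw [uIcc_of_le hx.1] at ht
        refine intervalIntegral.integral_congr_ae ?_
        filter_upwards [ext01_eqon (u := u) ⟨ht.1, ht.2.trans hx.2⟩] with s hs hmem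
        rw [hgdef]
        dsimp only
        rw [hs hmem]
    _ = ∫ s in (0:ℝ)..x, g s * ∫ t in s..x, (1:ℂ) := hswap
    _ = ∫ s in (0:ℝ)..x, ((↑x : ℂ) - ↑s) * g s := by
        refine intervalIntegral.integral_congr fun s _ => ?_
        rw [intervalIntegral.integral_const]
        rw [Complex.real_smul]
        push_cast
        ring
    _ = ∫ s in (0:ℝ)..x, ((↑x : ℂ) - ↑s) * (z ^ 2 * u s - Bop V Q α β u s) := by
        refine intervalIntegral.integral_congr_ae ?_
        filter_upwards [ext01_eqon (u := u) hx] with s hs hmem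
        rw [hgdef]
        dsimp only
        rw [hs hmem]

lemma II_weighted {V Q : ℝ → ℂ} (hVmeas : Measurable V) (hQmeas : Measurable Q)
    (hVb : eLpNorm V ⊤ (volume.restrict (Set.Ioo (0:ℝ) 1)) ≠ ⊤)
    (hQb : eLpNorm Q ⊤ (volume.restrict (Set.Ioo (0:ℝ) 1)) ≠ ⊤)
    (α β : ℝ) (z : ℂ) {v u : ℝ → ℂ}
    (hv : ContinuousOn v (Icc 0 1)) (hu : ContinuousOn u (Icc 0 1))
    {x : ℝ} (hx : x ∈ Icc (0:ℝ) 1) (g : ℝ → ℂ) (hg : Continuous g) :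
    IntervalIntegrable (fun s => g s * (z ^ 2 * v s - Bop V Q α β u s)) volume 0 x := by
  obtain ⟨Mu, hMu0, hMub⟩ := exists_bound hu
  have h01 : (0:ℝ) ∈ Icc (0:ℝ) 1 := left_mem_Icc.2 zero_le_one
  have hfun : (fun s => g s * (z ^ 2 * v s - Bop V Q α β u s))
      = fun s => (g s * (z ^ 2 * v s)) - Bop V Q α β u s * g s := funext fun s => by ring
  rw [hfun]
  refine IntervalIntegrable.sub ?_
    (II_of_bound (measurable_Bop hVmeas hQmeas α β hu).aestronglyMeasurable
      (ae_Bop_bound hVb hQb α β hMu0 hMub) g hg h01 hx)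
  apply ContinuousOn.intervalIntegrable
  rw [uIcc_of_le hx.1]
  exact (hg.continuousOn.mul
    (continuous_const.continuousOn.mul (hv.mono (Icc_subset_Icc le_rfl hx.2))))

end Stmt10

open Stmt10

/-- `λ = z²` is an eigenvalue of the Neumann problem `−y″ + B(α,β)y = λy`
(in integrated form) if and only if the Cauchy solution `φ` satisfies the
characteristic equation `φ′(1) = 0`. -/
theorem stmt_10 (V Q : ℝ → ℂ) (hVmeas : Measurable V) (hQmeas : Measurable Q)
    (hVb : eLpNorm V ⊤ (volume.restrict (Set.Ioo (0:ℝ) 1)) ≠ ⊤)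
    (hQb : eLpNorm Q ⊤ (volume.restrict (Set.Ioo (0:ℝ) 1)) ≠ ⊤)
    (α β : ℝ) (hα : α ∈ Set.Icc (0:ℝ) 1) (hβ : β ∈ Set.Icc (0:ℝ) 1)
    (b : ℝ) (hb : 0 ≤ b) (z : ℂ) (hzim : |z.im| ≤ b)
    (hzre : Knorm V Q * Real.exp b + 1 ≤ z.re)
    (φ : ℝ → ℂ) (hφC : ContinuousOn φ (Set.Icc (0:ℝ) 1))
    (hφeq : ∀ x ∈ Set.Icc (0:ℝ) 1,
      φ x = Complex.cos (z * ↑x)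
        + z⁻¹ * ∫ t in (0:ℝ)..x, Bop V Q α β φ t * Complex.sin (z * (↑x - ↑t))) :
    (∃ y dy : ℝ → ℂ,
        ContinuousOn y (Set.Icc (0:ℝ) 1) ∧
        ContinuousOn dy (Set.Icc (0:ℝ) 1) ∧
        (∀ x ∈ Set.Icc (0:ℝ) 1, HasDerivWithinAt y (dy x) (Set.Icc (0:ℝ) 1) x) ∧
        (∃ x ∈ Set.Icc (0:ℝ) 1, y x ≠ 0) ∧
        dy 0 = 0 ∧ dy 1 = 0 ∧
        (∀ x ∈ Set.Icc (0:ℝ) 1,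
          dy x = -∫ t in (0:ℝ)..x, (z ^ 2 * y t - Bop V Q α β y t)))
    ↔
    -z * Complex.sin z
      + ∫ t in (0:ℝ)..1, Bop V Q α β φ t * Complex.cos (z * (1 - ↑t)) = 0 := by
  classical
  have h01 : (0:ℝ) ∈ Icc (0:ℝ) 1 := left_mem_Icc.2 zero_le_one
  have h11 : (1:ℝ) ∈ Icc (0:ℝ) 1 := right_mem_Icc.2 zero_le_one
  have hK0 : 0 ≤ Knorm V Q := add_nonneg ENNReal.toReal_nonneg ENNReal.toReal_nonneg
  have hexp := Real.exp_pos b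
  have hre1 : (1:ℝ) ≤ z.re := by nlinarith
  have hz0 : z ≠ 0 := by
    intro h
    rw [h] at hre1
    simp at hre1
    linarith
  obtain ⟨Mφ, hMφ0, hMφ⟩ := exists_bound hφC
  have hfφm : Measurable (Bop V Q α β φ) := measurable_Bop hVmeas hQmeas α β hφC
  have hfφb := ae_Bop_bound hVb hQb α β hMφ0 hMφ
  have hphiKEY : ∀ x ∈ Icc (0:ℝ) 1,
      φ x = 1 - ∫ t in (0:ℝ)..x, ((↑x : ℂ) - ↑t) * (z ^ 2 * φ t - Bop V Q α β φ t) := by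
    intro x hx
    have hk := key hz0 hx hfφm hfφb 1
    simp only [one_mul] at hk
    rw [← hφeq x hx] at hk
    rw [hk]
    congr 1
    refine intervalIntegral.integral_congr fun t ht => ?_
    rw [uIcc_of_le hx.1] at ht
    rw [← hφeq t ⟨ht.1, ht.2.trans hx.2⟩]
  have hphiKEY2 : ∀ x ∈ Icc (0:ℝ) 1,
      ∫ t in (0:ℝ)..x, (z ^ 2 * φ t - Bop V Q α β φ t)
        = z * Complex.sin (z * ↑x)
          - ∫ s in (0:ℝ)..x, Bop V Q α β φ s * Complex.cos (z * (↑x - ↑s)) := by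
    intro x hx
    have hk := key2 hz0 hx hfφm hfφb 1
    simp only [one_mul] at hk
    rw [← hk]
    refine intervalIntegral.integral_congr fun t ht => ?_
    rw [uIcc_of_le hx.1] at ht
    rw [← hφeq t ⟨ht.1, ht.2.trans hx.2⟩]
  constructor
  · -- (i) → (ii)
    rintro ⟨y, dy, hyC, hdyC, hyD, ⟨x0, hx0, hy0⟩, hdy0, hdy1, hdyeq⟩
    set c := y 0 with hc
    have hyFTC : ∀ x ∈ Icc (0:ℝ) 1, y x = c + ∫ t in (0:ℝ)..x, dy t := by
      intro x hx
      have hd : ∀ t ∈ Ioo (0:ℝ) x, HasDerivWithinAt y (dy t) (Ioi t) t := by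
        intro t ht
        have h1 := hyD t ⟨ht.1.le, ht.2.le.trans hx.2⟩
        refine h1.mono_of_mem_nhdsWithin ?_
        rw [mem_nhdsWithin]
        refine ⟨Iio 1, isOpen_Iio, lt_of_lt_of_le ht.2 hx.2, ?_⟩
        rintro s ⟨hs1, hs2⟩
        exact ⟨(ht.1.trans hs2).le, hs1.le⟩
      have hint : IntervalIntegrable dy volume 0 x := by
        apply ContinuousOn.intervalIntegrable
        rw [uIcc_of_le hx.1]
        exact hdyC.mono (Icc_subset_Icc le_rfl hx.2)
      have hFTC := intervalIntegral.integral_eq_sub_of_hasDeriv_right_of_le hx.1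
        (hyC.mono (Icc_subset_Icc le_rfl hx.2)) hd hint
      rw [hFTC, hc]
      ring
    have hyKEY : ∀ x ∈ Icc (0:ℝ) 1,
        y x = c - ∫ s in (0:ℝ)..x, ((↑x : ℂ) - ↑s) * (z ^ 2 * y s - Bop V Q α β y s) := by
      intro x hx
      rw [hyFTC x hx, sub_eq_add_neg]
      congr 1
      calc ∫ t in (0:ℝ)..x, dy t
          = ∫ t in (0:ℝ)..x, (- ∫ s in (0:ℝ)..t, (z ^ 2 * y s - Bop V Q α β y s)) := by
            refine intervalIntegral.integral_congr fun t ht => ?_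
            rw [uIcc_of_le hx.1] at ht
            exact hdyeq t ⟨ht.1, ht.2.trans hx.2⟩
        _ = - ∫ t in (0:ℝ)..x, (∫ s in (0:ℝ)..t, (z ^ 2 * y s - Bop V Q α β y s)) :=
            intervalIntegral.integral_neg
        _ = - ∫ s in (0:ℝ)..x, ((↑x : ℂ) - ↑s) * (z ^ 2 * y s - Bop V Q α β y s) := by
            rw [prim_eq hVmeas hQmeas hVb hQb α β z hyC hx]
    -- u := y - c φ
    set u : ℝ → ℂ := fun t => y t - c * φ t with hudef
    have huC : ContinuousOn u (Icc 0 1) := hyC.sub (continuousOn_const.mul hφC)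
    have hBlin : ∀ w, Bop V Q α β u w = Bop V Q α β y w - c * Bop V Q α β φ w := by
      intro w
      have he : ∀ s, ext01 u s = ext01 y s - c * ext01 φ s := by
        intro s
        by_cases h : s ∈ Ioo (0:ℝ) 1 <;>
          simp [ext01, indicator_apply, h, hudef]
      simp only [Bop, he]
      ring
    have huKEY : ∀ x ∈ Icc (0:ℝ) 1,
        u x = - ∫ s in (0:ℝ)..x, ((↑x : ℂ) - ↑s) * (z ^ 2 * u s - Bop V Q α β u s) := by
      intro x hx
      have hIy := II_weighted hVmeas hQmeas hVb hQb α β z hyC hyC hx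
        (fun s => ((↑x : ℂ) - ↑s)) (by fun_prop)
      have hIφ := II_weighted hVmeas hQmeas hVb hQb α β z hφC hφC hx
        (fun s => ((↑x : ℂ) - ↑s)) (by fun_prop)
      have h3 : ∫ s in (0:ℝ)..x, ((↑x : ℂ) - ↑s) * (z ^ 2 * u s - Bop V Q α β u s)
          = (∫ s in (0:ℝ)..x, ((↑x : ℂ) - ↑s) * (z ^ 2 * y s - Bop V Q α β y s))
            - c * ∫ s in (0:ℝ)..x, ((↑x : ℂ) - ↑s) * (z ^ 2 * φ s - Bop V Q α β φ s) := by
        rw [← intervalIntegral.integral_const_mul,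
          ← intervalIntegral.integral_sub hIy (hIφ.const_mul c)]
        refine intervalIntegral.integral_congr fun s _ => ?_
        rw [hudef]
        dsimp only
        rw [hBlin s]
        ring
      show y x - c * φ x = _
      rw [hyKEY x hx, hphiKEY x hx, h3]
      ring
    -- ρ := z⁻¹ * S with S the Volterra integral of Bop u
    have hum : Measurable (Bop V Q α β u) := measurable_Bop hVmeas hQmeas α β huC
    obtain ⟨Mu, hMu0, hMub⟩ := exists_bound huC
    have hub := ae_Bop_bound hVb hQb α β hMu0 hMub
    set ρ : ℝ → ℂ :=
      fun t => z⁻¹ * ∫ s in (0:ℝ)..t, Bop V Q α β u s * Complex.sin (z * (↑t - ↑s)) with hρdef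
    have hρC : ContinuousOn ρ (Icc 0 1) := continuousOn_const.mul (Scont hum hub z)
    have hρKEY : ∀ x ∈ Icc (0:ℝ) 1,
        ρ x = - ∫ t in (0:ℝ)..x, ((↑x : ℂ) - ↑t) * (z ^ 2 * ρ t - Bop V Q α β u t) := by
      intro x hx
      have hk := key hz0 hx hum hub 0
      simp only [zero_mul, zero_add, zero_sub] at hk
      exact hk
    have hwKEY : ∀ x ∈ Icc (0:ℝ) 1,
        u x - ρ x = -(z ^ 2 * ∫ t in (0:ℝ)..x, ((↑x : ℂ) - ↑t) * (u t - ρ t)) := by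
      intro x hx
      have hIu := II_weighted hVmeas hQmeas hVb hQb α β z huC huC hx
        (fun s => ((↑x : ℂ) - ↑s)) (by fun_prop)
      have hIρ := II_weighted hVmeas hQmeas hVb hQb α β z hρC huC hx
        (fun s => ((↑x : ℂ) - ↑s)) (by fun_prop)
      have hsub : (∫ t in (0:ℝ)..x, ((↑x : ℂ) - ↑t) * (z ^ 2 * u t - Bop V Q α β u t))
          - (∫ t in (0:ℝ)..x, ((↑x : ℂ) - ↑t) * (z ^ 2 * ρ t - Bop V Q α β u t))
          = z ^ 2 * ∫ t in (0:ℝ)..x, ((↑x : ℂ) - ↑t) * (u t - ρ t) := by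
        rw [← intervalIntegral.integral_sub hIu hIρ, ← intervalIntegral.integral_const_mul]
        exact intervalIntegral.integral_congr fun t _ => by ring
      rw [huKEY x hx, hρKEY x hx]
      linear_combination -hsub
    have hwzero : ∀ x ∈ Icc (0:ℝ) 1, u x - ρ x = 0 := by
      refine gronwall_zero (huC.sub hρC) (C := ‖z‖ ^ 2) (by positivity) ?_
      intro x hx
      rw [hwKEY x hx]
      rw [norm_neg, norm_mul, norm_pow]
      refine mul_le_mul_of_nonneg_left ?_ (by positivity)
      calc ‖∫ t in (0:ℝ)..x, ((↑x : ℂ) - ↑t) * (u t - ρ t)‖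
          ≤ ∫ t in (0:ℝ)..x, ‖((↑x : ℂ) - ↑t) * (u t - ρ t)‖ :=
            intervalIntegral.norm_integral_le_integral_norm hx.1
        _ ≤ ∫ t in (0:ℝ)..x, ‖u t - ρ t‖ := by
            have hcont : ContinuousOn (fun t => u t - ρ t) (Icc 0 1) := huC.sub hρC
            refine intervalIntegral.integral_mono_on hx.1 ?_ ?_ fun t ht => ?_
            · apply ContinuousOn.intervalIntegrable
              rw [uIcc_of_le hx.1]
              refine ContinuousOn.norm ?_
              exact (continuous_const.sub Complex.continuous_ofReal).continuousOn.mul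
                ((hcont.mono (Icc_subset_Icc le_rfl hx.2)))
            · apply ContinuousOn.intervalIntegrable
              rw [uIcc_of_le hx.1]
              exact (hcont.mono (Icc_subset_Icc le_rfl hx.2)).norm
            · rw [norm_mul]
              have h1 : ‖((↑x : ℂ) - ↑t)‖ ≤ 1 := by
                rw [show ((↑x : ℂ) - ↑t) = ((x - t : ℝ) : ℂ) by push_cast; ring,
                  Complex.norm_real]
                rw [Real.norm_eq_abs, abs_of_nonneg (by linarith [ht.2])]
                linarith [ht.1, hx.2]
              calc ‖((↑x : ℂ) - ↑t)‖ * ‖u t - ρ t‖ ≤ 1 * ‖u t - ρ t‖ :=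
                    mul_le_mul_of_nonneg_right h1 (norm_nonneg _)
                _ = ‖u t - ρ t‖ := one_mul _
    have huzero : ∀ x ∈ Icc (0:ℝ) 1, u x = 0 := by
      refine contraction hVmeas hQmeas hVb hQb α β hb hzim hzre huC ?_
      intro x hx
      have := sub_eq_zero.1 (hwzero x hx)
      rw [this]
    have hyφ : ∀ t ∈ Icc (0:ℝ) 1, y t = c * φ t := by
      intro t ht
      have h := huzero t ht
      rw [hudef] at h
      dsimp only at h
      exact sub_eq_zero.1 h
    have hcne : c ≠ 0 := by
      intro h
      apply hy0
      rw [hyφ x0 hx0, h, zero_mul]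
    have h1 := hdyeq 1 h11
    rw [hdy1] at h1
    have h2 : ∫ t in (0:ℝ)..1, (z ^ 2 * y t - Bop V Q α β y t)
        = c * ∫ t in (0:ℝ)..1, (z ^ 2 * φ t - Bop V Q α β φ t) := by
      rw [← intervalIntegral.integral_const_mul]
      refine intervalIntegral.integral_congr fun t ht => ?_
      rw [uIcc_of_le zero_le_one] at ht
      have hBt : Bop V Q α β y t = c * Bop V Q α β φ t := by
        have he : ∀ s, ext01 y s = c * ext01 φ s := by
          intro s
          by_cases h : s ∈ Ioo (0:ℝ) 1
          · rw [ext01, ext01, indicator_of_mem h, indicator_of_mem h]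
            exact hyφ s (Ioo_subset_Icc_self h)
          · rw [ext01, ext01, indicator_of_notMem h, indicator_of_notMem h, mul_zero]
        simp only [Bop, he]
        ring
      rw [hyφ t ht, hBt]
      ring
    rw [h2, hphiKEY2 1 h11] at h1
    have h3 : z * Complex.sin (z * ((1:ℝ) : ℂ))
        - ∫ s in (0:ℝ)..1, Bop V Q α β φ s * Complex.cos (z * (((1:ℝ) : ℂ) - ↑s)) = 0 := by
      have h4 := neg_eq_zero.1 h1.symm
      rcases mul_eq_zero.1 h4 with h | h
      · exact absurd h hcne
      · exact h
    rw [Complex.ofReal_one, mul_one] at h3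
    linear_combination -h3
  · -- (ii) → (i)
    intro hchar
    have hIg : ∀ x ∈ Icc (0:ℝ) 1,
        IntervalIntegrable (fun t => z ^ 2 * φ t - Bop V Q α β φ t) volume 0 x := by
      intro x hx
      have := II_weighted hVmeas hQmeas hVb hQb α β z hφC hφC hx
        (fun _ => (1:ℂ)) continuous_const
      rwa [show (fun s => (1:ℂ) * (z ^ 2 * φ s - Bop V Q α β φ s))
        = fun s => z ^ 2 * φ s - Bop V Q α β φ s from funext fun s => one_mul _] at this
    have hdyC : ContinuousOn
        (fun x : ℝ => -∫ t in (0:ℝ)..x, (z ^ 2 * φ t - Bop V Q α β φ t)) (Icc 0 1) := by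
      have huIcc : uIcc (0:ℝ) 1 = Icc 0 1 := uIcc_of_le zero_le_one
      have := intervalIntegral.continuousOn_primitive_interval
        (huIcc ▸ (intervalIntegrable_iff_integrableOn_Icc_of_le zero_le_one).1 (hIg 1 h11))
      rw [huIcc] at this
      exact this.neg
    have hprim : ∀ x ∈ Icc (0:ℝ) 1,
        φ x = 1 + ∫ t in (0:ℝ)..x,
          (fun w : ℝ => -∫ s in (0:ℝ)..w, (z ^ 2 * φ s - Bop V Q α β φ s)) t := by
      intro x hx
      rw [hphiKEY x hx, intervalIntegral.integral_neg,
        prim_eq hVmeas hQmeas hVb hQb α β z hφC hx]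
      ring
    refine ⟨φ, fun x => -∫ t in (0:ℝ)..x, (z ^ 2 * φ t - Bop V Q α β φ t),
      hφC, hdyC, ?_, ?_, ?_, ?_, fun x hx => rfl⟩
    · intro x hx
      haveI : Fact (x ∈ Icc (0:ℝ) 1) := ⟨hx⟩
      have hint : IntervalIntegrable
          (fun w : ℝ => -∫ s in (0:ℝ)..w, (z ^ 2 * φ s - Bop V Q α β φ s)) volume 0 x := by
        apply ContinuousOn.intervalIntegrable
        rw [uIcc_of_le hx.1]
        exact hdyC.mono (Icc_subset_Icc le_rfl hx.2)
      have hmeasf : StronglyMeasurableAtFilter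
          (fun w : ℝ => -∫ s in (0:ℝ)..w, (z ^ 2 * φ s - Bop V Q α β φ s))
          (nhdsWithin x (Icc (0:ℝ) 1)) :=
        ⟨Icc 0 1, self_mem_nhdsWithin, hdyC.aestronglyMeasurable measurableSet_Icc⟩
      have hd := intervalIntegral.integral_hasDerivWithinAt_right
        (s := Icc (0:ℝ) 1) (t := Icc (0:ℝ) 1) hint hmeasf (hdyC x hx)
      have hd2 := hd.const_add 1
      exact hd2.congr (fun t ht => hprim t ht) (hprim x hx)
    · refine ⟨0, h01, ?_⟩
      have := hφeq 0 h01
      simp at this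
      rw [this]
      exact one_ne_zero
    · simp
    · show -∫ t in (0:ℝ)..1, (z ^ 2 * φ t - Bop V Q α β φ t) = 0
      rw [hphiKEY2 1 h11]
      rw [Complex.ofReal_one, mul_one]
      linear_combination hchar
end

section
/- Let K > 0 and let n be a positive integer with πn − π/2 > 0. Suppose z ∈ ℂ satisfies |Re z − πn| ≤ π/2, Re z > 0, and z·sin z = w for some w ∈ ℂ with |w| ≤ K. Then |sin z| ≤ K/(πn − π/2) and consequently |z − πn| ≤ πK/(2πn − π). -/
open Real

lemma sin_abs_lower {ζ : ℂ} (h : |ζ.re| ≤ Real.pi / 2) :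
    2 / Real.pi * ‖ζ‖ ≤ ‖Complex.sin ζ‖ := by
  have hπ : 0 < Real.pi := Real.pi_pos
  have h2π : (0:ℝ) ≤ 2 / Real.pi := by positivity
  set x := ζ.re
  set y := ζ.im
  have hs : Complex.sin ζ = (Real.sin x * Real.cosh y : ℝ) +
      (Real.cos x * Real.sinh y : ℝ) * Complex.I := by
    simpa using Complex.sin_eq ζ
  have hnorm : ‖Complex.sin ζ‖ ^ 2 =
      (Real.sin x * Real.cosh y) ^ 2 + (Real.cos x * Real.sinh y) ^ 2 := by
    rw [← Complex.normSq_eq_norm_sq, hs, Complex.normSq_apply]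
    simp only [Complex.add_re, Complex.add_im, Complex.mul_re, Complex.mul_im, Complex.I_re,
      Complex.I_im, Complex.ofReal_re, Complex.ofReal_im, mul_zero, mul_one, zero_mul,
      sub_zero, zero_add, add_zero]
    ring
  have key : (2 / Real.pi * ‖ζ‖) ^ 2 ≤ ‖Complex.sin ζ‖ ^ 2 := by
    rw [hnorm, mul_pow, Complex.sq_norm, Complex.normSq_apply]
    have h1 : (2 / Real.pi) ^ 2 * x ^ 2 ≤ Real.sin x ^ 2 := by
      have hj := Real.mul_abs_le_abs_sin h
      have hjj := mul_le_mul hj hj (by positivity) (abs_nonneg _)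
      nlinarith [sq_abs x, sq_abs (Real.sin x)]
    have h2 : (2 / Real.pi) ^ 2 * y ^ 2 ≤ Real.sinh y ^ 2 := by
      have hyy : y ^ 2 ≤ Real.sinh y ^ 2 := by
        have h1 : |y| ≤ Real.sinh |y| := Real.self_le_sinh_iff.2 (abs_nonneg y)
        have := mul_le_mul h1 h1 (abs_nonneg y) ((abs_nonneg y).trans h1)
        calc y ^ 2 = |y| * |y| := by rw [← sq_abs, sq]
          _ ≤ Real.sinh |y| * Real.sinh |y| := this
          _ = Real.sinh y ^ 2 := by
              rcases abs_choice y with h | h <;> rw [h] <;> simp [sq]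
      have h2π1 : (2 / Real.pi) ^ 2 ≤ 1 := by
        have : 2 / Real.pi ≤ 1 := by
          rw [div_le_one hπ]; linarith [Real.two_le_pi]
        nlinarith
      nlinarith [sq_nonneg y]
    have hch : Real.sinh y ^ 2 + 1 = Real.cosh y ^ 2 := (Real.cosh_sq y).symm
    nlinarith [Real.sin_sq_add_cos_sq x, sq_nonneg (Real.sinh y), sq_nonneg (Real.sin x),
      sq_nonneg (Real.cos x * Real.sinh y), sq_nonneg (Real.sin x * Real.sinh y)]
  exact le_of_pow_le_pow_left₀ two_ne_zero (norm_nonneg _) key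

/-- Roots of `z·sin z = w` with `|w| ≤ K` lying in the strip
`|Re z − πn| ≤ π/2`, `Re z > 0` satisfy `|sin z| ≤ K/(πn − π/2)` and
`|z − πn| ≤ πK/(2πn − π)`. -/
theorem stmt_12 (K : ℝ) (hK : 0 < K) (n : ℕ) (hn : 0 < n)
    (hn' : 0 < Real.pi * n - Real.pi / 2) (z : ℂ)
    (hstrip : |z.re - Real.pi * n| ≤ Real.pi / 2) (hre : 0 < z.re)
    (w : ℂ) (hw : z * Complex.sin z = w) (hwK : ‖w‖ ≤ K) :
    ‖Complex.sin z‖ ≤ K / (Real.pi * n - Real.pi / 2) ∧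
    ‖z - (Real.pi * n : ℝ)‖ ≤ Real.pi * K / (2 * Real.pi * n - Real.pi) := by
  have hπ : 0 < Real.pi := Real.pi_pos
  set a : ℝ := Real.pi * n with ha
  have hzre : a - Real.pi / 2 ≤ z.re := by
    have := (abs_le.1 hstrip).1; linarith
  have hzabs : a - Real.pi / 2 ≤ ‖z‖ :=
    hzre.trans ((le_abs_self z.re).trans (Complex.abs_re_le_norm z))
  have hz0 : 0 < ‖z‖ := lt_of_lt_of_le hn' hzabs
  have hmul : ‖z‖ * ‖Complex.sin z‖ ≤ K := by
    rw [← norm_mul, hw]; exact hwK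
  have h1 : ‖Complex.sin z‖ ≤ K / (a - Real.pi / 2) := by
    rw [le_div_iff₀ hn']
    nlinarith [norm_nonneg (Complex.sin z)]
  refine ⟨h1, ?_⟩
  set ζ : ℂ := z - (a : ℂ) with hζ
  have hζre : |ζ.re| ≤ Real.pi / 2 := by
    simpa [hζ] using hstrip
  have hsz : ‖Complex.sin z‖ = ‖Complex.sin ζ‖ := by
    have hzζ : z = ζ + (n : ℂ) * (Real.pi : ℂ) := by
      push_cast [hζ, ha]; ring
    rw [hzζ, Complex.sin_antiperiodic.add_nat_mul_eq n]
    simp [abs_pow]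
  have hlow := sin_abs_lower hζre
  rw [← hsz] at hlow
  have h2 : 2 / Real.pi * ‖ζ‖ ≤ K / (a - Real.pi / 2) := hlow.trans h1
  have hgoal : ‖ζ‖ ≤ Real.pi * K / (2 * Real.pi * n - Real.pi) := by
    rw [le_div_iff₀ (by rw [ha] at hn'; linarith)]
    have h3 := mul_le_mul_of_nonneg_left h2 (le_of_lt (mul_pos hπ hn'))
    have e1 : Real.pi * (a - Real.pi / 2) * (2 / Real.pi * ‖ζ‖)
        = ‖ζ‖ * (2 * a - Real.pi) := by field_simp
    have e2 : Real.pi * (a - Real.pi / 2) * (K / (a - Real.pi / 2)) = Real.pi * K := by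
      rw [mul_assoc, mul_comm (a - Real.pi / 2), div_mul_cancel₀ K (ne_of_gt hn')]
    rw [e1, e2] at h3
    calc ‖ζ‖ * (2 * Real.pi * ↑n - Real.pi)
        = ‖ζ‖ * (2 * a - Real.pi) := by rw [ha]; ring_nf
      _ ≤ Real.pi * K := h3
  simpa [hζ] using hgoal
end

section
/- Let a > 0 and b > 0. The function ψ(μ) := (1 − √(1 − 4abμ/(1 − bμ)))/(2b) is analytic in a neighborhood of μ = 0, satisfies b·ψ(μ)² − ψ(μ) + aμ/(1 − bμ) = 0 and ψ(0) = 0 there, and all Taylor coefficients of ψ at 0 are real, with the coefficient of μ equal to a and the coefficient of μ^k strictly positive for every k ≥ 1. -/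
open MeasureTheory

noncomputable def myc (a b : ℝ) : ℕ → ℝ
  | 0 => 0
  | 1 => a
  | (n+2) => a * b ^ (n+1) +
      b * ∑ i ∈ (Finset.range (n+1)).attach, myc a b (i.1+1) * myc a b (n+1-i.1)
  decreasing_by
  · have := i.2; simp only [Finset.mem_range] at this; omega
  · omega

lemma myc_zero (a b : ℝ) : myc a b 0 = 0 := by rw [myc]

lemma myc_one (a b : ℝ) : myc a b 1 = a := by rw [myc]

lemma myc_two (a b : ℝ) (n : ℕ) : myc a b (n+2) = a * b ^ (n+1) +
    b * ∑ i ∈ Finset.range (n+1), myc a b (i+1) * myc a b (n+1-i) := by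
  rw [myc, Finset.sum_attach (Finset.range (n+1)) (fun i => myc a b (i+1) * myc a b (n+1-i))]

lemma myc_nonneg (a b : ℝ) (ha : 0 ≤ a) (hb : 0 ≤ b) : ∀ n, 0 ≤ myc a b n := by
  intro n
  induction n using Nat.strong_induction_on with
  | _ n ih =>
    match n with
    | 0 => rw [myc]
    | 1 => rw [myc]; exact ha
    | (m+2) =>
      rw [myc_two]
      have hsum : 0 ≤ ∑ i ∈ Finset.range (m+1), myc a b (i+1) * myc a b (m+1-i) := by
        apply Finset.sum_nonneg
        intro i hi
        simp only [Finset.mem_range] at hi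
        exact mul_nonneg (ih (i+1) (by omega)) (ih (m+1-i) (by omega))
      positivity

/-- recursion in antidiagonal form -/
lemma myc_rec (a b : ℝ) (n : ℕ) (hn : 1 ≤ n) :
    myc a b n = b * (∑ ij ∈ Finset.HasAntidiagonal.antidiagonal n, myc a b ij.1 * myc a b ij.2)
      + a * b ^ (n-1) := by
  match n with
  | 1 =>
    rw [Finset.Nat.sum_antidiagonal_eq_sum_range_succ_mk]
    rw [Finset.sum_range_succ, Finset.sum_range_succ, Finset.sum_range_zero]
    have h0' : myc a b 0 = 0 := by rw [myc]
    have h1 : myc a b 1 = a := by rw [myc]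
    simp [h0', h1]
  | (m+2) =>
    rw [Finset.Nat.sum_antidiagonal_eq_sum_range_succ_mk, myc_two]
    have h0 : myc a b 0 = 0 := by rw [myc]
    have key : ∑ k ∈ Finset.range (m+2+1), myc a b k * myc a b (m+2-k)
        = ∑ i ∈ Finset.range (m+1), myc a b (i+1) * myc a b (m+1-i) := by
      rw [Finset.sum_range_succ, Finset.sum_range_succ']
      simp only [Nat.sub_self, h0, mul_zero, zero_mul, add_zero]
      exact Finset.sum_congr rfl fun i hi => by congr 2; omega
    rw [key, show m+2-1 = m+1 from rfl]
    ring

lemma myc_ge (a b : ℝ) (ha : 0 ≤ a) (hb : 0 ≤ b) (n : ℕ) (hn : 1 ≤ n) :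
    a * b ^ (n-1) ≤ myc a b n := by
  rw [myc_rec a b n hn]
  have : 0 ≤ ∑ ij ∈ Finset.HasAntidiagonal.antidiagonal n, myc a b ij.1 * myc a b ij.2 :=
    Finset.sum_nonneg fun ij _ => mul_nonneg (myc_nonneg a b ha hb _) (myc_nonneg a b ha hb _)
  nlinarith

lemma one_le_catalan : ∀ n, 1 ≤ catalan n := by
  intro n
  induction n using Nat.strong_induction_on with
  | _ n ih =>
    match n with
    | 0 => simp
    | (m+1) =>
      rw [catalan_succ']
      calc 1 ≤ catalan 0 * catalan m := by
              rw [catalan_zero, one_mul]; exact ih m (by omega)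
        _ ≤ _ := Finset.single_le_sum (f := fun ij : ℕ × ℕ => catalan ij.1 * catalan ij.2)
              (fun _ _ => Nat.zero_le _)
              (show ((0, m) : ℕ × ℕ) ∈ Finset.HasAntidiagonal.antidiagonal m from
                Finset.HasAntidiagonal.mem_antidiagonal.2 (by omega))

lemma catalan_le_four_pow (n : ℕ) : catalan n ≤ 4 ^ n := by
  have h1 : (n+1) * catalan n = n.centralBinom := succ_mul_catalan_eq_centralBinom n
  have h2 : n.centralBinom ≤ 4 ^ n := by
    have : n.centralBinom ≤ ∑ m ∈ Finset.range (2*n+1), (2*n).choose m :=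
      Finset.single_le_sum (f := fun m => (2*n).choose m) (fun _ _ => Nat.zero_le _)
        (Finset.mem_range.2 (by omega))
    rw [Nat.sum_range_choose] at this
    calc n.centralBinom ≤ 2 ^ (2*n) := this
      _ = 4 ^ n := by rw [pow_mul]; norm_num
  calc catalan n ≤ (n+1) * catalan n := Nat.le_mul_of_pos_left _ (by omega)
    _ ≤ 4 ^ n := h1 ▸ h2

lemma myc_le (a b : ℝ) (ha : 0 < a) (hb : 0 < b) :
    ∀ n, 1 ≤ n → myc a b n ≤ (1/(2*b)) * catalan (n-1) * (max b (4*a*b)) ^ n := by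
  set B := max b (4*a*b) with hB
  have hbB : b ≤ B := le_max_left _ _
  have habB : 4*a*b ≤ B := le_max_right _ _
  have hBpos : 0 < B := lt_of_lt_of_le hb hbB
  intro n
  induction n using Nat.strong_induction_on with
  | _ n ih =>
    match n with
    | 0 => intro h; omega
    | 1 =>
      intro _
      rw [myc_one]
      simp only [Nat.sub_self, catalan_zero, Nat.cast_one, mul_one, pow_one]
      rw [div_mul_eq_mul_div, one_mul, le_div_iff₀ (by positivity)]
      nlinarith
    | (m+2) =>
      intro _
      rw [myc_two]
      have hcat : (catalan (m+1) : ℝ)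
          = ∑ i ∈ Finset.range (m+1), (catalan i : ℝ) * catalan (m-i) := by
        rw [catalan_succ', Finset.Nat.sum_antidiagonal_eq_sum_range_succ_mk]
        push_cast
        rfl
      have hsum : ∑ i ∈ Finset.range (m+1), myc a b (i+1) * myc a b (m+1-i)
          ≤ (1/(2*b))^2 * B^(m+2) * catalan (m+1) := by
        rw [hcat, Finset.mul_sum]
        apply Finset.sum_le_sum
        intro i hi
        simp only [Finset.mem_range] at hi
        have h1 : myc a b (i+1) ≤ (1/(2*b)) * catalan i * B ^ (i+1) := by
          simpa using ih (i+1) (by omega) (by omega)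
        have h2 : myc a b (m+1-i) ≤ (1/(2*b)) * catalan (m-i) * B ^ (m+1-i) := by
          have := ih (m+1-i) (by omega) (by omega)
          have he : m+1-i-1 = m-i := by omega
          rwa [he] at this
        have hn1 : 0 ≤ myc a b (i+1) := myc_nonneg a b ha.le hb.le _
        have hn2 : 0 ≤ myc a b (m+1-i) := myc_nonneg a b ha.le hb.le _
        calc myc a b (i+1) * myc a b (m+1-i)
            ≤ ((1/(2*b)) * catalan i * B ^ (i+1)) * ((1/(2*b)) * catalan (m-i) * B ^ (m+1-i)) := by
              apply mul_le_mul h1 h2 hn2 (by positivity)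
          _ = (1/(2*b))^2 * (B^(i+1) * B^(m+1-i)) * ((catalan i : ℝ) * catalan (m-i)) := by ring
          _ = (1/(2*b))^2 * B^(m+2) * ((catalan i : ℝ) * catalan (m-i)) := by
              rw [← pow_add, show i+1+(m+1-i) = m+2 by omega]
      have hBpow : 4*a*b*b^(m+1) ≤ B^(m+2) := by
        calc 4*a*b*b^(m+1) ≤ B * B^(m+1) := by
              apply mul_le_mul habB (pow_le_pow_left₀ hb.le hbB _) (by positivity) hBpos.le
          _ = B^(m+2) := by ring
      have hcat1 : (1:ℝ) ≤ catalan (m+1) := by exact_mod_cast one_le_catalan (m+1)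
      have key : a * b^(m+1) + b * ((1/(2*b))^2 * B^(m+2) * catalan (m+1))
          ≤ (1/(2*b)) * catalan (m+1) * B^(m+2) := by
        have hb' : (0:ℝ) < 2*b := by linarith
        have e1 : b * ((1/(2*b))^2 * B^(m+2) * catalan (m+1))
            = (1/(4*b)) * catalan (m+1) * B^(m+2) := by
          field_simp
          ring
        rw [e1]
        have e2 : (1/(2*b)) * (catalan (m+1):ℝ) * B^(m+2)
            - (1/(4*b)) * catalan (m+1) * B^(m+2) = (1/(4*b)) * catalan (m+1) * B^(m+2) := by
          field_simp
          ring
        have e3 : a * b^(m+1) ≤ (1/(4*b)) * catalan (m+1) * B^(m+2) := by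
          have : (1/(4*b)) * (4*a*b*b^(m+1)) ≤ (1/(4*b)) * B^(m+2) := by
            apply mul_le_mul_of_nonneg_left hBpow (by positivity)
          have h4 : (1/(4*b)) * (4*a*b*b^(m+1)) = a * b^(m+1) := by field_simp
          calc a * b^(m+1) = (1/(4*b)) * (4*a*b*b^(m+1)) := h4.symm
            _ ≤ (1/(4*b)) * B^(m+2) := this
            _ = 1 * ((1/(4*b)) * B^(m+2)) := (one_mul _).symm
            _ ≤ catalan (m+1) * ((1/(4*b)) * B^(m+2)) :=
                mul_le_mul_of_nonneg_right hcat1 (by positivity)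
            _ = (1/(4*b)) * catalan (m+1) * B^(m+2) := by ring
        linarith
      calc a * b^(m+1) + b * ∑ i ∈ Finset.range (m+1), myc a b (i+1) * myc a b (m+1-i)
          ≤ a * b^(m+1) + b * ((1/(2*b))^2 * B^(m+2) * catalan (m+1)) := by
            have := mul_le_mul_of_nonneg_left hsum hb.le
            linarith
        _ ≤ (1/(2*b)) * catalan (m+1) * B^(m+2) := key
        _ = (1/(2*b)) * catalan (m+2-1) * B^(m+2) := by norm_num

/-- geometric bound -/
lemma myc_le_geo (a b : ℝ) (ha : 0 < a) (hb : 0 < b) (n : ℕ) :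
    myc a b n ≤ (1/(2*b)) * (4 * max b (4*a*b)) ^ n := by
  set B := max b (4*a*b) with hB
  have hBpos : 0 < B := lt_of_lt_of_le hb (le_max_left _ _)
  match n with
  | 0 =>
    rw [myc_zero]
    positivity
  | (m+1) =>
    have h1 := myc_le a b ha hb (m+1) (by omega)
    have h2 : (catalan (m+1-1) : ℝ) ≤ 4^(m+1) := by
      calc (catalan m : ℝ) ≤ 4^m := by exact_mod_cast catalan_le_four_pow m
        _ ≤ 4^(m+1) := by
          apply pow_le_pow_right₀ (by norm_num) (by omega)
    calc myc a b (m+1) ≤ (1/(2*b)) * catalan (m+1-1) * B ^ (m+1) := h1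
      _ ≤ (1/(2*b)) * 4^(m+1) * B^(m+1) := by
          apply mul_le_mul_of_nonneg_right _ (by positivity)
          apply mul_le_mul_of_nonneg_left h2 (by positivity)
      _ = (1/(2*b)) * (4*B)^(m+1) := by rw [mul_pow]; ring

noncomputable def myP (a b : ℝ) : FormalMultilinearSeries ℂ ℂ ℂ :=
  FormalMultilinearSeries.ofScalars ℂ (fun n => (myc a b n : ℂ))

open scoped NNReal ENNReal

lemma myP_coeff (a b : ℝ) (n : ℕ) : (myP a b).coeff n = (myc a b n : ℂ) := by
  show (myP a b) n (fun _ => 1) = _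
  rw [myP, FormalMultilinearSeries.ofScalars_apply_eq, smul_eq_mul]
  simp

lemma myP_norm (a b : ℝ) (ha : 0 ≤ a) (hb : 0 ≤ b) (n : ℕ) :
    ‖myP a b n‖ = myc a b n := by
  rw [myP, FormalMultilinearSeries.ofScalars_norm, Complex.norm_real,
    Real.norm_of_nonneg (myc_nonneg a b ha hb n)]

lemma myP_radius (a b : ℝ) (ha : 0 < a) (hb : 0 < b) :
    ((Real.toNNReal (1/(2*(4 * max b (4*a*b)))) : ℝ≥0) : ℝ≥0∞) ≤ (myP a b).radius := by
  set BB := 4 * max b (4*a*b) with hBB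
  have hBBpos : 0 < BB := by
    have : 0 < max b (4*a*b) := lt_of_lt_of_le hb (le_max_left _ _)
    positivity
  apply FormalMultilinearSeries.le_radius_of_bound _ (1/(2*b))
  intro n
  rw [myP_norm a b ha.le hb.le]
  have hr : ((Real.toNNReal (1/(2*BB)) : ℝ≥0) : ℝ) = 1/(2*BB) :=
    Real.coe_toNNReal _ (by positivity)
  rw [hr]
  calc myc a b n * (1/(2*BB))^n ≤ ((1/(2*b)) * BB^n) * (1/(2*BB))^n := by
        apply mul_le_mul_of_nonneg_right (myc_le_geo a b ha hb n) (by positivity)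
    _ = (1/(2*b)) * (1/2)^n := by
        rw [mul_assoc, ← mul_pow]
        congr 2
        field_simp
    _ ≤ (1/(2*b)) * 1 := by
        apply mul_le_mul_of_nonneg_left _ (by positivity)
        apply pow_le_one₀ <;> norm_num
    _ = 1/(2*b) := mul_one _

set_option maxHeartbeats 1000000 in
lemma myP_sum_eq (a b : ℝ) (z : ℂ) :
    (myP a b).sum z = ∑' n, (myc a b n : ℂ) * z^n := by
  rw [show (myP a b).sum z = ∑' n, (myP a b n) fun _ => z from rfl]
  exact tsum_congr fun n => by
    rw [myP, FormalMultilinearSeries.ofScalars_apply_eq, smul_eq_mul]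

set_option maxHeartbeats 1000000 in
lemma summable_norm_aux (a b : ℝ) (ha : 0 < a) (hb : 0 < b) {z : ℂ}
    (hz : ‖z‖ < 1/(2*(4 * max b (4*a*b)))) :
    Summable (fun n => ‖(myc a b n : ℂ) * z^n‖) := by
  set BB := 4 * max b (4*a*b) with hBB
  have hBBpos : 0 < BB := by
    have : 0 < max b (4*a*b) := lt_of_lt_of_le hb (le_max_left _ _)
    positivity
  have hlt : BB * ‖z‖ < 1/2 := by
    have := mul_lt_mul_of_pos_left hz hBBpos
    calc BB * ‖z‖ < BB * (1/(2*BB)) := this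
      _ = 1/2 := by field_simp
  apply Summable.of_nonneg_of_le (fun n => norm_nonneg _)
    (f := fun n => (1/(2*b)) * (BB * ‖z‖)^n)
  · intro n
    rw [norm_mul, Complex.norm_real, Real.norm_of_nonneg (myc_nonneg a b ha.le hb.le n),
      norm_pow, mul_pow, ← mul_assoc]
    apply mul_le_mul_of_nonneg_right (myc_le_geo a b ha hb n) (by positivity)
  · exact (summable_geometric_of_lt_one (by positivity) (by linarith)).mul_left _

set_option maxHeartbeats 2000000 in
lemma g_fun_eq (a b : ℝ) (ha : 0 < a) (hb : 0 < b) {z : ℂ}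
    (hz : ‖z‖ < 1/(2*(4 * max b (4*a*b)))) :
    (b:ℂ) * ((myP a b).sum z)^2 - (myP a b).sum z + (a:ℂ) * z / (1 - (b:ℂ)*z) = 0 := by
  set BB := 4 * max b (4*a*b) with hBB
  have hBBpos : 0 < BB := by
    have : 0 < max b (4*a*b) := lt_of_lt_of_le hb (le_max_left _ _)
    positivity
  have hbBB : b ≤ BB := by
    have : b ≤ max b (4*a*b) := le_max_left _ _
    nlinarith
  have hbz : ‖(b:ℂ)*z‖ < 1 := by
    rw [norm_mul, Complex.norm_real, Real.norm_of_nonneg hb.le]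
    have h1 : b * ‖z‖ ≤ BB * ‖z‖ := mul_le_mul_of_nonneg_right hbBB (norm_nonneg _)
    have h2 : BB * ‖z‖ < BB * (1/(2*BB)) := mul_lt_mul_of_pos_left hz hBBpos
    have h3 : BB * (1/(2*BB)) = 1/2 := by field_simp
    linarith
  set u : ℕ → ℂ := fun n => (myc a b n : ℂ) * z^n with hu_def
  have hu : Summable fun n => ‖u n‖ := summable_norm_aux a b ha hb hz
  have huS : Summable u := hu.of_norm
  have hgz : (myP a b).sum z = ∑' n, u n := myP_sum_eq a b z
  set T : ℕ → ℝ := fun n => ∑ ij ∈ Finset.HasAntidiagonal.antidiagonal n, myc a b ij.1 * myc a b ij.2 with hT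
  have hterm : ∀ n, ∑ ij ∈ Finset.HasAntidiagonal.antidiagonal n, u ij.1 * u ij.2 = ((T n : ℝ):ℂ) * z^n := by
    intro n
    rw [hT]
    push_cast
    rw [Finset.sum_mul]
    apply Finset.sum_congr rfl
    intro ij hij
    have h := Finset.HasAntidiagonal.mem_antidiagonal.1 hij
    rw [hu_def]
    simp only
    rw [← h, pow_add]
    ring
  have hsq : (∑' n, u n) * (∑' n, u n) = ∑' n, ((T n : ℝ):ℂ) * z^n := by
    rw [tsum_mul_tsum_eq_tsum_sum_antidiagonal_of_summable_norm hu hu]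
    exact tsum_congr hterm
  have hTsum : Summable fun n => ((T n : ℝ):ℂ) * z^n := by
    have h := summable_sum_mul_antidiagonal_of_summable_mul
      (summable_mul_of_summable_norm hu hu)
    exact h.congr hterm
  have hT0 : T 0 = 0 := by
    rw [hT]
    simp [myc_zero]
  have key : ∀ n, u (n+1)
      = (b:ℂ) * (((T (n+1) : ℝ):ℂ) * z^(n+1)) + (a:ℂ) * ((b:ℂ))^n * z^(n+1) := by
    intro n
    have hr := myc_rec a b (n+1) (by omega)
    rw [show n+1-1 = n from rfl] at hr
    rw [hu_def]
    simp only
    rw [hr, hT]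
    push_cast
    ring
  have S2 : Summable (fun n => (a:ℂ) * ((b:ℂ))^n * z^(n+1)) := by
    have hgeo : Summable (fun n => ((b:ℂ)*z)^n) := summable_geometric_of_norm_lt_one hbz
    exact (hgeo.mul_left ((a:ℂ)*z)).congr (fun n => by rw [mul_pow]; ring)
  have S1 : Summable (fun n => ((T (n+1) : ℝ):ℂ) * z^(n+1)) :=
    (summable_nat_add_iff 1).2 hTsum
  have S1' : Summable (fun n => (b:ℂ) * (((T (n+1) : ℝ):ℂ) * z^(n+1))) := S1.mul_left _
  have hshift : ∑' n, ((T (n+1) : ℝ):ℂ) * z^(n+1) = ∑' n, ((T n : ℝ):ℂ) * z^n := by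
    have := Summable.tsum_eq_zero_add hTsum
    rw [this, hT0]
    simp
  have hgeo2 : ∑' n, (a:ℂ) * ((b:ℂ))^n * z^(n+1) = (a:ℂ) * z / (1 - (b:ℂ)*z) := by
    have h1 : ∀ n, (a:ℂ) * ((b:ℂ))^n * z^(n+1) = ((a:ℂ)*z) * ((b:ℂ)*z)^n := by
      intro n
      rw [mul_pow]
      ring
    rw [tsum_congr h1, tsum_mul_left, tsum_geometric_of_norm_lt_one hbz]
    rw [div_eq_mul_inv]
  have heq : (myP a b).sum z
      = (b:ℂ) * ((myP a b).sum z * (myP a b).sum z) + (a:ℂ) * z / (1 - (b:ℂ)*z) := by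
    calc (myP a b).sum z = ∑' n, u n := hgz
      _ = u 0 + ∑' n, u (n+1) := Summable.tsum_eq_zero_add huS
      _ = ∑' n, u (n+1) := by
          rw [hu_def]
          simp [myc_zero]
      _ = ∑' n, ((b:ℂ) * (((T (n+1) : ℝ):ℂ) * z^(n+1)) + (a:ℂ) * ((b:ℂ))^n * z^(n+1)) :=
          tsum_congr key
      _ = (∑' n, (b:ℂ) * (((T (n+1) : ℝ):ℂ) * z^(n+1)))
          + ∑' n, (a:ℂ) * ((b:ℂ))^n * z^(n+1) := Summable.tsum_add S1' S2
      _ = (b:ℂ) * (∑' n, ((T (n+1) : ℝ):ℂ) * z^(n+1)) + (a:ℂ) * z / (1 - (b:ℂ)*z) := by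
          rw [tsum_mul_left, hgeo2]
      _ = (b:ℂ) * ((myP a b).sum z * (myP a b).sum z) + (a:ℂ) * z / (1 - (b:ℂ)*z) := by
          rw [hshift, ← hsq, ← hgz]
  rw [pow_two]
  linear_combination -heq

set_option maxHeartbeats 2000000

/-- The explicit majorant `ψ(μ) = (1 − √(1 − 4abμ/(1 − bμ)))/(2b)` (principal
square root) is analytic at `0`, solves `bψ² − ψ + aμ/(1 − bμ) = 0` near `0`
with `ψ(0) = 0`, and its Taylor coefficients at `0` are real, the coefficient
of `μ` equals `a`, and the coefficient of `μ^k` is positive for all `k ≥ 1`. -/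
theorem stmt_16 (a b : ℝ) (ha : 0 < a) (hb : 0 < b)
    (ψ : ℂ → ℂ)
    (hψ : ψ = fun μ : ℂ =>
      (1 - (1 - 4 * (a : ℂ) * (b : ℂ) * μ / (1 - (b : ℂ) * μ)) ^ ((1 : ℂ) / 2))
        / (2 * (b : ℂ))) :
    AnalyticAt ℂ ψ 0 ∧
    ψ 0 = 0 ∧
    (∀ᶠ μ in nhds (0 : ℂ),
      (b : ℂ) * ψ μ ^ 2 - ψ μ + (a : ℂ) * μ / (1 - (b : ℂ) * μ) = 0) ∧
    ∃ p : FormalMultilinearSeries ℂ ℂ ℂ,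
      HasFPowerSeriesAt ψ p 0 ∧
      (∀ k : ℕ, (p.coeff k).im = 0) ∧
      p.coeff 1 = (a : ℂ) ∧
      (∀ k : ℕ, 1 ≤ k → 0 < (p.coeff k).re) := by
  have hBBpos : 0 < 4 * max b (4*a*b) := by
    have : 0 < max b (4*a*b) := lt_of_lt_of_le hb (le_max_left _ _)
    positivity
  set P := myP a b with hP
  -- the sum of the series
  have hrad : 0 < P.radius := by
    refine lt_of_lt_of_le ?_ (myP_radius a b ha hb)
    exact_mod_cast Real.toNNReal_pos.2 (by positivity)
  have hg_at : HasFPowerSeriesAt P.sum P 0 :=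
    (P.hasFPowerSeriesOnBall hrad).hasFPowerSeriesAt
  have hg_cont : ContinuousAt P.sum 0 := hg_at.continuousAt
  have hg0 : P.sum 0 = 0 := by
    rw [hP, myP_sum_eq, tsum_eq_single 0 (fun n hn => by simp [zero_pow hn])]
    simp [myc_zero]
  -- basic facts about ψ
  have hψ0 : ψ 0 = 0 := by
    rw [hψ]
    simp [Complex.one_cpow]
  have hbC : ((b:ℂ)) ≠ 0 := Complex.ofReal_ne_zero.2 hb.ne'
  have hdenomC : ContinuousAt (fun μ : ℂ => 1 - (b:ℂ)*μ) 0 :=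
    (continuous_const.sub (continuous_const.mul continuous_id)).continuousAt
  have hdenom0 : (fun μ : ℂ => 1 - (b:ℂ)*μ) 0 = 1 := by simp
  have hwC : ContinuousAt (fun μ : ℂ => 1 - 4*(a:ℂ)*(b:ℂ)*μ / (1 - (b:ℂ)*μ)) 0 := by
    apply continuousAt_const.sub
    apply ContinuousAt.div
    · exact (continuous_const.mul continuous_id).continuousAt
    · exact hdenomC
    · simp
  have hw0 : (fun μ : ℂ => 1 - 4*(a:ℂ)*(b:ℂ)*μ / (1 - (b:ℂ)*μ)) 0 = 1 := by simp
  have hψ_cont : ContinuousAt ψ 0 := by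
    rw [hψ]
    apply ContinuousAt.div_const
    apply continuousAt_const.sub
    apply ContinuousAt.cpow hwC continuousAt_const
    simp
  -- eventual nonvanishing
  have ev1 : ∀ᶠ μ in nhds (0:ℂ), (1 - (b:ℂ)*μ) ≠ 0 :=
    hdenomC.eventually_ne (by simp)
  have ev2 : ∀ᶠ μ in nhds (0:ℂ), (1 - 4*(a:ℂ)*(b:ℂ)*μ / (1 - (b:ℂ)*μ)) ≠ 0 :=
    hwC.eventually_ne (by simp)
  -- the functional equation for ψ
  have hψeq : ∀ᶠ μ in nhds (0:ℂ),
      (b:ℂ) * ψ μ ^ 2 - ψ μ + (a:ℂ) * μ / (1 - (b:ℂ)*μ) = 0 := by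
    filter_upwards [ev1, ev2] with μ h1 h2
    rw [hψ]
    simp only
    set s := (1 - 4*(a:ℂ)*(b:ℂ)*μ / (1 - (b:ℂ)*μ)) ^ ((1:ℂ)/2) with hs_def
    have hs : s * s = 1 - 4*(a:ℂ)*(b:ℂ)*μ / (1 - (b:ℂ)*μ) := by
      rw [hs_def, ← Complex.cpow_add _ _ h2]
      norm_num
    have expand : (b:ℂ) * ((1-s)/(2*(b:ℂ)))^2 - (1-s)/(2*(b:ℂ)) = (s*s - 1)/(4*(b:ℂ)) := by
      field_simp
      ring
    rw [expand, hs]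
    field_simp
    ring
  -- smallness of ψ and g near 0
  have hψ_tend : Filter.Tendsto ψ (nhds 0) (nhds (0:ℂ)) := by
    have := hψ_cont.tendsto
    rwa [hψ0] at this
  have hg_tend : Filter.Tendsto P.sum (nhds 0) (nhds (0:ℂ)) := by
    have := hg_cont.tendsto
    rwa [hg0] at this
  have e1 : ∀ᶠ μ in nhds (0:ℂ), ψ μ ∈ Metric.ball (0:ℂ) (1/(4*b)) :=
    hψ_tend.eventually_mem (Metric.ball_mem_nhds _ (by positivity))
  have e2 : ∀ᶠ μ in nhds (0:ℂ), P.sum μ ∈ Metric.ball (0:ℂ) (1/(4*b)) :=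
    hg_tend.eventually_mem (Metric.ball_mem_nhds _ (by positivity))
  have hball_ev : ∀ᶠ μ in nhds (0:ℂ), ‖μ‖ < 1/(2*(4 * max b (4*a*b))) := by
    have hmem := Metric.ball_mem_nhds (0:ℂ) (show (0:ℝ) < 1/(2*(4 * max b (4*a*b))) by positivity)
    filter_upwards [hmem] with μ hμ
    simpa [Metric.mem_ball, dist_zero_right] using hμ
  have hgeq : ∀ᶠ μ in nhds (0:ℂ),
      (b:ℂ) * (P.sum μ) ^ 2 - P.sum μ + (a:ℂ) * μ / (1 - (b:ℂ)*μ) = 0 := by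
    filter_upwards [hball_ev] with μ hμ
    exact g_fun_eq a b ha hb hμ
  -- ψ coincides with the sum of the series near 0
  have hψg : ψ =ᶠ[nhds (0:ℂ)] P.sum := by
    filter_upwards [hψeq, hgeq, e1, e2] with μ h1 h2 h3 h4
    have hfact : (ψ μ - P.sum μ) * ((b:ℂ)*(ψ μ + P.sum μ) - 1) = 0 := by
      linear_combination h1 - h2
    have hn3 : ‖ψ μ‖ < 1/(4*b) := by simpa [Metric.mem_ball, dist_zero_right] using h3
    have hn4 : ‖P.sum μ‖ < 1/(4*b) := by simpa [Metric.mem_ball, dist_zero_right] using h4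
    have hne : (b:ℂ)*(ψ μ + P.sum μ) - 1 ≠ 0 := by
      intro hcon
      have h5 : (b:ℂ)*(ψ μ + P.sum μ) = 1 := by linear_combination hcon
      have h6 : ‖(b:ℂ)*(ψ μ + P.sum μ)‖ = 1 := by rw [h5]; simp
      have h7 : ‖(b:ℂ)*(ψ μ + P.sum μ)‖ ≤ b * (‖ψ μ‖ + ‖P.sum μ‖) := by
        rw [norm_mul, Complex.norm_real, Real.norm_of_nonneg hb.le]
        exact mul_le_mul_of_nonneg_left (norm_add_le _ _) hb.le
      have h8 : b * (‖ψ μ‖ + ‖P.sum μ‖) < b * (1/(4*b) + 1/(4*b)) := by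
        apply mul_lt_mul_of_pos_left _ hb
        linarith
      have h9 : b * (1/(4*b) + 1/(4*b)) = 1/2 := by field_simp; ring
      linarith
    rcases mul_eq_zero.1 hfact with h | h
    · exact sub_eq_zero.1 h
    · exact absurd h hne
  have hψP : HasFPowerSeriesAt ψ P 0 := hg_at.congr hψg.symm
  refine ⟨⟨P, hψP⟩, hψ0, hψeq, P, hψP, ?_, ?_, ?_⟩
  · intro k
    rw [hP, myP_coeff]
    exact Complex.ofReal_im _
  · rw [hP, myP_coeff, myc_one]
  · intro k hk
    rw [hP, myP_coeff, Complex.ofReal_re]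
    have h1 := myc_ge a b ha.le hb.le k hk
    have h2 : 0 < a * b^(k-1) := by positivity
    linarith
end

section
/- Let K := ‖V‖_{L∞(0,1)} + ‖Q‖_{L∞(0,1)} and b := √2·K. There exist C > 0 and a positive integer n₀, depending only on K, such that for all α, β ∈ [0,1], all integers n ≥ n₀, all z ∈ ℂ with |Re z − πn| ≤ π/2 and |Im z| ≤ b, and every continuous φ : [0,1] → ℂ satisfying both the Volterra integral equation φ(x) = cos(zx) + z⁻¹·∫₀ˣ (B(α,β)φ)(t)·sin(z(x−t)) dt for all x ∈ [0,1] and the characteristic equation −z·sin z + ∫₀¹ (B(α,β)φ)(t)·cos(z(1−t)) dt = 0, one has | z² − π²n² − 2·∫₀^{1−α} V(t)·cos(πnt)·cos(πn(t+α)) dt − 2·∫_β^1 Q(t)·cos(πnt)·cos(πn(t−β)) dt | ≤ C/n. -/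
open MeasureTheory Set
open scoped ENNReal NNReal

namespace Complex

/-- Compatibility: the complex absolute value, as the norm. -/
noncomputable def abs : AbsoluteValue ℂ ℝ where
  toFun z := ‖z‖
  map_mul' := norm_mul
  nonneg' := norm_nonneg
  eq_zero' _ := norm_eq_zero
  add_le' := norm_add_le

@[simp] lemma abs_apply (z : ℂ) : abs z = ‖z‖ := rfl

lemma norm_eq_abs (z : ℂ) : ‖z‖ = abs z := rfl

lemma abs_exp (z : ℂ) : abs (exp z) = Real.exp z.re := norm_exp z

lemma abs_ofReal (r : ℝ) : abs (r : ℂ) = |r| := by simp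

lemma continuous_abs : Continuous abs := continuous_norm

lemma normSq_eq_abs (z : ℂ) : normSq z = abs z ^ 2 := normSq_eq_norm_sq z

end Complex

namespace Aux17

lemma abs_cos_le (w : ℂ) : Complex.abs (Complex.cos w) ≤ Real.exp |w.im| := by
  rw [Complex.cos]
  have h1 : Complex.abs (Complex.exp (w * Complex.I)) ≤ Real.exp |w.im| := by
    rw [Complex.abs_exp]
    apply Real.exp_le_exp.2
    simp [Complex.mul_re]
    cases abs_cases w.im <;> linarith [ (abs_cases w.im) ]
  have h2 : Complex.abs (Complex.exp (-w * Complex.I)) ≤ Real.exp |w.im| := by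
    rw [Complex.abs_exp]
    apply Real.exp_le_exp.2
    simp [Complex.mul_re]
    cases abs_cases w.im <;> linarith
  calc Complex.abs ((Complex.exp (w * Complex.I) + Complex.exp (-w * Complex.I)) / 2)
      = Complex.abs (Complex.exp (w * Complex.I) + Complex.exp (-w * Complex.I)) / 2 := by
        simp [map_div₀]
    _ ≤ (Real.exp |w.im| + Real.exp |w.im|) / 2 := by
        have := Complex.abs.add_le (Complex.exp (w * Complex.I)) (Complex.exp (-w * Complex.I))
        linarith
    _ = Real.exp |w.im| := by ring


lemma abs_sin_le (w : ℂ) : Complex.abs (Complex.sin w) ≤ Real.exp |w.im| := by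
  rw [Complex.sin]
  have h1 : Complex.abs (Complex.exp (w * Complex.I)) ≤ Real.exp |w.im| := by
    rw [Complex.abs_exp]
    apply Real.exp_le_exp.2
    simp [Complex.mul_re]
    cases abs_cases w.im <;> linarith
  have h2 : Complex.abs (Complex.exp (-w * Complex.I)) ≤ Real.exp |w.im| := by
    rw [Complex.abs_exp]
    apply Real.exp_le_exp.2
    simp [Complex.mul_re]
    cases abs_cases w.im <;> linarith
  calc Complex.abs ((Complex.exp (-w * Complex.I) - Complex.exp (w * Complex.I)) * Complex.I / 2)
      = Complex.abs (Complex.exp (-w * Complex.I) - Complex.exp (w * Complex.I)) / 2 := by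
        simp [map_div₀]
    _ ≤ (Real.exp |w.im| + Real.exp |w.im|) / 2 := by
        have := Complex.abs.sub_le_add (Complex.exp (-w * Complex.I)) (Complex.exp (w * Complex.I))
        linarith
    _ = Real.exp |w.im| := by ring


lemma sin_sub_self_le {w : ℂ} (hw : Complex.abs w ≤ 1) :
    Complex.abs (Complex.sin w - w) ≤ Complex.abs w ^ 3 := by
  have h3 : (0:ℕ) < 3 := by norm_num
  have hwI : Complex.abs (w * Complex.I) ≤ 1 := by simpa using hw
  have hwI' : Complex.abs (-w * Complex.I) ≤ 1 := by simpa using hw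
  have e1 := Complex.exp_bound hwI h3
  have e2 := Complex.exp_bound hwI' h3
  have s1 : ∑ m ∈ Finset.range 3, (w * Complex.I) ^ m / m.factorial
      = 1 + w * Complex.I - w ^ 2 / 2 := by
    simp [Finset.sum_range_succ, Nat.factorial, mul_pow, Complex.I_sq]
    ring
  have s2 : ∑ m ∈ Finset.range 3, (-w * Complex.I) ^ m / m.factorial
      = 1 - w * Complex.I - w ^ 2 / 2 := by
    simp [Finset.sum_range_succ, Nat.factorial, mul_pow, Complex.I_sq]
    ring
  rw [s1] at e1; rw [s2] at e2
  have hc : (Complex.abs (w * Complex.I)) ^ 3 * ((Nat.succ 3) * (((3:ℕ).factorial : ℝ) * (3:ℕ))⁻¹)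
      = Complex.abs w ^ 3 * (2/9) := by
    norm_num [Nat.factorial]
  have hc' : (Complex.abs (-w * Complex.I)) ^ 3 * ((Nat.succ 3) * (((3:ℕ).factorial : ℝ) * (3:ℕ))⁻¹)
      = Complex.abs w ^ 3 * (2/9) := by
    norm_num [Nat.factorial]
  have e1' : Complex.abs (Complex.exp (w * Complex.I) - (1 + w * Complex.I - w ^ 2 / 2))
      ≤ Complex.abs w ^ 3 * (2/9) := by
    refine le_trans e1 (le_of_eq ?_)
    rw [← hc]; rfl
  have e2' : Complex.abs (Complex.exp (-w * Complex.I) - (1 - w * Complex.I - w ^ 2 / 2))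
      ≤ Complex.abs w ^ 3 * (2/9) := by
    refine le_trans e2 (le_of_eq ?_)
    rw [← hc']; rfl
  have key : Complex.sin w - w
      = ((Complex.exp (-w * Complex.I) - (1 - w * Complex.I - w ^ 2 / 2))
        - (Complex.exp (w * Complex.I) - (1 + w * Complex.I - w ^ 2 / 2))) * Complex.I / 2 := by
    rw [Complex.sin]
    ring_nf
    rw [Complex.I_sq]
    ring
  rw [key]
  have h0 : (0:ℝ) ≤ Complex.abs w ^ 3 := by positivity
  calc Complex.abs _ = Complex.abs ((Complex.exp (-w * Complex.I) - (1 - w * Complex.I - w ^ 2 / 2))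
        - (Complex.exp (w * Complex.I) - (1 + w * Complex.I - w ^ 2 / 2))) / 2 := by
        rw [map_div₀, map_mul]; simp
    _ ≤ (Complex.abs w ^ 3 * (2/9) + Complex.abs w ^ 3 * (2/9)) / 2 := by
        have := Complex.abs.sub_le_add
          (Complex.exp (-w * Complex.I) - (1 - w * Complex.I - w ^ 2 / 2))
          (Complex.exp (w * Complex.I) - (1 + w * Complex.I - w ^ 2 / 2))
        linarith
    _ ≤ Complex.abs w ^ 3 := by linarith


lemma abs_sin_le_two {w : ℂ} (hw : Complex.abs w ≤ 1) :
    Complex.abs (Complex.sin w) ≤ 2 * Complex.abs w := by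
  have h := sin_sub_self_le hw
  have h0 := Complex.abs.nonneg w
  have h2 : Complex.abs w ^ 3 ≤ Complex.abs w := by
    have hsq : Complex.abs w ^ 2 ≤ 1 := by nlinarith
    nlinarith
  calc Complex.abs (Complex.sin w) ≤ Complex.abs (Complex.sin w - w) + Complex.abs w := by
        simpa using Complex.abs.add_le (Complex.sin w - w) w
    _ ≤ 2 * Complex.abs w := by linarith


lemma cos_diff {b : ℝ} (u v : ℂ) (hb : 0 ≤ b) (hu : |u.im| ≤ b) (hv : |v.im| ≤ b)
    (hd : Complex.abs (u - v) ≤ 2) :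
    Complex.abs (Complex.cos u - Complex.cos v) ≤ 2 * Real.exp b * Complex.abs (u - v) := by
  rw [Complex.cos_sub_cos]
  rw [map_mul, map_mul]
  have h1 : Complex.abs (Complex.sin ((u + v) / 2)) ≤ Real.exp b := by
    refine (abs_sin_le _).trans (Real.exp_le_exp.2 ?_)
    have : ((u + v) / 2).im = (u.im + v.im) / 2 := by
      simp [Complex.div_im, Complex.add_im]
      try ring
    rw [this]
    rw [abs_div]
    cases abs_cases u.im <;> cases abs_cases v.im <;> cases abs_cases ((u.im + v.im)) <;>
      simp [abs_of_nonneg, abs_of_nonpos] <;> linarith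
  have h2 : Complex.abs (Complex.sin ((u - v) / 2)) ≤ Complex.abs (u - v) := by
    have hle : Complex.abs ((u - v) / 2) ≤ 1 := by
      rw [map_div₀]
      simp
      linarith [show ‖u - v‖ ≤ 2 from hd]
    refine (abs_sin_le_two hle).trans ?_
    rw [map_div₀]
    simp
    linarith [Complex.abs.nonneg (u - v)]
  have hm : Complex.abs (-2 : ℂ) = 2 := by norm_num
  rw [hm]
  calc 2 * Complex.abs (Complex.sin ((u + v) / 2)) * Complex.abs (Complex.sin ((u - v) / 2))
      ≤ 2 * Real.exp b * Complex.abs (u - v) := by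
        have e0 : (0:ℝ) < Real.exp b := Real.exp_pos b
        have := Complex.abs.nonneg (Complex.sin ((u - v) / 2))
        have := Complex.abs.nonneg (Complex.sin ((u + v) / 2))
        nlinarith


lemma abs_le_sin {δ : ℂ} (h : |δ.re| ≤ Real.pi / 2) :
    Complex.abs δ ≤ Real.pi / 2 * Complex.abs (Complex.sin δ) := by
  set a := δ.re
  set c := δ.im
  have hπ := Real.pi_pos
  have hs : Complex.sin δ = Real.sin a * Real.cosh c + Real.cos a * Real.sinh c * Complex.I := by
    have : δ = (a : ℂ) + (c : ℂ) * Complex.I := (Complex.re_add_im δ).symm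
    rw [this, Complex.sin_add_mul_I]
    simp [Complex.ofReal_sin, Complex.ofReal_cos, Complex.ofReal_cosh, Complex.ofReal_sinh]
  have hsq : Complex.abs (Complex.sin δ) ^ 2 = Real.sin a ^ 2 + Real.sinh c ^ 2 := by
    rw [hs]
    rw [← Complex.normSq_eq_abs]
    have := Complex.normSq_add_mul_I (Real.sin a * Real.cosh c) (Real.cos a * Real.sinh c)
    push_cast at this ⊢
    rw [this]
    have hch : Real.cosh c ^ 2 = 1 + Real.sinh c ^ 2 := by
      have := Real.cosh_sq c; linarith
    have hsc : Real.cos a ^ 2 = 1 - Real.sin a ^ 2 := by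
      have := Real.sin_sq_add_cos_sq a; linarith
    nlinarith [Real.sinh_sq c]
  have habs : Complex.abs δ ^ 2 = a ^ 2 + c ^ 2 := by
    rw [← Complex.normSq_eq_abs, Complex.normSq_apply]; ring
  have hsin : (2 / Real.pi) * |a| ≤ Real.sin |a| := by
    apply Real.mul_le_sin (abs_nonneg a) h
  have hsin2 : (2 / Real.pi) ^ 2 * a ^ 2 ≤ Real.sin a ^ 2 := by
    have h1 : Real.sin a ^ 2 = Real.sin |a| ^ 2 := by
      cases abs_cases a with
      | inl h => rw [h.1]
      | inr h => rw [h.1, Real.sin_neg]; ring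
    have h2 : (0:ℝ) ≤ (2 / Real.pi) * |a| := by positivity
    nlinarith [abs_nonneg a, sq_abs a]
  have hsinh2 : c ^ 2 ≤ Real.sinh c ^ 2 := by
    have h1 : |c| ≤ Real.sinh |c| := by
      rcases eq_or_lt_of_le (abs_nonneg c) with h' | h'
      · rw [← h', Real.sinh_zero]
      · exact le_of_lt (Real.self_lt_sinh_iff.2 h')
    have h2 : Real.sinh c ^ 2 = Real.sinh |c| ^ 2 := by
      cases abs_cases c with
      | inl h => rw [h.1]
      | inr h => rw [h.1, Real.sinh_neg]; ring
    nlinarith [abs_nonneg c, sq_abs c]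
  -- (2/π)^2 * (a^2+c^2) ≤ sin^2 + sinh^2
  have hpi2 : (2 / Real.pi) ^ 2 ≤ 1 := by
    have : (2:ℝ) ≤ Real.pi := by linarith [Real.pi_gt_three]
    rw [div_pow]
    rw [div_le_one (by positivity)]
    nlinarith
  have key : ((2 / Real.pi) * Complex.abs δ) ^ 2 ≤ Complex.abs (Complex.sin δ) ^ 2 := by
    rw [mul_pow, habs, hsq]
    nlinarith
  have h2π : (0:ℝ) ≤ (2 / Real.pi) * Complex.abs δ := by positivity
  have hle : (2 / Real.pi) * Complex.abs δ ≤ Complex.abs (Complex.sin δ) := by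
    nlinarith [Complex.abs.nonneg (Complex.sin δ)]
  calc Complex.abs δ = (Real.pi / 2) * ((2 / Real.pi) * Complex.abs δ) := by
        field_simp
    _ ≤ Real.pi / 2 * Complex.abs (Complex.sin δ) := by
        apply mul_le_mul_of_nonneg_left hle (by positivity)


lemma ext01_measurable {u : ℝ → ℂ} (hu : ContinuousOn u (Set.Icc 0 1)) :
    Measurable (ext01 u) := by
  have h : ext01 u = (Set.Ioo (0:ℝ) 1).piecewise u (fun _ => (0:ℂ)) := by
    funext x
    by_cases hx : x ∈ Set.Ioo (0:ℝ) 1 <;>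
      simp [ext01, Set.indicator, Set.piecewise, hx]
  rw [h]
  exact ContinuousOn.measurable_piecewise
    (hu.mono (Set.Ioo_subset_Icc_self)) continuousOn_const measurableSet_Ioo


lemma ext01_bound {u : ℝ → ℂ} {M : ℝ} (hM : 0 ≤ M)
    (h : ∀ x ∈ Set.Icc (0:ℝ) 1, Complex.abs (u x) ≤ M) :
    ∀ s, Complex.abs (ext01 u s) ≤ M := by
  intro s
  by_cases hs : s ∈ Set.Ioo (0:ℝ) 1
  · rw [ext01, Set.indicator_of_mem hs]
    exact h s (Set.Ioo_subset_Icc_self hs)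
  · rw [ext01, Set.indicator_of_notMem hs]
    simpa using hM


lemma ext01_diff_bound {u v : ℝ → ℂ} {M : ℝ} (hM : 0 ≤ M)
    (h : ∀ x ∈ Set.Icc (0:ℝ) 1, Complex.abs (u x - v x) ≤ M) :
    ∀ s, Complex.abs (ext01 u s - ext01 v s) ≤ M := by
  intro s
  by_cases hs : s ∈ Set.Ioo (0:ℝ) 1
  · rw [ext01, ext01, Set.indicator_of_mem hs, Set.indicator_of_mem hs]
    exact h s (Set.Ioo_subset_Icc_self hs)
  · rw [ext01, ext01, Set.indicator_of_notMem hs, Set.indicator_of_notMem hs]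
    simpa using hM


lemma ae_bound_of_eLpNorm {V : ℝ → ℂ}
    (hV : eLpNorm V ⊤ (volume.restrict (Set.Ioo (0:ℝ) 1)) ≠ ⊤) :
    ∀ᵐ t : ℝ, t ∈ Set.Ioc (0:ℝ) 1 →
      Complex.abs (V t) ≤ (eLpNorm V ⊤ (volume.restrict (Set.Ioo (0:ℝ) 1))).toReal := by
  set KV := (eLpNorm V ⊤ (volume.restrict (Set.Ioo (0:ℝ) 1))).toReal
  have h1 : ∀ᵐ t ∂(volume.restrict (Set.Ioo (0:ℝ) 1)), Complex.abs (V t) ≤ KV := by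
    have h2 := MeasureTheory.ae_le_eLpNormEssSup (f := V) (μ := volume.restrict (Set.Ioo (0:ℝ) 1))
    filter_upwards [h2] with t ht
    have h3 : eLpNormEssSup V (volume.restrict (Set.Ioo (0:ℝ) 1))
        = eLpNorm V ⊤ (volume.restrict (Set.Ioo (0:ℝ) 1)) := by
      rw [MeasureTheory.eLpNorm_exponent_top]
    rw [h3] at ht
    have h4 : ((‖V t‖₊ : ℝ≥0∞)).toReal ≤ KV := ENNReal.toReal_mono hV ht
    simpa using h4
  have h5 : ∀ᵐ t : ℝ, t ∈ Set.Ioo (0:ℝ) 1 → Complex.abs (V t) ≤ KV :=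
    (ae_restrict_iff' measurableSet_Ioo).1 h1
  have h6 : ∀ᵐ t : ℝ, t ≠ 1 := by
    have : (volume : Measure ℝ) {(1:ℝ)} = 0 := Real.volume_singleton
    rw [ae_iff]
    simpa [Ne, Classical.not_not] using this
  filter_upwards [h5, h6] with t h5t h6t ht
  apply h5t
  rcases lt_or_eq_of_le ht.2 with h' | h'
  · exact ⟨ht.1, h'⟩
  · exact absurd h' h6t


lemma sin_shift (n : ℕ) (δ : ℂ) :
    Complex.sin ((Real.pi : ℂ) * n + δ) = (-1) ^ n * Complex.sin δ := by
  have : (Real.pi : ℂ) * n + δ = δ + n * Real.pi := by ring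
  rw [this, Complex.sin_antiperiodic.add_nat_mul_eq]
  try simp


lemma cos_flip (n : ℕ) (t : ℝ) :
    Real.cos (Real.pi * n * (1 - t)) = (-1) ^ n * Real.cos (Real.pi * n * t) := by
  have : Real.pi * n * (1 - t) = n * Real.pi - Real.pi * n * t := by ring
  rw [this, Real.cos_nat_mul_pi_sub]


end Aux17

open Aux17

set_option maxHeartbeats 1000000 in
/-- Two-term uniform spectral asymptotics: eigenvalue parameters `λ = z²`
located near `πn` satisfy
`λ = π²n² + 2∫₀^{1−α} V cos(πnt)cos(πn(t+α)) + 2∫_β^1 Q cos(πnt)cos(πn(t−β)) + O(1/n)`,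
uniformly in `α, β`, with constants depending only on `K`. -/
theorem stmt_17 (K : ℝ) (hK : 0 ≤ K) :
    ∃ C : ℝ, 0 < C ∧ ∃ n₀ : ℕ, 0 < n₀ ∧
      ∀ V Q : ℝ → ℂ, Measurable V → Measurable Q →
        eLpNorm V ⊤ (volume.restrict (Set.Ioo (0:ℝ) 1)) ≠ ⊤ →
        eLpNorm Q ⊤ (volume.restrict (Set.Ioo (0:ℝ) 1)) ≠ ⊤ →
        Knorm V Q = K →
        ∀ α β : ℝ, α ∈ Set.Icc (0:ℝ) 1 → β ∈ Set.Icc (0:ℝ) 1 →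
        ∀ n : ℕ, n₀ ≤ n →
        ∀ z : ℂ, |z.re - Real.pi * n| ≤ Real.pi / 2 →
          |z.im| ≤ Real.sqrt 2 * K →
        ∀ φ : ℝ → ℂ, ContinuousOn φ (Set.Icc (0:ℝ) 1) →
          (∀ x ∈ Set.Icc (0:ℝ) 1,
            φ x = Complex.cos (z * ↑x)
              + z⁻¹ * ∫ t in (0:ℝ)..x, Bop V Q α β φ t * Complex.sin (z * (↑x - ↑t))) →
          (-z * Complex.sin z
            + ∫ t in (0:ℝ)..1, Bop V Q α β φ t * Complex.cos (z * (1 - ↑t)) = 0) →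
          ‖(z ^ 2 - ((Real.pi : ℂ) * n) ^ 2
            - 2 * (∫ t in (0:ℝ)..(1 - α),
                V t * Complex.cos ((Real.pi * n * t : ℝ))
                  * Complex.cos ((Real.pi * n * (t + α) : ℝ)))
            - 2 * (∫ t in β..1,
                Q t * Complex.cos ((Real.pi * n * t : ℝ))
                  * Complex.cos ((Real.pi * n * (t - β) : ℝ))))‖
            ≤ C / n := by
  have hπ := Real.pi_pos
  have hπ3 : (3:ℝ) < Real.pi := by linarith [Real.pi_gt_three]
  set b : ℝ := Real.sqrt 2 * K with hb_def
  have hb : 0 ≤ b := by positivity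
  set Eb : ℝ := Real.exp b with hEb_def
  have hEb1 : 1 ≤ Eb := Real.one_le_exp hb
  have hEb0 : 0 < Eb := by linarith
  set c2 : ℝ := 2 * K * Eb ^ 2 with hc2_def
  have hc2 : 0 ≤ c2 := by positivity
  set c3 : ℝ := Real.pi * K * Eb ^ 2 with hc3_def
  have hc3 : 0 ≤ c3 := by positivity
  set c6 : ℝ := c2 + 2 * Eb * c3 with hc6_def
  have hc6 : 0 ≤ c6 := by positivity
  set c4 : ℝ := K * c6 with hc4_def
  have hc4 : 0 ≤ c4 := by positivity
  set c5 : ℝ := c4 * Eb + 2 * K * Eb * c3 with hc5_def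
  have hc5 : 0 ≤ c5 := by positivity
  set C : ℝ := (3 * Real.pi + 2 * b) * c3 ^ 3 + 2 * c5 + c3 ^ 2 + 1 with hC_def
  have hCpos : 0 < C := by positivity
  refine ⟨C, hCpos, ⌈2 * K * Eb + c3⌉₊ + 1, Nat.succ_pos _, ?_⟩
  intro V Q hVm hQm hVfin hQfin hKnorm α β hα hβ n hn z hzre hzim φ hφc hVolt hChar
  set Kv : ℝ := (eLpNorm V ⊤ (volume.restrict (Set.Ioo (0:ℝ) 1))).toReal with hKv_def
  set Kq : ℝ := (eLpNorm Q ⊤ (volume.restrict (Set.Ioo (0:ℝ) 1))).toReal with hKq_def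
  have hKv : 0 ≤ Kv := ENNReal.toReal_nonneg
  have hKq : 0 ≤ Kq := ENNReal.toReal_nonneg
  have hKsum : Kv + Kq = K := hKnorm
  have hVae := ae_bound_of_eLpNorm hVfin
  have hQae := ae_bound_of_eLpNorm hQfin
  rw [← hKv_def] at hVae
  rw [← hKq_def] at hQae
  -- basic facts about n and z
  have hn1 : (1:ℝ) ≤ (n:ℝ) := by
    have : 1 ≤ n := le_trans (Nat.le_add_left 1 _) hn
    exact_mod_cast this
  have hnpos : (0:ℝ) < (n:ℝ) := by linarith
  have hnK : 2 * K * Eb + c3 ≤ (n:ℝ) := by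
    have h1 : (2 * K * Eb + c3 : ℝ) ≤ ⌈2 * K * Eb + c3⌉₊ := Nat.le_ceil _
    have h2 : (⌈2 * K * Eb + c3⌉₊ + 1 : ℕ) ≤ n := hn
    have h3 : ((⌈2 * K * Eb + c3⌉₊ : ℝ) + 1) ≤ (n:ℝ) := by exact_mod_cast h2
    linarith
  have hnK' : 2 * K * Eb ≤ (n:ℝ) := by linarith
  have hnc3 : c3 ≤ (n:ℝ) := by
    have h0 : (0:ℝ) ≤ 2 * K * Eb := by positivity
    linarith
  have hzre' : Real.pi * n - Real.pi / 2 ≤ z.re := by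
    have := abs_le.1 hzre
    linarith [this.1]
  have hzre'' : z.re ≤ Real.pi * n + Real.pi / 2 := by
    have := abs_le.1 hzre
    linarith [this.2]
  have hπn : (0:ℝ) ≤ Real.pi * n := by positivity
  have hzn : (n:ℝ) ≤ Complex.abs z := by
    have e1 : (Real.pi - 1) * 1 ≤ (Real.pi - 1) * n := by
      apply mul_le_mul_of_nonneg_left hn1; linarith
    have h1 : (n:ℝ) ≤ z.re := by nlinarith [hzre', e1, hπ3]
    exact le_trans h1 (Complex.re_le_norm z)
  have hz0 : z ≠ 0 := by
    intro h
    rw [h] at hzn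
    simp at hzn
    linarith
  have hzup : Complex.abs z ≤ (3 * Real.pi / 2 + b) * n := by
    have h1 := Complex.norm_le_abs_re_add_abs_im z
    have h2 : |z.re| ≤ Real.pi * n + Real.pi / 2 := by
      rw [abs_le]
      constructor
      · linarith
      · linarith
    have h3 : Real.pi / 2 ≤ Real.pi / 2 * n := le_mul_of_one_le_right (by positivity) hn1
    have h4 : b ≤ b * n := le_mul_of_one_le_right hb hn1
    have h5 : (3 * Real.pi / 2 + b) * n = Real.pi * n + Real.pi / 2 * n + b * n := by ring
    have h6 : |z.im| ≤ b := hzim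
    show ‖z‖ ≤ _; linarith
  -- sup bound for φ
  obtain ⟨x₀, hx₀, hmax⟩ : ∃ x₀ ∈ Set.Icc (0:ℝ) 1, ∀ x ∈ Set.Icc (0:ℝ) 1,
      Complex.abs (φ x) ≤ Complex.abs (φ x₀) := by
    obtain ⟨x₀, hx₀, hmax⟩ := isCompact_Icc.exists_isMaxOn (⟨0, by norm_num⟩ : (Set.Icc (0:ℝ) 1).Nonempty)
      (Complex.continuous_abs.comp_continuousOn hφc)
    exact ⟨x₀, hx₀, fun x hx => hmax hx⟩
  set M : ℝ := Complex.abs (φ x₀) with hM_def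
  have hM0 : 0 ≤ M := Complex.abs.nonneg _
  have hext : ∀ s, Complex.abs (ext01 φ s) ≤ M := ext01_bound hM0 hmax
  -- strip bounds for cos/sin
  have himz : ∀ r : ℝ, 0 ≤ r → r ≤ 1 → |(z * (r:ℂ)).im| ≤ b := by
    intro r h0 h1
    have he : (z * (r:ℂ)).im = z.im * r := by simp
    rw [he, abs_mul, abs_of_nonneg h0]
    calc |z.im| * r ≤ b * 1 := mul_le_mul hzim h1 h0 hb
      _ = b := by ring
  have hcosb : ∀ r : ℝ, 0 ≤ r → r ≤ 1 → Complex.abs (Complex.cos (z * (r:ℂ))) ≤ Eb := by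
    intro r h0 h1
    exact (abs_cos_le _).trans (Real.exp_le_exp.2 (himz r h0 h1))
  have hsinb : ∀ r : ℝ, 0 ≤ r → r ≤ 1 → Complex.abs (Complex.sin (z * (r:ℂ))) ≤ Eb := by
    intro r h0 h1
    exact (abs_sin_le _).trans (Real.exp_le_exp.2 (himz r h0 h1))
  -- a.e. bound for Bop φ
  have hBφ : ∀ᵐ t : ℝ, t ∈ Set.Ioc (0:ℝ) 1 → Complex.abs (Bop V Q α β φ t) ≤ K * M := by
    filter_upwards [hVae, hQae] with t hV' hQ' ht
    have h1 := hV' ht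
    have h2 := hQ' ht
    calc Complex.abs (Bop V Q α β φ t)
        ≤ Complex.abs (V t * ext01 φ (t + α)) + Complex.abs (Q t * ext01 φ (t - β)) :=
          Complex.abs.add_le _ _
      _ = Complex.abs (V t) * Complex.abs (ext01 φ (t + α))
          + Complex.abs (Q t) * Complex.abs (ext01 φ (t - β)) := by rw [map_mul, map_mul]
      _ ≤ Kv * M + Kq * M := by
          apply add_le_add
          · exact mul_le_mul h1 (hext _) (Complex.abs.nonneg _) hKv
          · exact mul_le_mul h2 (hext _) (Complex.abs.nonneg _) hKq
      _ = K * M := by rw [← hKsum]; ring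
  -- Volterra bound
  have hVoltb : ∀ x ∈ Set.Icc (0:ℝ) 1,
      Complex.abs (φ x - Complex.cos (z * (x:ℂ))) ≤ K * M * Eb / Complex.abs z := by
    intro x hx
    have heq : φ x - Complex.cos (z * (x:ℂ))
        = z⁻¹ * ∫ t in (0:ℝ)..x, Bop V Q α β φ t * Complex.sin (z * ((x:ℂ) - (t:ℂ))) := by
      rw [hVolt x hx]; ring
    rw [heq, map_mul, map_inv₀]
    have hint : ‖∫ t in (0:ℝ)..x, Bop V Q α β φ t * Complex.sin (z * ((x:ℂ) - (t:ℂ)))‖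
        ≤ (K * M * Eb) * |x - 0| := by
      apply intervalIntegral.norm_integral_le_of_norm_le_const_ae
      filter_upwards [hBφ] with t htB htu
      rw [Set.uIoc_of_le hx.1] at htu
      have ht1 : t ∈ Set.Ioc (0:ℝ) 1 := ⟨htu.1, le_trans htu.2 hx.2⟩
      have hB := htB ht1
      have hco : ((x:ℂ) - (t:ℂ)) = ((x - t : ℝ) : ℂ) := by push_cast; ring
      have hsin : Complex.abs (Complex.sin (z * ((x:ℂ) - (t:ℂ)))) ≤ Eb := by
        rw [hco]
        exact hsinb (x - t) (by linarith [htu.2]) (by linarith [htu.1, hx.2])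
      calc ‖Bop V Q α β φ t * Complex.sin (z * ((x:ℂ) - (t:ℂ)))‖
          = Complex.abs (Bop V Q α β φ t) * Complex.abs (Complex.sin (z * ((x:ℂ) - (t:ℂ)))) := by
            rw [← Complex.norm_eq_abs, ← Complex.norm_eq_abs, ← norm_mul]
        _ ≤ (K * M) * Eb := mul_le_mul hB hsin (Complex.abs.nonneg _) (by positivity)
    have habs : |x - 0| ≤ 1 := by
      rw [sub_zero, abs_of_nonneg hx.1]; exact hx.2
    have h2 : ‖∫ t in (0:ℝ)..x, Bop V Q α β φ t * Complex.sin (z * ((x:ℂ) - (t:ℂ)))‖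
        ≤ K * M * Eb := by
      calc _ ≤ (K * M * Eb) * |x - 0| := hint
        _ ≤ (K * M * Eb) * 1 := by
            apply mul_le_mul_of_nonneg_left habs (by positivity)
        _ = K * M * Eb := by ring
    rw [Complex.norm_eq_abs] at h2
    have hzpos : (0:ℝ) < Complex.abs z := by
      rw [AbsoluteValue.pos_iff]; exact hz0
    calc (Complex.abs z)⁻¹ * Complex.abs (∫ t in (0:ℝ)..x, Bop V Q α β φ t * Complex.sin (z * ((x:ℂ) - (t:ℂ))))
        ≤ (Complex.abs z)⁻¹ * (K * M * Eb) := by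
          apply mul_le_mul_of_nonneg_left h2 (by positivity)
      _ = K * M * Eb / Complex.abs z := by ring
  have hzpos : (0:ℝ) < Complex.abs z := by
    rw [AbsoluteValue.pos_iff]; exact hz0
  -- bound M ≤ 2 Eb
  have hM2 : M ≤ 2 * Eb := by
    have h1 := hVoltb x₀ hx₀
    have h2 : M ≤ Complex.abs (φ x₀ - Complex.cos (z * (x₀:ℂ))) + Complex.abs (Complex.cos (z * (x₀:ℂ))) := by
      calc M = Complex.abs ((φ x₀ - Complex.cos (z * (x₀:ℂ))) + Complex.cos (z * (x₀:ℂ))) := by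
            rw [hM_def]; congr 1; ring
        _ ≤ _ := Complex.abs.add_le _ _
    have h3 : Complex.abs (Complex.cos (z * (x₀:ℂ))) ≤ Eb := hcosb x₀ hx₀.1 hx₀.2
    have h4 : K * M * Eb / Complex.abs z ≤ K * M * Eb / n := by
      apply div_le_div_of_nonneg_left (by positivity) hnpos hzn
    have h5 : K * M * Eb / n ≤ M / 2 := by
      rw [div_le_div_iff₀ hnpos (by norm_num : (0:ℝ) < 2)]
      calc K * M * Eb * 2 = M * (2 * K * Eb) := by ring
        _ ≤ M * n := mul_le_mul_of_nonneg_left hnK' hM0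
    linarith
  have hnumKM : K * M * Eb ≤ c2 := by
    have h := mul_le_mul_of_nonneg_left hM2 (mul_nonneg hK hEb0.le)
    calc K * M * Eb = K * Eb * M := by ring
      _ ≤ K * Eb * (2 * Eb) := h
      _ = c2 := by rw [hc2_def]; ring
  -- φ is close to cos(z·)
  have hφcos : ∀ x ∈ Set.Icc (0:ℝ) 1,
      Complex.abs (φ x - Complex.cos (z * (x:ℂ))) ≤ c2 / n := by
    intro x hx
    refine (hVoltb x hx).trans ?_
    exact div_le_div₀ hc2 hnumKM hnpos hzn
  -- characteristic equation analysis
  set R : ℂ := ∫ t in (0:ℝ)..1, Bop V Q α β φ t * Complex.cos (z * (1 - (t:ℂ))) with hR_def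
  have hR : z * Complex.sin z = R := by linear_combination -hChar
  have hRb : Complex.abs R ≤ K * M * Eb := by
    rw [hR_def, ← Complex.norm_eq_abs]
    have hint : ‖∫ t in (0:ℝ)..1, Bop V Q α β φ t * Complex.cos (z * (1 - (t:ℂ)))‖
        ≤ (K * M * Eb) * |1 - (0:ℝ)| := by
      apply intervalIntegral.norm_integral_le_of_norm_le_const_ae
      filter_upwards [hBφ] with t htB htu
      rw [Set.uIoc_of_le (by norm_num : (0:ℝ) ≤ 1)] at htu
      have hB := htB htu
      have hco : ((1:ℂ) - (t:ℂ)) = ((1 - t : ℝ) : ℂ) := by push_cast; ring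
      have hcos : Complex.abs (Complex.cos (z * ((1:ℂ) - (t:ℂ)))) ≤ Eb := by
        rw [hco]
        exact hcosb (1 - t) (by linarith [htu.2]) (by linarith [htu.1])
      calc ‖Bop V Q α β φ t * Complex.cos (z * ((1:ℂ) - (t:ℂ)))‖
          = Complex.abs (Bop V Q α β φ t) * Complex.abs (Complex.cos (z * ((1:ℂ) - (t:ℂ)))) := by
            rw [← Complex.norm_eq_abs, ← Complex.norm_eq_abs, ← norm_mul]
        _ ≤ (K * M) * Eb := mul_le_mul hB hcos (Complex.abs.nonneg _) (by positivity)
    simpa using hint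
  have hsz : Complex.abs (Complex.sin z) ≤ c2 / n := by
    have h1 : Complex.abs R = Complex.abs z * Complex.abs (Complex.sin z) := by
      rw [← hR, map_mul]
    have h2 : Complex.abs (Complex.sin z) = Complex.abs R / Complex.abs z := by
      rw [h1]; field_simp
    rw [h2]
    exact div_le_div₀ hc2 (hRb.trans hnumKM) hnpos hzn
  -- the shift δ
  set δ : ℂ := z - (Real.pi : ℂ) * n with hδ_def
  have hδre : |δ.re| ≤ Real.pi / 2 := by
    have h1 : δ.re = z.re - Real.pi * n := by
      rw [hδ_def]
      simp [Complex.sub_re, Complex.mul_re]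
    rw [h1]
    exact hzre
  have hz_eq : z = (Real.pi : ℂ) * n + δ := by rw [hδ_def]; ring
  have hsinshift : Complex.sin z = (-1) ^ n * Complex.sin δ := by
    nth_rewrite 1 [hz_eq]
    exact sin_shift n δ
  have hsinδ : Complex.abs (Complex.sin δ) ≤ c2 / n := by
    have h1 : Complex.abs (Complex.sin z) = Complex.abs (Complex.sin δ) := by
      rw [hsinshift, map_mul, map_pow]
      simp
    rw [← h1]
    exact hsz
  have hδb : Complex.abs δ ≤ c3 / n := by
    have h1 := abs_le_sin hδre
    have h2 : Real.pi / 2 * Complex.abs (Complex.sin δ) ≤ Real.pi / 2 * (c2 / n) :=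
      mul_le_mul_of_nonneg_left hsinδ (by positivity)
    have h3 : Real.pi / 2 * (c2 / n) = c3 / n := by
      rw [hc2_def, hc3_def]; ring
    linarith
  have hδ1 : Complex.abs δ ≤ 1 := by
    refine hδb.trans ?_
    rw [div_le_one hnpos]
    exact hnc3
  have hδ0 : 0 ≤ Complex.abs δ := Complex.abs.nonneg δ
  -- the comparison frequency
  set ψ : ℝ → ℂ := fun s => Complex.cos (((Real.pi * n * s : ℝ)) : ℂ) with hψ_def
  have hψcont : ContinuousOn ψ (Set.Icc (0:ℝ) 1) := by
    apply Continuous.continuousOn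
    have hcmul : Continuous fun s : ℝ => Real.pi * n * s := continuous_const.mul continuous_id
    exact Complex.continuous_cos.comp (Complex.continuous_ofReal.comp hcmul)
  have hψ1 : ∀ x ∈ Set.Icc (0:ℝ) 1, Complex.abs (ψ x) ≤ 1 := by
    intro x _
    rw [hψ_def]
    simp only [← Complex.ofReal_cos, Complex.abs_ofReal]
    exact Real.abs_cos_le_one _
  have hψdiff : ∀ s ∈ Set.Icc (0:ℝ) 1,
      Complex.abs (Complex.cos (z * (s:ℂ)) - ψ s) ≤ 2 * Eb * Complex.abs δ := by
    intro s hs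
    have hd : z * (s:ℂ) - ((Real.pi * n * s : ℝ) : ℂ) = δ * (s:ℂ) := by
      rw [hδ_def]; push_cast; ring
    have habs : Complex.abs (z * (s:ℂ) - ((Real.pi * n * s : ℝ) : ℂ)) = Complex.abs δ * s := by
      rw [hd, map_mul, Complex.abs_ofReal, abs_of_nonneg hs.1]
    have h2 : Complex.abs (z * (s:ℂ) - ((Real.pi * n * s : ℝ) : ℂ)) ≤ 2 := by
      rw [habs]
      have := mul_le_mul hδ1 hs.2 hs.1 (by norm_num : (0:ℝ) ≤ 1)
      linarith
    have h3 := cos_diff (b := b) (z * (s:ℂ)) ((Real.pi * n * s : ℝ) : ℂ) hb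
      (himz s hs.1 hs.2) (by rw [Complex.ofReal_im]; simp [hb]) h2
    rw [habs] at h3
    refine h3.trans ?_
    have : 2 * Real.exp b * (Complex.abs δ * s) ≤ 2 * Real.exp b * (Complex.abs δ * 1) := by
      apply mul_le_mul_of_nonneg_left _ (by positivity)
      exact mul_le_mul_of_nonneg_left hs.2 hδ0
    rw [hEb_def]
    linarith
  have hφψ : ∀ x ∈ Set.Icc (0:ℝ) 1, Complex.abs (φ x - ψ x) ≤ c6 / n := by
    intro x hx
    have h1 := hφcos x hx
    have h2 := hψdiff x hx
    have h3 : Complex.abs (φ x - ψ x)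
        ≤ Complex.abs (φ x - Complex.cos (z * (x:ℂ))) + Complex.abs (Complex.cos (z * (x:ℂ)) - ψ x) := by
      calc Complex.abs (φ x - ψ x)
          = Complex.abs ((φ x - Complex.cos (z * (x:ℂ))) + (Complex.cos (z * (x:ℂ)) - ψ x)) := by
            congr 1; ring
        _ ≤ _ := Complex.abs.add_le _ _
    have h4 : 2 * Eb * Complex.abs δ ≤ 2 * Eb * (c3 / n) :=
      mul_le_mul_of_nonneg_left hδb (by positivity)
    have h5 : c6 / n = c2 / n + 2 * Eb * (c3 / n) := by
      rw [hc6_def]; ring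
    linarith
  -- B-difference bound
  have hc6n : (0:ℝ) ≤ c6 / n := by positivity
  have hdiffs : ∀ s, Complex.abs (ext01 φ s - ext01 ψ s) ≤ c6 / n :=
    ext01_diff_bound hc6n hφψ
  have hextψ : ∀ s, Complex.abs (ext01 ψ s) ≤ 1 := ext01_bound (by norm_num) hψ1
  have hBdiff : ∀ᵐ t : ℝ, t ∈ Set.Ioc (0:ℝ) 1 →
      Complex.abs (Bop V Q α β φ t - Bop V Q α β ψ t) ≤ c4 / n := by
    filter_upwards [hVae, hQae] with t hV' hQ' ht
    have h1 := hV' ht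
    have h2 := hQ' ht
    have hid : Bop V Q α β φ t - Bop V Q α β ψ t
        = V t * (ext01 φ (t + α) - ext01 ψ (t + α))
          + Q t * (ext01 φ (t - β) - ext01 ψ (t - β)) := by
      simp only [Bop]; ring
    rw [hid]
    calc Complex.abs _
        ≤ Complex.abs (V t * (ext01 φ (t + α) - ext01 ψ (t + α)))
          + Complex.abs (Q t * (ext01 φ (t - β) - ext01 ψ (t - β))) := Complex.abs.add_le _ _
      _ = Complex.abs (V t) * Complex.abs (ext01 φ (t + α) - ext01 ψ (t + α))
          + Complex.abs (Q t) * Complex.abs (ext01 φ (t - β) - ext01 ψ (t - β)) := by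
          rw [map_mul, map_mul]
      _ ≤ Kv * (c6 / n) + Kq * (c6 / n) := by
          apply add_le_add
          · exact mul_le_mul h1 (hdiffs _) (Complex.abs.nonneg _) hKv
          · exact mul_le_mul h2 (hdiffs _) (Complex.abs.nonneg _) hKq
      _ = c4 / n := by rw [hc4_def, ← hKsum]; ring
  have hBψb : ∀ᵐ t : ℝ, t ∈ Set.Ioc (0:ℝ) 1 →
      Complex.abs (Bop V Q α β ψ t) ≤ K := by
    filter_upwards [hVae, hQae] with t hV' hQ' ht
    have h1 := hV' ht
    have h2 := hQ' ht
    calc Complex.abs (Bop V Q α β ψ t)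
        ≤ Complex.abs (V t * ext01 ψ (t + α)) + Complex.abs (Q t * ext01 ψ (t - β)) :=
          Complex.abs.add_le _ _
      _ = Complex.abs (V t) * Complex.abs (ext01 ψ (t + α))
          + Complex.abs (Q t) * Complex.abs (ext01 ψ (t - β)) := by rw [map_mul, map_mul]
      _ ≤ Kv * 1 + Kq * 1 := by
          apply add_le_add
          · exact mul_le_mul h1 (hextψ _) (Complex.abs.nonneg _) hKv
          · exact mul_le_mul h2 (hextψ _) (Complex.abs.nonneg _) hKq
      _ = K := by rw [← hKsum]; ring
  -- cos flip estimate
  have hflip : ∀ t ∈ Set.Icc (0:ℝ) 1,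
      Complex.abs (Complex.cos (z * (1 - (t:ℂ))) - (-1:ℂ) ^ n * ψ t) ≤ 2 * Eb * (c3 / n) := by
    intro t ht
    have hr0 : (0:ℝ) ≤ 1 - t := by linarith [ht.2]
    have hr1 : (1:ℝ) - t ≤ 1 := by linarith [ht.1]
    have hco : (1:ℂ) - (t:ℂ) = ((1 - t : ℝ) : ℂ) := by push_cast; ring
    have e2 : Complex.cos (((Real.pi * n * (1 - t) : ℝ)) : ℂ) = (-1:ℂ) ^ n * ψ t := by
      simp only [hψ_def]
      rw [← Complex.ofReal_cos, ← Complex.ofReal_cos, cos_flip n t]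
      push_cast
      ring
    have hd : z * ((1 - t : ℝ) : ℂ) - ((Real.pi * n * (1 - t) : ℝ) : ℂ) = δ * ((1 - t : ℝ) : ℂ) := by
      rw [hδ_def]; push_cast; ring
    have habs2 : Complex.abs (z * ((1 - t : ℝ) : ℂ) - ((Real.pi * n * (1 - t) : ℝ) : ℂ))
        = Complex.abs δ * (1 - t) := by
      rw [hd, map_mul, Complex.abs_ofReal, abs_of_nonneg hr0]
    have hle2 : Complex.abs (z * ((1 - t : ℝ) : ℂ) - ((Real.pi * n * (1 - t) : ℝ) : ℂ)) ≤ 2 := by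
      rw [habs2]
      have := mul_le_mul hδ1 hr1 hr0 (by norm_num : (0:ℝ) ≤ 1)
      linarith
    have h3 := cos_diff (b := b) (z * ((1 - t : ℝ) : ℂ)) ((Real.pi * n * (1 - t) : ℝ) : ℂ) hb
      (himz (1 - t) hr0 hr1) (by rw [Complex.ofReal_im]; simp [hb]) hle2
    rw [habs2] at h3
    rw [hco, ← e2]
    refine h3.trans ?_
    have h4 : Complex.abs δ * (1 - t) ≤ c3 / n := by
      have h5 : Complex.abs δ * (1 - t) ≤ Complex.abs δ * 1 := mul_le_mul_of_nonneg_left hr1 hδ0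
      have h6 : Complex.abs δ * 1 = Complex.abs δ := by ring
      linarith [hδb]
    rw [hEb_def]
    apply mul_le_mul_of_nonneg_left h4 (by positivity)
  -- pointwise integrand comparison
  have hgh : ∀ᵐ t : ℝ, t ∈ Set.Ioc (0:ℝ) 1 →
      Complex.abs (Bop V Q α β φ t * Complex.cos (z * (1 - (t:ℂ)))
        - (-1:ℂ) ^ n * (Bop V Q α β ψ t * ψ t)) ≤ c5 / n := by
    filter_upwards [hBdiff, hBψb] with t h1 h2 ht
    have ht' : t ∈ Set.Icc (0:ℝ) 1 := ⟨ht.1.le, ht.2⟩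
    have hid : Bop V Q α β φ t * Complex.cos (z * (1 - (t:ℂ)))
        - (-1:ℂ) ^ n * (Bop V Q α β ψ t * ψ t)
        = (Bop V Q α β φ t - Bop V Q α β ψ t) * Complex.cos (z * (1 - (t:ℂ)))
          + Bop V Q α β ψ t * (Complex.cos (z * (1 - (t:ℂ))) - (-1:ℂ) ^ n * ψ t) := by
      ring
    rw [hid]
    have hcosEb : Complex.abs (Complex.cos (z * (1 - (t:ℂ)))) ≤ Eb := by
      have hco : (1:ℂ) - (t:ℂ) = ((1 - t : ℝ) : ℂ) := by push_cast; ring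
      rw [hco]
      exact hcosb (1 - t) (by linarith [ht'.2]) (by linarith [ht'.1])
    calc Complex.abs _
        ≤ Complex.abs ((Bop V Q α β φ t - Bop V Q α β ψ t) * Complex.cos (z * (1 - (t:ℂ))))
          + Complex.abs (Bop V Q α β ψ t * (Complex.cos (z * (1 - (t:ℂ))) - (-1:ℂ) ^ n * ψ t)) :=
          Complex.abs.add_le _ _
      _ = Complex.abs (Bop V Q α β φ t - Bop V Q α β ψ t)
            * Complex.abs (Complex.cos (z * (1 - (t:ℂ))))
          + Complex.abs (Bop V Q α β ψ t)
            * Complex.abs (Complex.cos (z * (1 - (t:ℂ))) - (-1:ℂ) ^ n * ψ t) := by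
          rw [map_mul, map_mul]
      _ ≤ (c4 / n) * Eb + K * (2 * Eb * (c3 / n)) := by
          apply add_le_add
          · exact mul_le_mul (h1 ht) hcosEb (Complex.abs.nonneg _) (by positivity)
          · exact mul_le_mul (h2 ht) (hflip t ht') (Complex.abs.nonneg _) hK
      _ = c5 / n := by rw [hc5_def]; ring
  -- measurability and integrability
  have hne_ae : ∀ c : ℝ, ∀ᵐ t : ℝ, t ≠ c := by
    intro c
    rw [ae_iff]
    simpa [Ne, Classical.not_not] using (Real.volume_singleton (x := c))
  have hφext : Measurable (ext01 φ) := ext01_measurable hφc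
  have hψext : Measurable (ext01 ψ) := ext01_measurable hψcont
  have hψm : Measurable ψ := by
    have hcmul : Continuous fun s : ℝ => Real.pi * n * s := continuous_const.mul continuous_id
    exact (Complex.continuous_cos.comp (Complex.continuous_ofReal.comp hcmul)).measurable
  have hBφmeas : Measurable (Bop V Q α β φ) := by
    unfold Bop
    exact (hVm.mul (hφext.comp (measurable_id.add_const α))).add
      (hQm.mul (hφext.comp (measurable_id.sub_const β)))
  have hBψmeas : Measurable (Bop V Q α β ψ) := by
    unfold Bop
    exact (hVm.mul (hψext.comp (measurable_id.add_const α))).add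
      (hQm.mul (hψext.comp (measurable_id.sub_const β)))
  have hcoszm : Measurable fun t : ℝ => Complex.cos (z * (1 - (t:ℂ))) :=
    (Complex.continuous_cos.comp
      (continuous_const.mul (continuous_const.sub Complex.continuous_ofReal))).measurable
  have hint_of : ∀ (f : ℝ → ℂ) (Cb : ℝ), Measurable f →
      (∀ᵐ t : ℝ, t ∈ Set.Ioc (0:ℝ) 1 → Complex.abs (f t) ≤ Cb) →
      IntervalIntegrable f volume 0 1 := by
    intro f Cb hm hb'
    rw [intervalIntegrable_iff, Set.uIoc_of_le (by norm_num : (0:ℝ) ≤ 1)]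
    apply Measure.integrableOn_of_bounded (M := Cb) measure_Ioc_lt_top.ne hm.aestronglyMeasurable
    rw [ae_restrict_iff' measurableSet_Ioc]
    filter_upwards [hb'] with t ht hmem
    simpa using ht hmem
  have hgi : IntervalIntegrable (fun t => Bop V Q α β φ t * Complex.cos (z * (1 - (t:ℂ))))
      volume 0 1 := by
    apply hint_of _ (K * M * Eb) (hBφmeas.mul hcoszm)
    filter_upwards [hBφ] with t htB ht
    have hco : (1:ℂ) - (t:ℂ) = ((1 - t : ℝ) : ℂ) := by push_cast; ring
    have hcos : Complex.abs (Complex.cos (z * ((1:ℂ) - (t:ℂ)))) ≤ Eb := by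
      rw [hco]
      exact hcosb (1 - t) (by linarith [ht.2]) (by linarith [ht.1])
    simp only [Pi.mul_apply]; rw [map_mul]
    calc Complex.abs (Bop V Q α β φ t) * Complex.abs (Complex.cos (z * (1 - (t:ℂ))))
        ≤ (K * M) * Eb := mul_le_mul (htB ht) hcos (Complex.abs.nonneg _) (by positivity)
      _ = K * M * Eb := by ring
  have hhi : IntervalIntegrable (fun t => (-1:ℂ) ^ n * (Bop V Q α β ψ t * ψ t)) volume 0 1 := by
    apply hint_of _ K (measurable_const.mul (hBψmeas.mul hψm))
    filter_upwards [hBψb] with t htB ht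
    simp only [Pi.mul_apply]; rw [map_mul, map_mul]
    have h1 : Complex.abs ((-1:ℂ) ^ n) = 1 := by simp
    rw [h1, one_mul]
    calc Complex.abs (Bop V Q α β ψ t) * Complex.abs (ψ t)
        ≤ K * 1 := mul_le_mul (htB ht) (hψ1 t ⟨ht.1.le, ht.2⟩) (Complex.abs.nonneg _) hK
      _ = K := by ring
  have hVψi : IntervalIntegrable (fun t => V t * ext01 ψ (t + α) * ψ t) volume 0 1 := by
    apply hint_of _ Kv ((hVm.mul (hψext.comp (measurable_id.add_const α))).mul hψm)
    filter_upwards [hVae] with t htV ht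
    simp only [Pi.mul_apply, Function.comp_apply]; rw [map_mul, map_mul]
    calc Complex.abs (V t) * Complex.abs (ext01 ψ (t + α)) * Complex.abs (ψ t)
        ≤ Kv * 1 * 1 := by
          apply mul_le_mul _ (hψ1 t ⟨ht.1.le, ht.2⟩) (Complex.abs.nonneg _) (by positivity)
          exact mul_le_mul (htV ht) (hextψ _) (Complex.abs.nonneg _) hKv
      _ = Kv := by ring
  have hQψi : IntervalIntegrable (fun t => Q t * ext01 ψ (t - β) * ψ t) volume 0 1 := by
    apply hint_of _ Kq ((hQm.mul (hψext.comp (measurable_id.sub_const β))).mul hψm)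
    filter_upwards [hQae] with t htQ ht
    simp only [Pi.mul_apply, Function.comp_apply]; rw [map_mul, map_mul]
    calc Complex.abs (Q t) * Complex.abs (ext01 ψ (t - β)) * Complex.abs (ψ t)
        ≤ Kq * 1 * 1 := by
          apply mul_le_mul _ (hψ1 t ⟨ht.1.le, ht.2⟩) (Complex.abs.nonneg _) (by positivity)
          exact mul_le_mul (htQ ht) (hextψ _) (Complex.abs.nonneg _) hKq
      _ = Kq := by ring
  -- the model integral splits
  have hIψsplit : (∫ t in (0:ℝ)..1, (-1:ℂ) ^ n * (Bop V Q α β ψ t * ψ t))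
      = (-1:ℂ) ^ n * ((∫ t in (0:ℝ)..1, V t * ext01 ψ (t + α) * ψ t)
        + ∫ t in (0:ℝ)..1, Q t * ext01 ψ (t - β) * ψ t) := by
    rw [intervalIntegral.integral_const_mul]
    congr 1
    rw [← intervalIntegral.integral_add hVψi hQψi]
    apply intervalIntegral.integral_congr
    intro t _
    simp only [Bop]
    ring
  -- identification of the V-integral
  have hα0 : (0:ℝ) ≤ α := hα.1
  have hα1 : α ≤ 1 := hα.2
  have hβ0 : (0:ℝ) ≤ β := hβ.1
  have hβ1 : β ≤ 1 := hβ.2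
  have h1α : (0:ℝ) ≤ 1 - α := by linarith
  have hIV : (∫ t in (0:ℝ)..1, V t * ext01 ψ (t + α) * ψ t)
      = ∫ t in (0:ℝ)..(1 - α),
          V t * Complex.cos ((Real.pi * n * t : ℝ)) * Complex.cos ((Real.pi * n * (t + α) : ℝ)) := by
    have hsub1 : Set.uIcc (0:ℝ) (1 - α) ⊆ Set.uIcc (0:ℝ) 1 := by
      rw [Set.uIcc_of_le h1α, Set.uIcc_of_le (by norm_num : (0:ℝ) ≤ 1)]
      exact Set.Icc_subset_Icc le_rfl (by linarith)
    have hsub2 : Set.uIcc (1 - α) (1:ℝ) ⊆ Set.uIcc (0:ℝ) 1 := by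
      rw [Set.uIcc_of_le (by linarith : 1 - α ≤ 1), Set.uIcc_of_le (by norm_num : (0:ℝ) ≤ 1)]
      exact Set.Icc_subset_Icc h1α le_rfl
    have hadj := intervalIntegral.integral_add_adjacent_intervals
      (hVψi.mono_set hsub1) (hVψi.mono_set hsub2)
    have hzero : (∫ t in (1 - α)..1, V t * ext01 ψ (t + α) * ψ t) = 0 := by
      rw [intervalIntegral.integral_congr (g := fun _ => (0:ℂ))]
      · simp
      · intro t ht
        rw [Set.uIcc_of_le (by linarith : 1 - α ≤ 1)] at ht
        have hnotmem : t + α ∉ Set.Ioo (0:ℝ) 1 := by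
          intro hmem
          have h2 : 1 ≤ t + α := by linarith [ht.1]
          linarith [hmem.2]
        simp [ext01, Set.indicator_of_notMem hnotmem]
    have hfirst : (∫ t in (0:ℝ)..(1 - α), V t * ext01 ψ (t + α) * ψ t)
        = ∫ t in (0:ℝ)..(1 - α),
            V t * Complex.cos ((Real.pi * n * t : ℝ)) * Complex.cos ((Real.pi * n * (t + α) : ℝ)) := by
      apply intervalIntegral.integral_congr_ae
      filter_upwards [hne_ae (1 - α)] with t htne ht
      rw [Set.uIoc_of_le h1α] at ht
      have htlt : t < 1 - α := lt_of_le_of_ne ht.2 htne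
      have hmem : t + α ∈ Set.Ioo (0:ℝ) 1 := ⟨by linarith [ht.1], by linarith⟩
      simp only [ext01, Set.indicator_of_mem hmem, hψ_def]
      ring
    rw [← hadj, hzero, add_zero, hfirst]
  -- identification of the Q-integral
  have hIQ : (∫ t in (0:ℝ)..1, Q t * ext01 ψ (t - β) * ψ t)
      = ∫ t in β..1,
          Q t * Complex.cos ((Real.pi * n * t : ℝ)) * Complex.cos ((Real.pi * n * (t - β) : ℝ)) := by
    have hsub1 : Set.uIcc (0:ℝ) β ⊆ Set.uIcc (0:ℝ) 1 := by
      rw [Set.uIcc_of_le hβ0, Set.uIcc_of_le (by norm_num : (0:ℝ) ≤ 1)]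
      exact Set.Icc_subset_Icc le_rfl hβ1
    have hsub2 : Set.uIcc β (1:ℝ) ⊆ Set.uIcc (0:ℝ) 1 := by
      rw [Set.uIcc_of_le hβ1, Set.uIcc_of_le (by norm_num : (0:ℝ) ≤ 1)]
      exact Set.Icc_subset_Icc hβ0 le_rfl
    have hadj := intervalIntegral.integral_add_adjacent_intervals
      (hQψi.mono_set hsub1) (hQψi.mono_set hsub2)
    have hzero : (∫ t in (0:ℝ)..β, Q t * ext01 ψ (t - β) * ψ t) = 0 := by
      rw [intervalIntegral.integral_congr (g := fun _ => (0:ℂ))]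
      · simp
      · intro t ht
        rw [Set.uIcc_of_le hβ0] at ht
        have hnotmem : t - β ∉ Set.Ioo (0:ℝ) 1 := by
          intro hmem
          have h2 : t - β ≤ 0 := by linarith [ht.2]
          linarith [hmem.1]
        simp [ext01, Set.indicator_of_notMem hnotmem]
    have hsecond : (∫ t in β..1, Q t * ext01 ψ (t - β) * ψ t)
        = ∫ t in β..1,
            Q t * Complex.cos ((Real.pi * n * t : ℝ)) * Complex.cos ((Real.pi * n * (t - β) : ℝ)) := by
      apply intervalIntegral.integral_congr_ae
      filter_upwards [hne_ae 1] with t htne ht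
      rw [Set.uIoc_of_le hβ1] at ht
      have htlt : t < 1 := lt_of_le_of_ne ht.2 htne
      have hmem : t - β ∈ Set.Ioo (0:ℝ) 1 := ⟨by linarith [ht.1], by linarith⟩
      simp only [ext01, Set.indicator_of_mem hmem, hψ_def]
      ring
    rw [← hadj, hzero, zero_add, hsecond]
  -- put everything together
  set IV : ℂ := ∫ t in (0:ℝ)..(1 - α),
      V t * Complex.cos ((Real.pi * n * t : ℝ)) * Complex.cos ((Real.pi * n * (t + α) : ℝ))
    with hIV_def
  set IQ : ℂ := ∫ t in β..1,
      Q t * Complex.cos ((Real.pi * n * t : ℝ)) * Complex.cos ((Real.pi * n * (t - β) : ℝ))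
    with hIQ_def
  have hRI : Complex.abs (R - (-1:ℂ) ^ n * (IV + IQ)) ≤ c5 / n := by
    have hsum : (∫ t in (0:ℝ)..1, (-1:ℂ) ^ n * (Bop V Q α β ψ t * ψ t))
        = (-1:ℂ) ^ n * (IV + IQ) := by
      rw [hIψsplit, hIV, hIQ]
    rw [hR_def, ← hsum, ← intervalIntegral.integral_sub hgi hhi]
    have hb' : ∀ᵐ t : ℝ, t ∈ Set.uIoc (0:ℝ) 1 →
        ‖Bop V Q α β φ t * Complex.cos (z * (1 - (t:ℂ)))
          - (-1:ℂ) ^ n * (Bop V Q α β ψ t * ψ t)‖ ≤ c5 / n := by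
      filter_upwards [hgh] with t ht htu
      rw [Set.uIoc_of_le (by norm_num : (0:ℝ) ≤ 1)] at htu
      simpa using ht htu
    have h2 := intervalIntegral.norm_integral_le_of_norm_le_const_ae hb'
    rw [← Complex.norm_eq_abs]
    refine h2.trans ?_
    simp
  have hpow1 : ((-1:ℂ) ^ n) * ((-1:ℂ) ^ n) = 1 := by
    rw [← pow_add, ← two_mul, pow_mul]
    norm_num
  have hT1 : Complex.abs (z * Complex.sin δ - (IV + IQ)) ≤ c5 / n := by
    have hterm1 : z * Complex.sin δ - (IV + IQ)
        = (-1:ℂ) ^ n * (R - (-1:ℂ) ^ n * (IV + IQ)) := by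
      calc z * Complex.sin δ - (IV + IQ)
          = ((-1:ℂ) ^ n * (-1:ℂ) ^ n) * (z * Complex.sin δ - (IV + IQ)) := by
            rw [hpow1]; ring
        _ = (-1:ℂ) ^ n * (R - (-1:ℂ) ^ n * (IV + IQ)) := by
            rw [← hR, hsinshift]; ring
    rw [hterm1, map_mul]
    have h1 : Complex.abs ((-1:ℂ) ^ n) = 1 := by simp
    rw [h1, one_mul]
    exact hRI
  have hT2 : Complex.abs (δ - Complex.sin δ) ≤ c3 ^ 3 / (n:ℝ) ^ 3 := by
    have h1 := sin_sub_self_le hδ1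
    have h2 : Complex.abs (δ - Complex.sin δ) = Complex.abs (Complex.sin δ - δ) := by
      rw [← Complex.abs.map_neg]; congr 1; ring
    rw [h2]
    refine h1.trans ?_
    calc Complex.abs δ ^ 3 ≤ (c3 / n) ^ 3 := pow_le_pow_left₀ hδ0 hδb 3
      _ = c3 ^ 3 / (n:ℝ) ^ 3 := by rw [div_pow]
  have hid2 : z ^ 2 - ((Real.pi : ℂ) * n) ^ 2 - 2 * IV - 2 * IQ
      = 2 * (z * Complex.sin δ - (IV + IQ)) + 2 * z * (δ - Complex.sin δ) - δ ^ 2 := by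
    rw [hδ_def]; ring
  rw [hid2]
  have habs1 : Complex.abs (2 * (z * Complex.sin δ - (IV + IQ)) + 2 * z * (δ - Complex.sin δ) - δ ^ 2)
      ≤ 2 * (c5 / n) + 2 * ((3 * Real.pi / 2 + b) * n) * (c3 ^ 3 / (n:ℝ) ^ 3) + (c3 / n) ^ 2 := by
    calc Complex.abs (2 * (z * Complex.sin δ - (IV + IQ)) + 2 * z * (δ - Complex.sin δ) - δ ^ 2)
        ≤ Complex.abs (2 * (z * Complex.sin δ - (IV + IQ)) + 2 * z * (δ - Complex.sin δ))
          + Complex.abs (δ ^ 2) := Complex.abs.sub_le_add _ _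
      _ ≤ (Complex.abs (2 * (z * Complex.sin δ - (IV + IQ)))
          + Complex.abs (2 * z * (δ - Complex.sin δ))) + Complex.abs (δ ^ 2) := by
          have := Complex.abs.add_le (2 * (z * Complex.sin δ - (IV + IQ)))
            (2 * z * (δ - Complex.sin δ))
          linarith
      _ ≤ 2 * (c5 / n) + 2 * ((3 * Real.pi / 2 + b) * n) * (c3 ^ 3 / (n:ℝ) ^ 3) + (c3 / n) ^ 2 := by
          have e1 : Complex.abs (2 * (z * Complex.sin δ - (IV + IQ)))
              = 2 * Complex.abs (z * Complex.sin δ - (IV + IQ)) := by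
            rw [map_mul]; norm_num
          have e2 : Complex.abs (2 * z * (δ - Complex.sin δ))
              = 2 * Complex.abs z * Complex.abs (δ - Complex.sin δ) := by
            rw [map_mul, map_mul]; norm_num
          have e3 : Complex.abs (δ ^ 2) = Complex.abs δ ^ 2 := by rw [map_pow]
          rw [e1, e2, e3]
          have b1 : 2 * Complex.abs (z * Complex.sin δ - (IV + IQ)) ≤ 2 * (c5 / n) := by
            linarith [hT1]
          have b2 : 2 * Complex.abs z * Complex.abs (δ - Complex.sin δ)
              ≤ 2 * ((3 * Real.pi / 2 + b) * n) * (c3 ^ 3 / (n:ℝ) ^ 3) := by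
            have h0 : 0 ≤ Complex.abs (δ - Complex.sin δ) := Complex.abs.nonneg _
            have h0' : (0:ℝ) ≤ 2 * Complex.abs z := by positivity
            have step1 : 2 * Complex.abs z * Complex.abs (δ - Complex.sin δ)
                ≤ 2 * Complex.abs z * (c3 ^ 3 / (n:ℝ) ^ 3) :=
              mul_le_mul_of_nonneg_left hT2 h0'
            have step2 : 2 * Complex.abs z * (c3 ^ 3 / (n:ℝ) ^ 3)
                ≤ 2 * ((3 * Real.pi / 2 + b) * n) * (c3 ^ 3 / (n:ℝ) ^ 3) := by
              apply mul_le_mul_of_nonneg_right _ (by positivity)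
              linarith [hzup]
            linarith
          have b3 : Complex.abs δ ^ 2 ≤ (c3 / n) ^ 2 := pow_le_pow_left₀ hδ0 hδb 2
          linarith
  refine habs1.trans ?_
  have hnn : (n:ℝ) ≤ (n:ℝ) ^ 2 := by
    calc (n:ℝ) = n * 1 := by ring
      _ ≤ n * n := mul_le_mul_of_nonneg_left hn1 hnpos.le
      _ = (n:ℝ) ^ 2 := by ring
  have e4 : 2 * ((3 * Real.pi / 2 + b) * n) * (c3 ^ 3 / (n:ℝ) ^ 3)
      = (3 * Real.pi + 2 * b) * c3 ^ 3 / (n:ℝ) ^ 2 := by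
    field_simp
  have e5 : (3 * Real.pi + 2 * b) * c3 ^ 3 / (n:ℝ) ^ 2 ≤ (3 * Real.pi + 2 * b) * c3 ^ 3 / n :=
    div_le_div_of_nonneg_left (by positivity) hnpos hnn
  have e6 : (c3 / n) ^ 2 = c3 ^ 2 / (n:ℝ) ^ 2 := by rw [div_pow]
  have e7 : c3 ^ 2 / (n:ℝ) ^ 2 ≤ c3 ^ 2 / n := div_le_div_of_nonneg_left (by positivity) hnpos hnn
  have e8 : C / (n:ℝ) = (3 * Real.pi + 2 * b) * c3 ^ 3 / n + 2 * (c5 / n) + c3 ^ 2 / n + 1 / n := by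
    rw [hC_def]; ring
  have e9 : (0:ℝ) < 1 / n := by positivity
  rw [e8]

  linarith
end

section
/- Let α, β ∈ [0,1], b ≥ 0, and let z ∈ ℂ satisfy |Im z| ≤ b, with K = ‖V‖_{L∞(0,1)} + ‖Q‖_{L∞(0,1)}. Define φ₀(x) := cos(zx), φ_{j+1}(x) := ∫₀ˣ (B(α,β)φ_j)(t)·sin(z(x−t)) dt, and f_j(z) := ∫₀¹ (B(α,β)φ_j)(t)·cos(z(1−t)) dt. Then for every j ≥ 0 one has |f_j(z)| ≤ e^b·(K·e^b)^{j+1}. -/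
open MeasureTheory Set

lemma aux_norm_cos_le (w : ℂ) : ‖Complex.cos w‖ ≤ Real.exp |w.im| := by
  rw [Complex.cos]
  have h1 : ‖Complex.exp (w * Complex.I)‖ = Real.exp (-w.im) := by
    rw [Complex.norm_exp]; congr 1; simp
  have h2 : ‖Complex.exp (-w * Complex.I)‖ = Real.exp (w.im) := by
    rw [Complex.norm_exp]; congr 1; simp
  have e1 : Real.exp (-w.im) ≤ Real.exp |w.im| := Real.exp_le_exp.2 (neg_le_abs _)
  have e2 : Real.exp (w.im) ≤ Real.exp |w.im| := Real.exp_le_exp.2 (le_abs_self _)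
  calc ‖(Complex.exp (w * Complex.I) + Complex.exp (-w * Complex.I)) / 2‖
      ≤ (‖Complex.exp (w * Complex.I)‖ + ‖Complex.exp (-w * Complex.I)‖) / 2 := by
        rw [norm_div, show ‖(2:ℂ)‖ = 2 by norm_num]
        gcongr
        exact norm_add_le _ _
      _ ≤ Real.exp |w.im| := by rw [h1, h2]; linarith

lemma aux_norm_sin_le (w : ℂ) : ‖Complex.sin w‖ ≤ Real.exp |w.im| := by
  rw [Complex.sin]
  have h1 : ‖Complex.exp (w * Complex.I)‖ = Real.exp (-w.im) := by
    rw [Complex.norm_exp]; congr 1; simp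
  have h2 : ‖Complex.exp (-w * Complex.I)‖ = Real.exp (w.im) := by
    rw [Complex.norm_exp]; congr 1; simp
  have e1 : Real.exp (-w.im) ≤ Real.exp |w.im| := Real.exp_le_exp.2 (neg_le_abs _)
  have e2 : Real.exp (w.im) ≤ Real.exp |w.im| := Real.exp_le_exp.2 (le_abs_self _)
  calc ‖(Complex.exp (-w * Complex.I) - Complex.exp (w * Complex.I)) * Complex.I / 2‖
      = ‖Complex.exp (-w * Complex.I) - Complex.exp (w * Complex.I)‖ / 2 := by
        rw [norm_div, norm_mul, Complex.norm_I, mul_one, show ‖(2:ℂ)‖ = 2 by norm_num]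
      _ ≤ (‖Complex.exp (-w * Complex.I)‖ + ‖Complex.exp (w * Complex.I)‖) / 2 := by
        gcongr
        exact norm_sub_le _ _
      _ ≤ Real.exp |w.im| := by rw [h1, h2]; linarith

lemma aux_norm_intervalIntegral_le {f : ℝ → ℂ} {a c C : ℝ} (hab : a ≤ c) (hC : 0 ≤ C)
    (h : ∀ᵐ t ∂(volume.restrict (Set.Ioc a c)), ‖f t‖ ≤ C) :
    ‖∫ t in a..c, f t‖ ≤ C * (c - a) := by
  rw [intervalIntegral.integral_of_le hab]
  calc ‖∫ t in Ioc a c, f t‖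
      ≤ (∫⁻ t in Ioc a c, ENNReal.ofReal ‖f t‖).toReal := norm_integral_le_lintegral_norm f
    _ ≤ C * (c - a) := by
        have hle : (∫⁻ t in Ioc a c, ENNReal.ofReal ‖f t‖)
            ≤ ∫⁻ _ in Ioc a c, ENNReal.ofReal C :=
          lintegral_mono_ae (h.mono fun t ht => ENNReal.ofReal_le_ofReal ht)
        have hconst : (∫⁻ _ in Ioc a c, ENNReal.ofReal C)
            = ENNReal.ofReal C * ENNReal.ofReal (c - a) := by
          rw [lintegral_const, Measure.restrict_apply_univ, Real.volume_Ioc]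
        have hne : ENNReal.ofReal C * ENNReal.ofReal (c - a) ≠ ⊤ := by
          exact ENNReal.mul_ne_top ENNReal.ofReal_ne_top ENNReal.ofReal_ne_top
        calc (∫⁻ t in Ioc a c, ENNReal.ofReal ‖f t‖).toReal
            ≤ (ENNReal.ofReal C * ENNReal.ofReal (c - a)).toReal :=
              ENNReal.toReal_mono hne (hconst ▸ hle)
          _ = C * (c - a) := by
              rw [ENNReal.toReal_mul, ENNReal.toReal_ofReal hC,
                ENNReal.toReal_ofReal (by linarith)]

/-- The iterates `φ₀(x) = cos(zx)`,
`φ_{j+1}(x) = ∫₀ˣ (B(α,β)φ_j)(t)·sin(z(x−t)) dt`. -/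
noncomputable def phiIter (V Q : ℝ → ℂ) (α β : ℝ) (z : ℂ) : ℕ → ℝ → ℂ
  | 0 => fun x => Complex.cos (z * ↑x)
  | j + 1 => fun x =>
      ∫ t in (0:ℝ)..x, Bop V Q α β (phiIter V Q α β z j) t * Complex.sin (z * (↑x - ↑t))

/-- Uniform bounds `|f_j(z)| ≤ e^b (K e^b)^{j+1}` for the coefficient functions
`f_j(z) = ∫₀¹ (B(α,β)φ_j)(t)·cos(z(1−t)) dt` of the characteristic equation. -/
theorem stmt_18 (V Q : ℝ → ℂ) (hVmeas : Measurable V) (hQmeas : Measurable Q)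
    (hVb : eLpNorm V ⊤ (volume.restrict (Set.Ioo (0:ℝ) 1)) ≠ ⊤)
    (hQb : eLpNorm Q ⊤ (volume.restrict (Set.Ioo (0:ℝ) 1)) ≠ ⊤)
    (α β : ℝ) (hα : α ∈ Set.Icc (0:ℝ) 1) (hβ : β ∈ Set.Icc (0:ℝ) 1)
    (b : ℝ) (hb : 0 ≤ b) (z : ℂ) (hzim : |z.im| ≤ b) :
    ∀ j : ℕ,
      ‖∫ t in (0:ℝ)..1, Bop V Q α β (phiIter V Q α β z j) t * Complex.cos (z * (1 - ↑t))‖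
        ≤ Real.exp b * (Knorm V Q * Real.exp b) ^ (j + 1) := by
  classical
  set KV : ℝ := (eLpNorm V ⊤ (volume.restrict (Set.Ioo (0:ℝ) 1))).toReal with hKVdef
  set KQ : ℝ := (eLpNorm Q ⊤ (volume.restrict (Set.Ioo (0:ℝ) 1))).toReal with hKQdef
  have hKsum : Knorm V Q = KV + KQ := rfl
  have hKV0 : 0 ≤ KV := ENNReal.toReal_nonneg
  have hKQ0 : 0 ≤ KQ := ENNReal.toReal_nonneg
  have hK0 : 0 ≤ Knorm V Q := by rw [hKsum]; linarith
  have hexp0 : (0:ℝ) < Real.exp b := Real.exp_pos b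
  set M : ℕ → ℝ := fun j => Real.exp b * (Knorm V Q * Real.exp b) ^ j with hMdef
  have hM0 : ∀ j, 0 ≤ M j := fun j =>
    mul_nonneg hexp0.le (pow_nonneg (mul_nonneg hK0 hexp0.le) j)
  -- essential sup bounds
  have hVae : ∀ᵐ t ∂(volume : Measure ℝ), t ∈ Set.Ioo (0:ℝ) 1 → ‖V t‖ ≤ KV := by
    rw [← ae_restrict_iff' measurableSet_Ioo]
    filter_upwards [enorm_ae_le_eLpNormEssSup V (volume.restrict (Set.Ioo (0:ℝ) 1))]
      with t ht
    have hne : eLpNormEssSup V (volume.restrict (Set.Ioo (0:ℝ) 1)) ≠ ⊤ := by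
      rwa [← eLpNorm_exponent_top]
    have := ENNReal.toReal_mono hne ht
    simpa [hKVdef, eLpNorm_exponent_top] using this
  have hQae : ∀ᵐ t ∂(volume : Measure ℝ), t ∈ Set.Ioo (0:ℝ) 1 → ‖Q t‖ ≤ KQ := by
    rw [← ae_restrict_iff' measurableSet_Ioo]
    filter_upwards [enorm_ae_le_eLpNormEssSup Q (volume.restrict (Set.Ioo (0:ℝ) 1))]
      with t ht
    have hne : eLpNormEssSup Q (volume.restrict (Set.Ioo (0:ℝ) 1)) ≠ ⊤ := by
      rwa [← eLpNorm_exponent_top]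
    have := ENNReal.toReal_mono hne ht
    simpa [hKQdef, eLpNorm_exponent_top] using this
  have hne1 : ∀ᵐ t ∂(volume : Measure ℝ), t ≠ (1:ℝ) := by
    rw [ae_iff]
    have : {t : ℝ | ¬ t ≠ 1} = {1} := by ext t; simp
    rw [this]
    exact Real.volume_singleton
  -- trig bounds
  have hcosb : ∀ r : ℝ, r ∈ Set.Icc (0:ℝ) 1 → ‖Complex.cos (z * (r:ℂ))‖ ≤ Real.exp b := by
    intro r hr
    refine (aux_norm_cos_le _).trans (Real.exp_le_exp.2 ?_)
    have him : (z * (r:ℂ)).im = z.im * r := by simp [Complex.mul_im]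
    rw [him, abs_mul, abs_of_nonneg hr.1]
    calc |z.im| * r ≤ b * 1 := mul_le_mul hzim hr.2 hr.1 hb
      _ = b := mul_one b
  have hsinb : ∀ r : ℝ, r ∈ Set.Icc (0:ℝ) 1 → ‖Complex.sin (z * (r:ℂ))‖ ≤ Real.exp b := by
    intro r hr
    refine (aux_norm_sin_le _).trans (Real.exp_le_exp.2 ?_)
    have him : (z * (r:ℂ)).im = z.im * r := by simp [Complex.mul_im]
    rw [him, abs_mul, abs_of_nonneg hr.1]
    calc |z.im| * r ≤ b * 1 := mul_le_mul hzim hr.2 hr.1 hb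
      _ = b := mul_one b
  -- bound on Bop given a bound on phi
  have hBop : ∀ (u : ℝ → ℂ) (m : ℝ), 0 ≤ m → (∀ s ∈ Set.Icc (0:ℝ) 1, ‖u s‖ ≤ m) →
      ∀ᵐ t ∂(volume : Measure ℝ), t ∈ Set.Ioo (0:ℝ) 1 →
        ‖Bop V Q α β u t‖ ≤ Knorm V Q * m := by
    intro u m hm hu
    have hext : ∀ s : ℝ, ‖ext01 u s‖ ≤ m := by
      intro s
      by_cases hs : s ∈ Set.Ioo (0:ℝ) 1
      · rw [ext01, Set.indicator_of_mem hs]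
        exact hu s (Set.Ioo_subset_Icc_self hs)
      · rw [ext01, Set.indicator_of_notMem hs, norm_zero]; exact hm
    filter_upwards [hVae, hQae] with t hV hQ ht
    calc ‖V t * ext01 u (t + α) + Q t * ext01 u (t - β)‖
        ≤ ‖V t‖ * ‖ext01 u (t + α)‖ + ‖Q t‖ * ‖ext01 u (t - β)‖ := by
          refine (norm_add_le _ _).trans ?_
          rw [norm_mul, norm_mul]
      _ ≤ KV * m + KQ * m := by
          gcongr
          · exact hV ht
          · exact hext _
          · exact hQ ht
          · exact hext _
      _ = Knorm V Q * m := by rw [hKsum]; ring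
  -- main induction: bound on the iterates
  have hphi : ∀ j, ∀ x ∈ Set.Icc (0:ℝ) 1, ‖phiIter V Q α β z j x‖ ≤ M j := by
    intro j
    induction j with
    | zero =>
      intro x hx
      have := hcosb x hx
      simpa [phiIter, hMdef] using this
    | succ j ih =>
      intro x hx
      have hint : ∀ᵐ t ∂(volume.restrict (Set.Ioc (0:ℝ) x)),
          ‖Bop V Q α β (phiIter V Q α β z j) t * Complex.sin (z * ((x:ℂ) - (t:ℂ)))‖
            ≤ Knorm V Q * M j * Real.exp b := by
        filter_upwards [ae_restrict_of_ae (hBop _ (M j) (hM0 j) (ih)),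
          ae_restrict_of_ae hne1, ae_restrict_mem measurableSet_Ioc] with t hB ht1 ht
        have htIoo : t ∈ Set.Ioo (0:ℝ) 1 :=
          ⟨ht.1, lt_of_le_of_ne (ht.2.trans hx.2) ht1⟩
        have hcast : (x:ℂ) - (t:ℂ) = (((x - t : ℝ)):ℂ) := by push_cast; ring
        have hsin : ‖Complex.sin (z * ((x:ℂ) - (t:ℂ)))‖ ≤ Real.exp b := by
          rw [hcast]
          exact hsinb (x - t) ⟨by linarith [ht.2], by linarith [ht.1, hx.2]⟩
        rw [norm_mul]
        exact mul_le_mul (hB htIoo) hsin (norm_nonneg _)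
          (mul_nonneg hK0 (hM0 j))
      have hle := aux_norm_intervalIntegral_le hx.1
        (mul_nonneg (mul_nonneg hK0 (hM0 j)) hexp0.le) hint
      calc ‖phiIter V Q α β z (j+1) x‖
          = ‖∫ t in (0:ℝ)..x, Bop V Q α β (phiIter V Q α β z j) t *
              Complex.sin (z * ((x:ℂ) - (t:ℂ)))‖ := rfl
        _ ≤ Knorm V Q * M j * Real.exp b * (x - 0) := hle
        _ ≤ Knorm V Q * M j * Real.exp b * 1 := by
            have h01 : x - 0 ≤ 1 := by linarith [hx.2]
            exact mul_le_mul_of_nonneg_left h01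
              (mul_nonneg (mul_nonneg hK0 (hM0 j)) hexp0.le)
        _ = M (j+1) := by rw [hMdef]; ring
  -- conclusion
  intro j
  have hint : ∀ᵐ t ∂(volume.restrict (Set.Ioc (0:ℝ) 1)),
      ‖Bop V Q α β (phiIter V Q α β z j) t * Complex.cos (z * (1 - (t:ℂ)))‖
        ≤ Knorm V Q * M j * Real.exp b := by
    filter_upwards [ae_restrict_of_ae (hBop _ (M j) (hM0 j) (hphi j)),
      ae_restrict_of_ae hne1, ae_restrict_mem measurableSet_Ioc] with t hB ht1 ht
    have htIoo : t ∈ Set.Ioo (0:ℝ) 1 := ⟨ht.1, lt_of_le_of_ne ht.2 ht1⟩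
    have hcast : (1:ℂ) - (t:ℂ) = (((1 - t : ℝ)):ℂ) := by push_cast; ring
    have hcos : ‖Complex.cos (z * ((1:ℂ) - (t:ℂ)))‖ ≤ Real.exp b := by
      rw [hcast]
      exact hcosb (1 - t) ⟨by linarith [ht.2], by linarith [ht.1]⟩
    rw [norm_mul]
    exact mul_le_mul (hB htIoo) hcos (norm_nonneg _) (mul_nonneg hK0 (hM0 j))
  have hle := aux_norm_intervalIntegral_le (by norm_num : (0:ℝ) ≤ 1)
    (mul_nonneg (mul_nonneg hK0 (hM0 j)) hexp0.le) hint
  calc ‖∫ t in (0:ℝ)..1, Bop V Q α β (phiIter V Q α β z j) t *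
        Complex.cos (z * (1 - (t:ℂ)))‖
      ≤ Knorm V Q * M j * Real.exp b * (1 - 0) := hle
    _ = Real.exp b * (Knorm V Q * Real.exp b) ^ (j + 1) := by rw [hMdef]; ring
end
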